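/- arXiv:2511.16570 — 10 statements merged into one kernel-verified Lean document; each statement's English description precedes it below -/
import Mathlib

section
/- Let L be an n×n invertible SDDM matrix with integer entries in [-U, U], where U ≥ 2 and n ≥ 2. Then for any two distinct indices i, j with L_{ij} ≠ 0, one has (L⁻¹)_{ij} ≥ U^{-2}. Consequently, the probability distance satisfies D_L(i, j) ≤ 4 for any adjacent pair i, j. -/
lemma sddm_mulVec_nonneg {n : ℕ} (L : Matrix (Fin n) (Fin n) ℝ)
    (hsymm : L.IsSymm)
    (hoff : ∀ i j, i ≠ j → L i j ≤ 0)
    (hdd : ∀ i, ∑ j ∈ Finset.univ.filter (fun j => j ≠ i), |L i j| ≤ L i i)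
    (hinv : IsUnit L)
    (x : Fin n → ℝ) (hx : ∀ k, 0 ≤ L.mulVec x k) : ∀ k, 0 ≤ x k := by
  by_contra hcon
  push_neg at hcon
  obtain ⟨k0, hk0⟩ := hcon
  obtain ⟨m, -, hm⟩ := Finset.exists_min_image Finset.univ x ⟨k0, Finset.mem_univ _⟩
  have hmneg : x m < 0 := lt_of_le_of_lt (hm k0 (Finset.mem_univ _)) hk0
  -- row-sum nonneg
  have hrow : ∀ k, 0 ≤ ∑ l, L k l := by
    intro k
    have h1 : ∑ l ∈ Finset.univ.filter (fun l => l ≠ k), |L k l| ≤ L k k := hdd k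
    have h2 : ∑ l ∈ Finset.univ.filter (fun l => l ≠ k), |L k l|
        = -∑ l ∈ Finset.univ.filter (fun l => l ≠ k), L k l := by
      rw [← Finset.sum_neg_distrib]
      refine Finset.sum_congr rfl fun l hl => ?_
      have hlk : l ≠ k := (Finset.mem_filter.mp hl).2
      exact abs_of_nonpos (hoff k l hlk.symm)
    have h3 : ∑ l, L k l = L k k + ∑ l ∈ Finset.univ.filter (fun l => l ≠ k), L k l := by
      have heq := Finset.sum_filter_add_sum_filter_not Finset.univ (fun l => l = k) (fun l => L k l)
      have h4 : Finset.univ.filter (fun l => l = k) = {k} := by ext l; simp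
      rw [h4, Finset.sum_singleton] at heq
      rw [← heq]
    rw [h3]
    rw [h2] at h1
    linarith
  -- key equality conditions for minimizers
  have hkey : ∀ k, x k = x m → (∑ l, L k l) = 0 ∧ ∀ l, L k l * (x l - x m) = 0 := by
    intro k hk
    have hterm : ∀ l ∈ Finset.univ, L k l * (x l - x m) ≤ 0 := by
      rintro l -
      rcases eq_or_ne l k with rfl | hlk
      · rw [hk]; simp
      · exact mul_nonpos_of_nonpos_of_nonneg (hoff k l (Ne.symm hlk))
          (by linarith [hm l (Finset.mem_univ l)])
    have hsplit : L.mulVec x k = (∑ l, L k l) * x m + ∑ l, L k l * (x l - x m) := by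
      simp only [Matrix.mulVec, dotProduct, Finset.sum_mul, ← Finset.sum_add_distrib]
      exact Finset.sum_congr rfl fun l _ => by ring
    have h1 : (∑ l, L k l) * x m ≤ 0 := mul_nonpos_of_nonneg_of_nonpos (hrow k) hmneg.le
    have h2 : ∑ l, L k l * (x l - x m) ≤ 0 := Finset.sum_nonpos hterm
    have h0 : 0 ≤ L.mulVec x k := hx k
    rw [hsplit] at h0
    have e1 : (∑ l, L k l) * x m = 0 := by linarith
    have e2 : ∑ l, L k l * (x l - x m) = 0 := by linarith
    constructor
    · rcases mul_eq_zero.mp e1 with h | h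
      · exact h
      · exact absurd h hmneg.ne
    · intro l
      have := (Finset.sum_eq_zero_iff_of_nonpos hterm).mp e2 l (Finset.mem_univ l)
      exact this
  -- kernel vector
  set v : Fin n → ℝ := fun k => if x k = x m then 1 else 0 with hv
  have hker : L.mulVec v = 0 := by
    funext k
    simp only [Matrix.mulVec, dotProduct, Pi.zero_apply, hv]
    rcases eq_or_ne (x k) (x m) with hk | hk
    · have : ∀ l, L k l * (if x l = x m then (1:ℝ) else 0) = L k l := by
        intro l
        rcases eq_or_ne (x l) (x m) with hl | hl
        · simp [hl]
        · have := (hkey k hk).2 l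
          have hL : L k l = 0 := by
            rcases mul_eq_zero.mp this with h | h
            · exact h
            · exact absurd (by linarith : x l = x m) hl
          simp [hl, hL]
      rw [Finset.sum_congr rfl fun l _ => this l]
      exact (hkey k hk).1
    · apply Finset.sum_eq_zero
      rintro l -
      rcases eq_or_ne (x l) (x m) with hl | hl
      · have := (hkey l hl).2 k
        have hL : L l k = 0 := by
          rcases mul_eq_zero.mp this with h | h
          · exact h
          · exact absurd (by linarith : x k = x m) hk
        have : L k l = 0 := by
          have := congrFun (congrFun hsymm.eq k) l
          simp [Matrix.transpose_apply] at this
          rw [← this]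
          exact hL
        simp [this]
      · simp [hl]
  have hvz : v = 0 := by
    have hdet : IsUnit L.det := (Matrix.isUnit_iff_isUnit_det L).mp hinv
    have h1 : L⁻¹ * L = 1 := Matrix.nonsing_inv_mul L hdet
    calc v = (1 : Matrix (Fin n) (Fin n) ℝ).mulVec v := by simp
    _ = (L⁻¹ * L).mulVec v := by rw [h1]
    _ = L⁻¹.mulVec (L.mulVec v) := by rw [← Matrix.mulVec_mulVec]
    _ = 0 := by rw [hker]; simp
  have : v m = 1 := by simp [hv]
  rw [hvz] at this
  simpa using this

/-- For an `n × n` invertible SDDM matrix `L` with integer entries in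
`[-U, U]` (`U ≥ 2`, `n ≥ 2`) and any two distinct indices `i ≠ j` with `L i j ≠ 0`
(i.e. adjacent vertices), one has `(L⁻¹)ᵢⱼ ≥ U⁻²`; consequently the probability distance
`D_L(i, j) = -log_{nU} ((L⁻¹)ᵢⱼ) + 2` is at most `4`. -/
theorem sddm_adjacent_inv_entry_lower_bound {n : ℕ} (hn : 2 ≤ n) (U : ℕ) (hU : 2 ≤ U)
    (L : Matrix (Fin n) (Fin n) ℝ)
    (hsymm : L.IsSymm)
    (hoff : ∀ i j, i ≠ j → L i j ≤ 0)
    (hdiag : ∀ i, 0 < L i i)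
    (hdd : ∀ i, ∑ j ∈ Finset.univ.filter (fun j => j ≠ i), |L i j| ≤ L i i)
    (hint : ∀ i j, ∃ z : ℤ, L i j = (z : ℝ))
    (hbd : ∀ i j, |L i j| ≤ (U : ℝ))
    (hinv : IsUnit L)
    (i j : Fin n) (hij : i ≠ j) (hadj : L i j ≠ 0) :
    ((U : ℝ))⁻¹ ^ 2 ≤ L⁻¹ i j ∧
      -Real.logb ((n : ℝ) * U) (L⁻¹ i j) + 2 ≤ 4 := by
  have hdet : IsUnit L.det := (Matrix.isUnit_iff_isUnit_det L).mp hinv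
  have hmul : L * L⁻¹ = 1 := Matrix.mul_nonsing_inv L hdet
  have hU0 : (0:ℝ) < (U:ℝ) := by
    have : (0:ℕ) < U := by omega
    exact_mod_cast this
  -- nonnegativity of column j of L⁻¹
  have hpos : ∀ k, 0 ≤ L⁻¹ k j := by
    apply sddm_mulVec_nonneg L hsymm hoff hdd hinv
    intro k
    have : L.mulVec (fun l => L⁻¹ l j) k = (L * L⁻¹) k j := by
      simp [Matrix.mulVec, dotProduct, Matrix.mul_apply]
    rw [this, hmul]
    rcases eq_or_ne k j with rfl | h
    · simp
    · simp [Matrix.one_apply_ne h]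
  -- splitting helper
  have hsplit : ∀ k : Fin n, ∑ l, L k l * L⁻¹ l j
      = L k k * L⁻¹ k j + ∑ l ∈ Finset.univ.filter (fun l => l ≠ k), L k l * L⁻¹ l j := by
    intro k
    have heq := Finset.sum_filter_add_sum_filter_not Finset.univ (fun l => l = k)
      (fun l => L k l * L⁻¹ l j)
    have h4 : Finset.univ.filter (fun l => l = k) = {k} := by ext l; simp
    rw [h4, Finset.sum_singleton] at heq
    rw [← heq]
  have hEj : ∑ l, L j l * L⁻¹ l j = 1 := by
    have : (L * L⁻¹) j j = 1 := by rw [hmul]; simp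
    rw [← this, Matrix.mul_apply]
  have hEi : ∑ l, L i l * L⁻¹ l j = 0 := by
    have : (L * L⁻¹) i j = 0 := by rw [hmul]; simp [Matrix.one_apply_ne hij]
    rw [← this, Matrix.mul_apply]
  -- 1 ≤ L j j * L⁻¹ j j
  have hjj : 1 ≤ L j j * L⁻¹ j j := by
    have hrest : ∑ l ∈ Finset.univ.filter (fun l => l ≠ j), L j l * L⁻¹ l j ≤ 0 := by
      apply Finset.sum_nonpos
      intro l hl
      exact mul_nonpos_of_nonpos_of_nonneg
        (hoff j l (Finset.mem_filter.mp hl).2.symm) (hpos l)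
    have := hsplit j
    rw [hEj] at this
    linarith
  -- -L i j ≥ 1
  have hLij : 1 ≤ -L i j := by
    obtain ⟨z, hz⟩ := hint i j
    have hz0 : z ≠ 0 := by rintro rfl; simp at hz; exact hadj hz
    have hzneg : (z:ℝ) ≤ 0 := hz ▸ hoff i j hij
    have hzneg' : z ≤ 0 := by exact_mod_cast hzneg
    have : z ≤ -1 := by omega
    have : (z:ℝ) ≤ -1 := by exact_mod_cast this
    rw [hz]; linarith
  -- L i i * L⁻¹ i j ≥ (-L i j) * L⁻¹ j j
  have hii : (-L i j) * L⁻¹ j j ≤ L i i * L⁻¹ i j := by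
    have hterm : ∀ l ∈ Finset.univ.filter (fun l => l ≠ i), 0 ≤ (-L i l) * L⁻¹ l j := by
      intro l hl
      exact mul_nonneg (neg_nonneg.mpr (hoff i l (Finset.mem_filter.mp hl).2.symm)) (hpos l)
    have hjmem : j ∈ Finset.univ.filter (fun l => l ≠ i) := by
      simp [hij.symm]
    have hsingle : (-L i j) * L⁻¹ j j
        ≤ ∑ l ∈ Finset.univ.filter (fun l => l ≠ i), (-L i l) * L⁻¹ l j :=
      Finset.single_le_sum hterm hjmem
    have hneg : ∑ l ∈ Finset.univ.filter (fun l => l ≠ i), (-L i l) * L⁻¹ l j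
        = -∑ l ∈ Finset.univ.filter (fun l => l ≠ i), L i l * L⁻¹ l j := by
      rw [← Finset.sum_neg_distrib]
      exact Finset.sum_congr rfl fun l _ => by ring
    have := hsplit i
    rw [hEi] at this
    rw [hneg] at hsingle
    linarith
  -- chain
  have hLii : L i i ≤ (U:ℝ) := le_of_abs_le (hbd i i)
  have hLjj : L j j ≤ (U:ℝ) := le_of_abs_le (hbd j j)
  have hXnn : 0 ≤ L⁻¹ i j := hpos i
  have hjj0 : 0 ≤ L⁻¹ j j := hpos j
  have hchain : 1 ≤ (U:ℝ)^2 * L⁻¹ i j := by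
    nlinarith [hdiag i, hdiag j, mul_le_mul hLii hLjj (le_of_lt (hdiag j)) hU0.le]
  have hmain : ((U : ℝ))⁻¹ ^ 2 ≤ L⁻¹ i j := by
    rw [inv_pow, inv_le_iff_one_le_mul₀ (by positivity)]
    linarith [hchain]
  refine ⟨hmain, ?_⟩
  -- logb part
  have hn0 : (2:ℝ) ≤ (n:ℝ) := by exact_mod_cast hn
  have hU2 : (2:ℝ) ≤ (U:ℝ) := by exact_mod_cast hU
  have hb1 : 1 < (n:ℝ) * U := by nlinarith
  have hX0 : 0 < L⁻¹ i j := lt_of_lt_of_le (by positivity) hmain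
  have hkey : ((n:ℝ) * U) ^ (-2 : ℝ) ≤ L⁻¹ i j := by
    have hb0 : (0:ℝ) < (n:ℝ) * U := by linarith
    have h1 : ((n:ℝ) * U) ^ (-2 : ℝ) = (((n:ℝ) * U) ^ (2:ℕ))⁻¹ := by
      rw [Real.rpow_neg hb0.le, ← Real.rpow_natCast]
      norm_num
    rw [h1]
    have h2 : (U:ℝ)^(2:ℕ) ≤ ((n:ℝ)*U)^(2:ℕ) :=
      pow_le_pow_left₀ hU0.le (le_mul_of_one_le_left hU0.le (by linarith)) 2
    have h3 : (((n:ℝ) * U) ^ (2:ℕ))⁻¹ ≤ ((U:ℝ)^(2:ℕ))⁻¹ := by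
      apply inv_anti₀ (by positivity) h2
    calc (((n:ℝ) * U) ^ (2:ℕ))⁻¹ ≤ ((U:ℝ)^(2:ℕ))⁻¹ := h3
    _ = ((U : ℝ))⁻¹ ^ 2 := by rw [inv_pow]
    _ ≤ L⁻¹ i j := hmain
  have hlog : (-2 : ℝ) ≤ Real.logb ((n:ℝ) * U) (L⁻¹ i j) :=
    (Real.le_logb_iff_rpow_le hb1 hX0).mpr hkey
  linarith
end

section
/- Let L be an n×n invertible SDDM matrix with integer entries in [-U, U], where U ≥ 2 and n ≥ 2. Then for every index j ∈ [n], L_{jj} · (L⁻¹)_{jj} ≤ n²U ≤ (nU)²; equivalently, log_{nU}(L_{jj}(L⁻¹)_{jj}) ≤ 2. -/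
/-!
Write `x = L⁻¹ eⱼ`, so that `xᵀ L x = (L⁻¹)ⱼⱼ =: t`. For symmetric `L`,
`xᵀ L x = ∑ᵢ rᵢ xᵢ² + ½ ∑ᵢⱼ (-Lᵢⱼ)(xᵢ - xⱼ)²` with row sums `rᵢ ≥ 0`. Invertibility forces every
connected component of the support graph of `L` to contain a vertex `v` with `rᵥ ≠ 0`
(otherwise the indicator of the component lies in the kernel), and integrality makes all
nonzero weights at least `1`. Cauchy–Schwarz along a path `j ⇝ v` of at most `n` vertices
then gives `xⱼ² ≤ 2n · xᵀ L x`, i.e. `t² ≤ 2n t`, hence `t ≤ 2n` and `Lⱼⱼ t ≤ 2nU ≤ n²U`.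
-/

open Finset Matrix

def Matrix.supportGraph {ι R : Type*} [Zero R] (L : Matrix ι ι R) : SimpleGraph ι :=
  SimpleGraph.fromRel fun i j => L i j ≠ 0

theorem one_le_abs_of_eq_intCast {x : ℝ} (hx : ∃ z : ℤ, x = z) (h0 : x ≠ 0) : 1 ≤ |x| := by
  obtain ⟨z, rfl⟩ := hx
  exact_mod_cast Int.one_le_abs (by exact_mod_cast h0)

theorem add_sq_le_succ_mul {a b A k : ℝ} (ha : a ^ 2 ≤ k * A) (hA : 0 ≤ A) (hk : 0 ≤ k) :
    (a + b) ^ 2 ≤ (k + 1) * (A + b ^ 2) := by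
  rcases hk.eq_or_lt with rfl | hk
  · nlinarith [sq_nonneg a]
  · have h := mul_le_mul_of_nonneg_left ha (by positivity : (0 : ℝ) ≤ k + 1)
    have : 0 ≤ k * ((k + 1) * (A + b ^ 2) - (a + b) ^ 2) := by
      nlinarith [sq_nonneg (a - k * b)]
    linarith [(mul_nonneg_iff_of_pos_left hk).mp this]

theorem Real.logb_le_two_of_le_sq {b x : ℝ} (hb : 1 < b) (hx : 0 ≤ x) (hxb : x ≤ b ^ 2) :
    Real.logb b x ≤ 2 := by
  rcases hx.eq_or_lt with rfl | hx
  · simp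
  · rw [Real.logb_le_iff_le_rpow hb hx]
    exact_mod_cast hxb

namespace SimpleGraph.Walk

variable {V : Type*} {G : SimpleGraph V}

theorem sub_eq_sum_darts {R : Type*} [AddCommGroup R] (y : V → R) {u v : V} (p : G.Walk u v) :
    y u - y v = (p.darts.map fun d => y d.fst - y d.snd).sum := by
  induction p with
  | nil => simp
  | cons h p ih => simp [← ih]

theorem sq_sub_le_length_mul_sum_darts [DecidableEq V] (y : V → ℝ) {u v : V} (p : G.Walk u v)
    (hp : p.darts.Nodup) :
    (y u - y v) ^ 2 ≤ p.length * ∑ d ∈ p.darts.toFinset, (y d.fst - y d.snd) ^ 2 := by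
  rw [p.sub_eq_sum_darts y, ← List.sum_toFinset _ hp, ← p.length_darts,
    ← List.toFinset_card_of_nodup hp]
  exact sq_sum_le_card_mul_sum_sq

end SimpleGraph.Walk

namespace Matrix

variable {ι : Type*}

theorem reachable_supportGraph_iff_of_ne_zero {R : Type*} [Zero R] {L : Matrix ι ι R}
    {u i j : ι} (h : L i j ≠ 0) :
    L.supportGraph.Reachable u i ↔ L.supportGraph.Reachable u j := by
  rcases eq_or_ne i j with rfl | hij
  · rfl
  · have hadj : L.supportGraph.Adj i j := (SimpleGraph.fromRel_adj _ _ _).2 ⟨hij, .inl h⟩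
    exact ⟨fun hu => hu.trans hadj.reachable, fun hu => hu.trans hadj.symm.reachable⟩

variable [Fintype ι]

theorem IsSymm.two_mul_dotProduct_mulVec {R : Type*} [CommRing R] {L : Matrix ι ι R}
    (hL : L.IsSymm) (y : ι → R) :
    2 * (y ⬝ᵥ L *ᵥ y) =
      2 * ∑ i, (∑ j, L i j) * y i ^ 2 - ∑ i, ∑ j, L i j * (y i - y j) ^ 2 := by
  have hswap : ∑ i, ∑ j, L i j * y j ^ 2 = ∑ i, (∑ j, L i j) * y i ^ 2 := by
    rw [sum_comm]
    exact sum_congr rfl fun i _ => by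
      rw [sum_mul]; exact sum_congr rfl fun j _ => by rw [hL.apply i j]
  have hexpand : ∑ i, ∑ j, L i j * (y i - y j) ^ 2 =
      ∑ i, (∑ j, L i j) * y i ^ 2 - 2 * (y ⬝ᵥ L *ᵥ y) + ∑ i, ∑ j, L i j * y j ^ 2 := by
    simp only [dotProduct, mulVec, mul_sum, sum_mul, ← sum_sub_distrib, ← sum_add_distrib]
    exact sum_congr rfl fun i _ => sum_congr rfl fun j _ => by ring
  rw [hexpand, hswap]
  ring

theorem sum_darts_sq_le {L : Matrix ι ι ℝ} (hsymm : L.IsSymm)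
    (hoff : ∀ i j, i ≠ j → L i j ≤ 0) (hint : ∀ i j, ∃ z : ℤ, L i j = z)
    (s : Finset L.supportGraph.Dart) (y : ι → ℝ) :
    ∑ d ∈ s, (y d.fst - y d.snd) ^ 2 ≤ -∑ i, ∑ j, L i j * (y i - y j) ^ 2 := by
  have hterm : ∀ p : ι × ι, 0 ≤ -L p.1 p.2 * (y p.1 - y p.2) ^ 2 := fun ⟨i, j⟩ => by
    rcases eq_or_ne i j with rfl | hij
    · simp
    · exact mul_nonneg (neg_nonneg.2 (hoff i j hij)) (sq_nonneg _)
  have hdart : ∀ d : L.supportGraph.Dart, 1 ≤ -L d.fst d.snd := fun d => by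
    obtain ⟨hne, hL⟩ := (SimpleGraph.fromRel_adj _ _ _).1 d.adj
    have hL : L d.fst d.snd ≠ 0 := hL.elim id fun h => hsymm.apply d.snd d.fst ▸ h
    rw [← abs_of_nonpos (hoff _ _ hne)]
    exact one_le_abs_of_eq_intCast (hint _ _) hL
  calc ∑ d ∈ s, (y d.fst - y d.snd) ^ 2
      ≤ ∑ d ∈ s, -L d.fst d.snd * (y d.fst - y d.snd) ^ 2 :=
        sum_le_sum fun d _ => le_mul_of_one_le_left (sq_nonneg _) (hdart d)
    _ = ∑ p ∈ s.map ⟨_, SimpleGraph.Dart.toProd_injective⟩,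
          -L p.1 p.2 * (y p.1 - y p.2) ^ 2 := by rw [sum_map]; rfl
    _ ≤ ∑ p : ι × ι, -L p.1 p.2 * (y p.1 - y p.2) ^ 2 := sum_le_univ_sum_of_nonneg hterm
    _ = -∑ i, ∑ j, L i j * (y i - y j) ^ 2 := by
        simp only [Fintype.sum_prod_type, neg_mul, sum_neg_distrib]

variable [DecidableEq ι]

theorem sum_row_nonneg_of_sum_abs_le {L : Matrix ι ι ℝ} {i : ι}
    (hi : ∑ j ∈ univ.filter (fun j => j ≠ i), |L i j| ≤ L i i) : 0 ≤ ∑ j, L i j := by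
  rw [← add_sum_erase _ _ (mem_univ i), ← filter_ne']
  have := sum_le_sum fun j (_ : j ∈ univ.filter (fun j => j ≠ i)) => neg_abs_le (L i j)
  rw [sum_neg_distrib] at this
  linarith

theorem dotProduct_mulVec_inv_mulVec_single {K : Type*} [Field K] {L : Matrix ι ι K}
    (hL : IsUnit L) (j : ι) :
    (L⁻¹ *ᵥ Pi.single j 1) ⬝ᵥ L *ᵥ (L⁻¹ *ᵥ Pi.single j 1) = L⁻¹ j j := by
  rw [mulVec_mulVec, mul_nonsing_inv L ((isUnit_iff_isUnit_det L).1 hL), one_mulVec,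
    dotProduct_single, mul_one, mulVec_single_one, col_apply]

theorem exists_reachable_sum_row_ne_zero {K : Type*} [Field K] {L : Matrix ι ι K}
    (hL : IsUnit L) (u : ι) : ∃ v, L.supportGraph.Reachable u v ∧ ∑ j, L v j ≠ 0 := by
  classical
  by_contra! h
  let w : ι → K := fun i => if L.supportGraph.Reachable u i then 1 else 0
  have hw : L *ᵥ w = L *ᵥ 0 := by
    funext i
    have hcol : ∀ j, L i j * w j = L i j * w i := fun j => by
      by_cases hij : L i j = 0
      · simp [hij]
      · simp [w, reachable_supportGraph_iff_of_ne_zero hij]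
    rw [mulVec_zero, Pi.zero_apply, mulVec, dotProduct, sum_congr rfl fun j _ => hcol j,
      ← sum_mul]
    by_cases hu : L.supportGraph.Reachable u i
    · simp [h i hu]
    · simp [w, hu]
  have := congrFun (mulVec_injective_iff_isUnit.2 hL hw) u
  simp [w] at this

theorem sq_le_two_card_mul_dotProduct_mulVec {L : Matrix ι ι ℝ} (hsymm : L.IsSymm)
    (hoff : ∀ i j, i ≠ j → L i j ≤ 0) (hrow : ∀ i, 0 ≤ ∑ j, L i j)
    (hint : ∀ i j, ∃ z : ℤ, L i j = z) (hinv : IsUnit L) (y : ι → ℝ) (u : ι) :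
    y u ^ 2 ≤ 2 * Fintype.card ι * (y ⬝ᵥ L *ᵥ y) := by
  obtain ⟨v, ⟨walk⟩, hv⟩ := exists_reachable_sum_row_ne_zero hinv u
  obtain ⟨p, hp⟩ := walk.toPath
  set R := ∑ i, (∑ j, L i j) * y i ^ 2
  set D := -∑ i, ∑ j, L i j * (y i - y j) ^ 2
  have hQ : 2 * (y ⬝ᵥ L *ᵥ y) = 2 * R + D := by rw [hsymm.two_mul_dotProduct_mulVec]; ring
  have hR : y v ^ 2 ≤ R := by
    choose Z hZ using hint
    have hv1 : 1 ≤ ∑ j, L v j := by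
      simpa [abs_of_nonneg (hrow v)] using
        one_le_abs_of_eq_intCast ⟨∑ j, Z v j, by simp [hZ]⟩ hv
    calc y v ^ 2 ≤ (∑ j, L v j) * y v ^ 2 := le_mul_of_one_le_left (sq_nonneg _) hv1
      _ ≤ R := single_le_sum (fun i _ => mul_nonneg (hrow i) (sq_nonneg _)) (mem_univ v)
  have hdarts := sum_darts_sq_le hsymm hoff hint p.darts.toFinset y
  have hD : (y u - y v) ^ 2 ≤ p.length * D :=
    (p.sq_sub_le_length_mul_sum_darts y (p.darts_nodup_of_support_nodup hp.support_nodup)).trans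
      (mul_le_mul_of_nonneg_left hdarts (Nat.cast_nonneg _))
  have hlen : (p.length : ℝ) + 1 ≤ Fintype.card ι := by exact_mod_cast hp.length_lt
  have hR0 : 0 ≤ R := (sq_nonneg _).trans hR
  have hD0 : 0 ≤ D := (sum_nonneg fun _ _ => sq_nonneg _).trans hdarts
  calc y u ^ 2 = ((y u - y v) + y v) ^ 2 := by ring
    _ ≤ (p.length + 1) * (D + y v ^ 2) := add_sq_le_succ_mul hD hD0 (Nat.cast_nonneg _)
    _ ≤ Fintype.card ι * (D + R) := by gcongr
    _ ≤ 2 * Fintype.card ι * (y ⬝ᵥ L *ᵥ y) := by nlinarith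

end Matrix

theorem sddm_diag_product_upper_bound_general {n : ℕ} (hn : 2 ≤ n) (U : ℕ) (hU : 2 ≤ U)
    (L : Matrix (Fin n) (Fin n) ℝ)
    (hsymm : L.IsSymm)
    (hoff : ∀ i j, i ≠ j → L i j ≤ 0)
    (hdd : ∀ i, ∑ j ∈ Finset.univ.filter (fun j => j ≠ i), |L i j| ≤ L i i)
    (hint : ∀ i j, ∃ z : ℤ, L i j = (z : ℝ))
    (hbd : ∀ i j, |L i j| ≤ (U : ℝ))
    (hinv : IsUnit L) :
    ∀ j, L j j * L⁻¹ j j ≤ (n : ℝ) ^ 2 * U ∧ (n : ℝ) ^ 2 * U ≤ ((n : ℝ) * U) ^ 2 ∧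
      Real.logb ((n : ℝ) * U) (L j j * L⁻¹ j j) ≤ 2 := by
  intro j
  have hn2 : (2 : ℝ) ≤ n := by exact_mod_cast hn
  have hU2 : (2 : ℝ) ≤ U := by exact_mod_cast hU
  have hsq : L⁻¹ j j ^ 2 ≤ 2 * n * L⁻¹ j j := by
    have h := sq_le_two_card_mul_dotProduct_mulVec hsymm hoff
      (fun i => sum_row_nonneg_of_sum_abs_le (hdd i)) hint hinv (L⁻¹ *ᵥ Pi.single j 1) j
    rwa [dotProduct_mulVec_inv_mulVec_single hinv j, mulVec_single_one, col_apply,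
      Fintype.card_fin] at h
  have ht0 : 0 ≤ L⁻¹ j j := by nlinarith
  have ht : L⁻¹ j j ≤ 2 * n := by nlinarith
  have hLjj0 : 0 ≤ L j j := (sum_nonneg fun _ _ => abs_nonneg _).trans (hdd j)
  have hLjj : L j j ≤ U := (le_abs_self _).trans (hbd j j)
  have hprod : L j j * L⁻¹ j j ≤ (n : ℝ) ^ 2 * U := by
    calc L j j * L⁻¹ j j ≤ U * (2 * n) := mul_le_mul hLjj ht ht0 (by positivity)
      _ ≤ (n : ℝ) ^ 2 * U := by
          nlinarith [mul_nonneg (mul_nonneg (sub_nonneg.2 hn2) (Nat.cast_nonneg n))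
            (Nat.cast_nonneg U)]
  have hnU : (n : ℝ) ^ 2 * U ≤ ((n : ℝ) * U) ^ 2 := by nlinarith
  exact ⟨hprod, hnU, Real.logb_le_two_of_le_sq (by nlinarith) (mul_nonneg hLjj0 ht0)
    (hprod.trans hnU)⟩

/-- For an `n × n` invertible SDDM matrix `L` with integer entries in
`[-U, U]` (`U ≥ 2`, `n ≥ 2`), every diagonal index `j` satisfies
`Lⱼⱼ · (L⁻¹)ⱼⱼ ≤ n² U ≤ (nU)²`; equivalently `log_{nU} (Lⱼⱼ (L⁻¹)ⱼⱼ) ≤ 2`. -/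
theorem sddm_diag_product_upper_bound {n : ℕ} (hn : 2 ≤ n) (U : ℕ) (hU : 2 ≤ U)
    (L : Matrix (Fin n) (Fin n) ℝ)
    (hsymm : L.IsSymm)
    (hoff : ∀ i j, i ≠ j → L i j ≤ 0)
    (hdiag : ∀ i, 0 < L i i)
    (hdd : ∀ i, ∑ j ∈ Finset.univ.filter (fun j => j ≠ i), |L i j| ≤ L i i)
    (hint : ∀ i j, ∃ z : ℤ, L i j = (z : ℝ))
    (hbd : ∀ i j, |L i j| ≤ (U : ℝ))
    (hinv : IsUnit L) :
    ∀ j, L j j * L⁻¹ j j ≤ (n : ℝ) ^ 2 * U ∧ (n : ℝ) ^ 2 * U ≤ ((n : ℝ) * U) ^ 2 ∧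
      Real.logb ((n : ℝ) * U) (L j j * L⁻¹ j j) ≤ 2 :=
  sddm_diag_product_upper_bound_general hn U hU L hsymm hoff hdd hint hbd hinv
end

section
/- Let L be an n×n invertible SDDM matrix with integer entries in [-U, U], where U ≥ 2 and n ≥ 2. Then for all indices i, j, k ∈ [n], (L⁻¹)_{ij} · (L⁻¹)_{jk} ≤ (L⁻¹)_{ik} · L_{jj} · (L⁻¹)_{jj} ≤ (nU)² · (L⁻¹)_{ik}. Consequently, the probability distance satisfies the triangle inequality: D_L(i, k) ≤ D_L(i, j) + D_L(j, k). -/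
open Finset

section
variable {n : ℕ} {L : Matrix (Fin n) (Fin n) ℝ}

lemma aux_ker {n : ℕ} {L : Matrix (Fin n) (Fin n) ℝ} (hinv : IsUnit L) {v : Fin n → ℝ}
    (hv : L.mulVec v = 0) : v = 0 := by
  have hdet : IsUnit L.det := (Matrix.isUnit_iff_isUnit_det L).mp hinv
  have h := congrArg (fun w => L⁻¹.mulVec w) hv
  simp only [Matrix.mulVec_mulVec, Matrix.nonsing_inv_mul L hdet, Matrix.mulVec_zero,
    Matrix.one_mulVec] at h
  exact h

lemma aux_ind {n : ℕ} {L : Matrix (Fin n) (Fin n) ℝ} (hsymm : L.IsSymm) (hinv : IsUnit L)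
    (S : Finset (Fin n)) (hS : S.Nonempty)
    (hrow : ∀ p ∈ S, ∑ l, L p l = 0)
    (hbdry : ∀ p ∈ S, ∀ l, l ∉ S → L p l = 0) : False := by
  set v : Fin n → ℝ := fun l => if l ∈ S then 1 else 0 with hv
  have hmv : L.mulVec v = 0 := by
    funext p
    simp only [Pi.zero_apply]
    have : L.mulVec v p = ∑ l ∈ S, L p l := by
      simp [Matrix.mulVec, dotProduct, hv, mul_ite, Finset.sum_ite_mem]
    rw [this]
    by_cases hp : p ∈ S
    · have h2 : ∑ l ∈ Sᶜ, L p l = 0 :=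
        Finset.sum_eq_zero fun l hl => hbdry p hp l (by simpa using hl)
      have h3 := hrow p hp
      rw [← Finset.sum_add_sum_compl S (L p)] at h3
      linarith
    · refine Finset.sum_eq_zero fun l hl => ?_
      have := hbdry l hl p hp
      rw [← hsymm.apply] at this
      exact this
  obtain ⟨m, hm⟩ := hS
  have := congrFun (aux_ker hinv hmv) m
  simp [hv, hm] at this

lemma aux_rowsum_nonneg (hoff : ∀ i j, i ≠ j → L i j ≤ 0)
    (hdd : ∀ i, ∑ j ∈ Finset.univ.filter (fun j => j ≠ i), |L i j| ≤ L i i) (p : Fin n) :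
    0 ≤ ∑ l, L p l := by
  have h1 : ∑ l ∈ Finset.univ.filter (fun l => l ≠ p), |L p l|
      = -∑ l ∈ Finset.univ.filter (fun l => l ≠ p), L p l := by
    rw [← Finset.sum_neg_distrib]
    refine Finset.sum_congr rfl fun l hl => abs_of_nonpos (hoff p l ?_)
    simp only [Finset.mem_filter] at hl
    exact fun h => hl.2 h.symm
  have h2 := hdd p
  rw [h1] at h2
  have h3 : ∑ l, L p l = L p p + ∑ l ∈ Finset.univ.filter (fun l => l ≠ p), L p l := by
    rw [← Finset.sum_filter_add_sum_filter_not Finset.univ (fun l => l = p) (L p)]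
    simp [Finset.filter_eq', Finset.sum_ite_eq]
  linarith

lemma aux_int_pos {x : ℝ} (h : ∃ z : ℤ, x = (z : ℝ)) (hx : 0 < x) : 1 ≤ x := by
  obtain ⟨z, rfl⟩ := h
  exact_mod_cast hx

lemma aux_int_neg {x : ℝ} (h : ∃ z : ℤ, x = (z : ℝ)) (hx : x ≤ 0) (hx0 : x ≠ 0) : 1 ≤ -x := by
  obtain ⟨z, rfl⟩ := h
  have h1 : z ≠ 0 := by exact_mod_cast hx0
  have h2 : z ≤ 0 := by exact_mod_cast hx
  have h3 : z ≤ -1 := by omega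
  have h4 : (z:ℝ) ≤ -1 := by exact_mod_cast h3
  linarith

lemma aux_max (hsymm : L.IsSymm) (hoff : ∀ i j, i ≠ j → L i j ≤ 0)
    (hdd : ∀ i, ∑ j ∈ Finset.univ.filter (fun j => j ≠ i), |L i j| ≤ L i i)
    (hinv : IsUnit L) (T : Finset (Fin n)) (z : Fin n → ℝ)
    (h1 : ∀ m, m ∉ T → 0 ≤ L.mulVec z m) (h2 : ∀ m ∈ T, 0 ≤ z m) :
    ∀ m, 0 ≤ z m := by
  by_contra hcon
  push_neg at hcon
  obtain ⟨m0, hm0⟩ := hcon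
  obtain ⟨m, -, hmin⟩ := Finset.exists_min_image Finset.univ z ⟨m0, Finset.mem_univ m0⟩
  have hminle : ∀ l, z m ≤ z l := fun l => hmin l (Finset.mem_univ l)
  set c := z m with hc
  have hcneg : c < 0 := lt_of_le_of_lt (hminle m0) hm0
  set S : Finset (Fin n) := Finset.univ.filter (fun l => z l = c) with hSdef
  have hmemS : ∀ l, l ∈ S ↔ z l = c := fun l => by simp [hSdef]
  have key : ∀ p ∈ S, (∑ l, L p l = 0) ∧ ∀ l, l ∉ S → L p l = 0 := by
    intro p hp
    have hzp : z p = c := (hmemS p).mp hp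
    have hpT : p ∉ T := fun h => absurd (h2 p h) (by rw [hzp]; exact not_le.mpr hcneg)
    have hmv : 0 ≤ ∑ l, L p l * z l := by
      have := h1 p hpT
      simpa [Matrix.mulVec, dotProduct] using this
    have hterm : ∀ l, L p l * z l ≤ L p l * c := by
      intro l
      rcases eq_or_ne l p with rfl | hlp
      · rw [hzp]
      · exact mul_le_mul_of_nonpos_left (hminle l) (hoff p l (Ne.symm hlp))
    have hsum : ∑ l, L p l * z l ≤ (∑ l, L p l) * c := by
      rw [Finset.sum_mul]
      exact Finset.sum_le_sum fun l _ => hterm l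
    have hrs := aux_rowsum_nonneg hoff hdd p
    have hrc : (∑ l, L p l) * c ≤ 0 := mul_nonpos_of_nonneg_of_nonpos hrs hcneg.le
    have hz1 : ∑ l, L p l * z l = 0 := le_antisymm (le_trans hsum hrc) hmv
    have hz2 : (∑ l, L p l) * c = 0 := le_antisymm hrc (hz1 ▸ hsum)
    have hrow0 : ∑ l, L p l = 0 := by
      rcases mul_eq_zero.mp hz2 with h | h
      · exact h
      · exact absurd h hcneg.ne
    refine ⟨hrow0, ?_⟩
    have heach : ∀ l ∈ Finset.univ, L p l * c - L p l * z l = 0 := by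
      have hsum0 : ∑ l, (L p l * c - L p l * z l) = 0 := by
        rw [Finset.sum_sub_distrib, ← Finset.sum_mul, hz2, hz1, sub_zero]
      exact (Finset.sum_eq_zero_iff_of_nonneg
        (fun l _ => sub_nonneg.mpr (hterm l))).mp hsum0
    intro l hl
    have hlc : z l ≠ c := fun h => hl ((hmemS l).mpr h)
    have h0 := heach l (Finset.mem_univ l)
    have : L p l * (c - z l) = 0 := by ring_nf; ring_nf at h0; linarith
    rcases mul_eq_zero.mp this with h | h
    · exact h
    · exact absurd (sub_eq_zero.mp h).symm hlc
  exact aux_ind hsymm hinv S ⟨m, (hmemS m).mpr rfl⟩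
    (fun p hp => (key p hp).1) (fun p hp => (key p hp).2)

lemma aux_inv_nonneg (hsymm : L.IsSymm) (hoff : ∀ i j, i ≠ j → L i j ≤ 0)
    (hdd : ∀ i, ∑ j ∈ Finset.univ.filter (fun j => j ≠ i), |L i j| ≤ L i i)
    (hinv : IsUnit L) (j : Fin n) : ∀ m, 0 ≤ L⁻¹ m j := by
  have hdet : IsUnit L.det := (Matrix.isUnit_iff_isUnit_det L).mp hinv
  refine aux_max hsymm hoff hdd hinv ∅ (fun p => L⁻¹ p j) (fun m _ => ?_) (by simp)
  have : L.mulVec (fun p => L⁻¹ p j) m = (L * L⁻¹) m j := by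
    simp [Matrix.mulVec, dotProduct, Matrix.mul_apply]
  rw [this, Matrix.mul_nonsing_inv L hdet, Matrix.one_apply]
  positivity

lemma aux_colbound (hsymm : L.IsSymm) (hoff : ∀ i j, i ≠ j → L i j ≤ 0)
    (hdd : ∀ i, ∑ j ∈ Finset.univ.filter (fun j => j ≠ i), |L i j| ≤ L i i)
    (hint : ∀ i j, ∃ z : ℤ, L i j = (z : ℝ))
    (hinv : IsUnit L) (j : Fin n) : ∀ m, L⁻¹ m j ≤ (n : ℝ) := by
  have hdet : IsUnit L.det := (Matrix.isUnit_iff_isUnit_det L).mp hinv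
  set y : Fin n → ℝ := fun p => L⁻¹ p j with hy
  have hy0 : ∀ p, 0 ≤ y p := aux_inv_nonneg hsymm hoff hdd hinv j
  have hcol : ∀ p, ∑ l, L p l * y l = if p = j then 1 else 0 := by
    intro p
    have : ∑ l, L p l * y l = (L * L⁻¹) p j := by simp [Matrix.mul_apply, hy]
    rw [this, Matrix.mul_nonsing_inv L hdet, Matrix.one_apply]
  have main : ∀ N : ℕ, ∀ m : Fin n,
      (Finset.univ.filter (fun l => y l < y m)).card = N →
      y m ≤ ((Finset.univ.filter (fun l => y l ≤ y m)).card : ℝ) := by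
    intro N
    induction N using Nat.strong_induction_on with
    | _ N ih =>
    intro m hN
    set S : Finset (Fin n) := Finset.univ.filter (fun p => y m ≤ y p) with hSdef
    have hmS : m ∈ S := by simp [hSdef]
    have hSmem : ∀ p, p ∈ S ↔ y m ≤ y p := fun p => by simp [hSdef]
    have hcard1 : (1 : ℝ) ≤ ((Finset.univ.filter (fun l => y l ≤ y m)).card : ℝ) := by
      have : m ∈ Finset.univ.filter (fun l => y l ≤ y m) := by simp
      have := Finset.card_pos.mpr ⟨m, this⟩
      exact_mod_cast this
    -- the cut identity
    have hsplit : ∀ p, ∑ l, L p l * y l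
        = (∑ l, L p l) * y p + ∑ l, L p l * (y l - y p) := by
      intro p
      rw [Finset.sum_mul, ← Finset.sum_add_distrib]
      exact Finset.sum_congr rfl fun l _ => by ring
    have hT : ∑ p ∈ S, ∑ l, L p l * y l ≤ 1 := by
      rw [Finset.sum_congr rfl fun p _ => hcol p]
      simp only [Finset.sum_ite_eq' S j (fun _ => (1:ℝ))]
      split <;> norm_num
    -- decompose inner cross sum
    have hcross : ∀ p, (∑ l, L p l * (y l - y p))
        = (∑ l ∈ S, L p l * (y l - y p)) + ∑ l ∈ Sᶜ, L p l * (y l - y p) :=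
      fun p => (Finset.sum_add_sum_compl S _).symm
    have hAzero : ∑ p ∈ S, ∑ l ∈ S, L p l * (y l - y p) = 0 := by
      have h1 : ∑ p ∈ S, ∑ l ∈ S, L p l * (y l - y p)
          = ∑ l ∈ S, ∑ p ∈ S, L p l * (y l - y p) := Finset.sum_comm
      have h2 : ∑ l ∈ S, ∑ p ∈ S, L p l * (y l - y p)
          = -∑ p ∈ S, ∑ l ∈ S, L p l * (y l - y p) := by
        rw [← Finset.sum_neg_distrib]
        refine Finset.sum_congr rfl fun l _ => ?_
        rw [← Finset.sum_neg_distrib]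
        refine Finset.sum_congr rfl fun p _ => ?_
        rw [hsymm.apply]
        ring
      linarith [h1, h2.symm ▸ h1]
    have hTdecomp : ∑ p ∈ S, (∑ l, L p l) * y p
        + ∑ p ∈ S, ∑ l ∈ Sᶜ, L p l * (y l - y p) ≤ 1 := by
      have : ∑ p ∈ S, ∑ l, L p l * y l
          = ∑ p ∈ S, (∑ l, L p l) * y p
            + (∑ p ∈ S, ∑ l ∈ S, L p l * (y l - y p)
              + ∑ p ∈ S, ∑ l ∈ Sᶜ, L p l * (y l - y p)) := by
        rw [← Finset.sum_add_distrib, ← Finset.sum_add_distrib]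
        exact Finset.sum_congr rfl fun p _ => by rw [hsplit p, hcross p]
      rw [this, hAzero] at hT
      linarith [hT]
    have hfirst_nonneg : ∀ p ∈ S, 0 ≤ (∑ l, L p l) * y p :=
      fun p _ => mul_nonneg (aux_rowsum_nonneg hoff hdd p) (hy0 p)
    have hcross_nonneg : ∀ p ∈ S, ∀ l ∈ Sᶜ, 0 ≤ L p l * (y l - y p) := by
      intro p hp l hl
      have hpl : y m ≤ y p := (hSmem p).mp hp
      have hll : y l < y m := by
        have := (Finset.mem_compl.mp hl)
        rw [hSmem] at this
        linarith [not_le.mp this]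
      have hne : p ≠ l := by
        rintro rfl; linarith
      have := hoff p l hne
      nlinarith
    have hcross_sum_nonneg : 0 ≤ ∑ p ∈ S, ∑ l ∈ Sᶜ, L p l * (y l - y p) :=
      Finset.sum_nonneg fun p hp => Finset.sum_nonneg fun l hl => hcross_nonneg p hp l hl
    have hfirst_sum_nonneg : 0 ≤ ∑ p ∈ S, (∑ l, L p l) * y p :=
      Finset.sum_nonneg hfirst_nonneg
    by_cases hA : ∃ p ∈ S, 0 < ∑ l, L p l
    · obtain ⟨p, hp, hsp⟩ := hA
      have hsp1 : 1 ≤ ∑ l, L p l := by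
        refine aux_int_pos ?_ hsp
        choose Z hZ using hint
        exact ⟨∑ l, Z p l, by push_cast [← hZ]; rfl⟩
      have hone : (∑ l, L p l) * y p ≤ 1 := by
        have hle := Finset.single_le_sum hfirst_nonneg hp
        linarith
      have hyp1 : y p ≤ 1 := by nlinarith [hy0 p]
      have := (hSmem p).mp hp
      linarith
    · by_cases hB : ∃ p ∈ S, ∃ l ∈ Sᶜ, L p l ≠ 0
      · obtain ⟨p, hp, l, hl, hpl0⟩ := hB
        have hll : y l < y m := by
          have := Finset.mem_compl.mp hl
          rw [hSmem] at this
          exact not_le.mp this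
        have hypm : y m ≤ y p := (hSmem p).mp hp
        have hLpl : L p l ≤ 0 := hoff p l (by rintro rfl; linarith)
        have hL1 : 1 ≤ -L p l := aux_int_neg (hint p l) hLpl hpl0
        -- single term bound
        have hterm_le : L p l * (y l - y p) ≤ 1 := by
          have h1 : ∑ l ∈ Sᶜ, L p l * (y l - y p)
              ≤ ∑ p ∈ S, ∑ l ∈ Sᶜ, L p l * (y l - y p) :=
            Finset.single_le_sum (f := fun p => ∑ l ∈ Sᶜ, L p l * (y l - y p))
              (fun q hq => Finset.sum_nonneg fun l hl => hcross_nonneg q hq l hl) hp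
          have h2 : L p l * (y l - y p) ≤ ∑ l ∈ Sᶜ, L p l * (y l - y p) :=
            Finset.single_le_sum (fun q hq => hcross_nonneg p hp q hq) hl
          linarith
        have hdrop : y p - y l ≤ 1 := by nlinarith
        -- induction step on l
        have hsub1 : Finset.univ.filter (fun q => y q < y l)
            ⊂ Finset.univ.filter (fun q => y q < y m) := by
          constructor
          · intro q hq
            simp only [Finset.mem_filter, Finset.mem_univ, true_and] at *
            linarith
          · intro hsub
            have hlm : l ∈ Finset.univ.filter (fun q => y q < y m) := by
              simp only [Finset.mem_filter, Finset.mem_univ, true_and]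
              exact hll
            have := hsub hlm
            simp only [Finset.mem_filter, Finset.mem_univ, true_and] at this
            exact absurd this (lt_irrefl _)
        have hcardlt : (Finset.univ.filter (fun q => y q < y l)).card < N :=
          hN ▸ Finset.card_lt_card hsub1
        have hIH : y l ≤ ((Finset.univ.filter (fun q => y q ≤ y l)).card : ℝ) :=
          ih _ hcardlt l rfl
        have hsub2 : Finset.univ.filter (fun q => y q ≤ y l)
            ⊆ Finset.univ.filter (fun q => y q < y m) := by
          intro q hq
          simp only [Finset.mem_filter, Finset.mem_univ, true_and] at *
          linarith
        have hc2 : ((Finset.univ.filter (fun q => y q ≤ y l)).card : ℝ) ≤ (N : ℝ) := by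
          have := Finset.card_le_card hsub2
          rw [hN] at this
          exact_mod_cast this
        have hsub3 : Finset.univ.filter (fun q => y q < y m)
            ⊂ Finset.univ.filter (fun q => y q ≤ y m) := by
          constructor
          · intro q hq
            simp only [Finset.mem_filter, Finset.mem_univ, true_and] at *
            exact hq.le
          · intro hsub
            have hmm : m ∈ Finset.univ.filter (fun q => y q ≤ y m) := by simp
            have := hsub hmm
            simp only [Finset.mem_filter, Finset.mem_univ, true_and] at this
            exact absurd this (lt_irrefl _)
        have hc3 : (N : ℝ) + 1 ≤ ((Finset.univ.filter (fun q => y q ≤ y m)).card : ℝ) := by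
          have := Finset.card_lt_card hsub3
          rw [hN] at this
          exact_mod_cast this
        linarith
      · exfalso
        push_neg at hA hB
        refine aux_ind hsymm hinv S ⟨m, hmS⟩ (fun p hp => ?_) (fun p hp l hl => ?_)
        · exact le_antisymm (hA p hp) (aux_rowsum_nonneg hoff hdd p)
        · exact hB p hp l (Finset.mem_compl.mpr hl)
  have hfin : ∀ m, y m ≤ ((Finset.univ.filter (fun l => y l ≤ y m)).card : ℝ) :=
    fun m => main _ m rfl
  intro m
  have h2 : (Finset.univ.filter (fun l => y l ≤ y m)).card ≤ n := by
    simpa using Finset.card_filter_le Finset.univ (fun l => y l ≤ y m)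
  exact le_trans (hfin m) (by exact_mod_cast h2)

end

/-- For an `n × n` invertible SDDM matrix `L` with integer entries in
`[-U, U]` (`U ≥ 2`, `n ≥ 2`) and all indices `i, j, k`:
`(L⁻¹)ᵢⱼ (L⁻¹)ⱼₖ ≤ (L⁻¹)ᵢₖ · Lⱼⱼ (L⁻¹)ⱼⱼ ≤ (nU)² (L⁻¹)ᵢₖ`.  Consequently, the probability
distance `D_L(i, j) = -log_{nU}((L⁻¹)ᵢⱼ) + 2` satisfies the triangle inequality
`D_L(i, k) ≤ D_L(i, j) + D_L(j, k)`; by the characterization `D_L(i, j) ≤ d ↔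
(L⁻¹)ᵢⱼ ≥ (nU)^{2-d}`, this reads: whenever `(L⁻¹)ᵢⱼ ≥ (nU)^{2-d₁}` and
`(L⁻¹)ⱼₖ ≥ (nU)^{2-d₂}`, one has `(L⁻¹)ᵢₖ ≥ (nU)^{2-(d₁+d₂)}`. -/
theorem sddm_prob_dist_triangle {n : ℕ} (hn : 2 ≤ n) (U : ℕ) (hU : 2 ≤ U)
    (L : Matrix (Fin n) (Fin n) ℝ)
    (hsymm : L.IsSymm)
    (hoff : ∀ i j, i ≠ j → L i j ≤ 0)
    (hdiag : ∀ i, 0 < L i i)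
    (hdd : ∀ i, ∑ j ∈ Finset.univ.filter (fun j => j ≠ i), |L i j| ≤ L i i)
    (hint : ∀ i j, ∃ z : ℤ, L i j = (z : ℝ))
    (hbd : ∀ i j, |L i j| ≤ (U : ℝ))
    (hinv : IsUnit L)
    (i j k : Fin n) :
    L⁻¹ i j * L⁻¹ j k ≤ L⁻¹ i k * (L j j * L⁻¹ j j) ∧
      L⁻¹ i k * (L j j * L⁻¹ j j) ≤ ((n : ℝ) * U) ^ 2 * L⁻¹ i k ∧
      ∀ d₁ d₂ : ℝ,
        ((n : ℝ) * U) ^ ((2 : ℝ) - d₁) ≤ L⁻¹ i j →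
        ((n : ℝ) * U) ^ ((2 : ℝ) - d₂) ≤ L⁻¹ j k →
        ((n : ℝ) * U) ^ ((2 : ℝ) - (d₁ + d₂)) ≤ L⁻¹ i k := by
  have hdet : IsUnit L.det := (Matrix.isUnit_iff_isUnit_det L).mp hinv
  have hXnn : ∀ a b, 0 ≤ L⁻¹ a b := fun a b => aux_inv_nonneg hsymm hoff hdd hinv b a
  have hXn : ∀ a b, L⁻¹ a b ≤ (n : ℝ) := fun a b => aux_colbound hsymm hoff hdd hint hinv b a
  have hLX : L * L⁻¹ = 1 := Matrix.mul_nonsing_inv L hdet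
  have hnR : (2 : ℝ) ≤ (n : ℝ) := by exact_mod_cast hn
  have hUR : (2 : ℝ) ≤ (U : ℝ) := by exact_mod_cast hU
  -- Part 1
  have part1 : L⁻¹ i j * L⁻¹ j k ≤ L⁻¹ i k * (L j j * L⁻¹ j j) := by
    set z : Fin n → ℝ := fun m => L⁻¹ j j * L⁻¹ m k - L⁻¹ j k * L⁻¹ m j with hz
    have hznn : ∀ m, 0 ≤ z m := by
      refine aux_max hsymm hoff hdd hinv {j} z (fun m hm => ?_) (fun m hm => ?_)
      · have hmj : m ≠ j := by simpa using hm
        have hcomp : L.mulVec z m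
            = L⁻¹ j j * (L * L⁻¹) m k - L⁻¹ j k * (L * L⁻¹) m j := by
          simp only [Matrix.mulVec, dotProduct, Matrix.mul_apply, hz,
            Finset.mul_sum, ← Finset.sum_sub_distrib]
          exact Finset.sum_congr rfl fun l _ => by ring
        rw [hcomp, hLX, Matrix.one_apply, Matrix.one_apply]
        simp only [if_neg hmj, mul_zero, sub_zero]
        by_cases hmk : m = k
        · simp only [if_pos hmk, mul_one]
          exact hXnn j j
        · simp [hmk]
      · have : m = j := by simpa using hm
        subst this
        simp [hz]
        ring_nf
        exact le_refl _
    have h0 := hznn i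
    simp only [hz] at h0
    have hLjj : 1 ≤ L j j := aux_int_pos (hint j j) (hdiag j)
    have s1 : L⁻¹ i j * L⁻¹ j k ≤ L⁻¹ i k * L⁻¹ j j := by nlinarith [h0]
    have s2 : L⁻¹ i k * L⁻¹ j j ≤ L⁻¹ i k * (L j j * L⁻¹ j j) := by
      nlinarith [mul_nonneg (mul_nonneg (hXnn i k) (hXnn j j)) (sub_nonneg.mpr hLjj)]
    linarith
  -- Part 2
  have part2 : L⁻¹ i k * (L j j * L⁻¹ j j) ≤ ((n : ℝ) * U) ^ 2 * L⁻¹ i k := by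
    have hLU : L j j ≤ (U : ℝ) := le_trans (le_abs_self _) (hbd j j)
    have hprod : L j j * L⁻¹ j j ≤ (U : ℝ) * (n : ℝ) :=
      mul_le_mul hLU (hXn j j) (hXnn j j) (by linarith)
    have h4 : (4 : ℝ) ≤ (n : ℝ) * (U : ℝ) := by nlinarith
    have hsq : (U : ℝ) * (n : ℝ) ≤ ((n : ℝ) * U) ^ 2 := by nlinarith [h4]
    nlinarith [hXnn i k]
  refine ⟨part1, part2, ?_⟩
  -- Part 3
  intro d₁ d₂ hx hy
  set B : ℝ := (n : ℝ) * U with hB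
  have hB4 : (4 : ℝ) ≤ B := by nlinarith
  have hBpos : 0 < B := by linarith
  have hchain : B ^ ((2:ℝ) - d₁) * B ^ ((2:ℝ) - d₂) ≤ B ^ 2 * L⁻¹ i k := by
    have h1 : B ^ ((2:ℝ) - d₁) * B ^ ((2:ℝ) - d₂) ≤ L⁻¹ i j * L⁻¹ j k :=
      mul_le_mul hx hy (Real.rpow_nonneg hBpos.le _) (hXnn i j)
    exact le_trans h1 (le_trans part1 part2)
  have hsum : B ^ ((2:ℝ) - d₁) * B ^ ((2:ℝ) - d₂)
      = B ^ ((2:ℝ) - (d₁ + d₂)) * B ^ (2:ℝ) := by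
    rw [← Real.rpow_add hBpos, ← Real.rpow_add hBpos]
    ring_nf
  have hB2 : B ^ (2:ℝ) = B ^ 2 := by
    rw [show (2:ℝ) = ((2:ℕ):ℝ) by norm_num, Real.rpow_natCast]
  rw [hsum, hB2] at hchain
  have hB2pos : 0 < B ^ 2 := by positivity
  have hchain2 : B ^ ((2:ℝ) - (d₁ + d₂)) * B ^ 2 ≤ L⁻¹ i k * B ^ 2 := by linarith [hchain]
  exact le_of_mul_le_mul_right hchain2 hB2pos
end

section
/- Let L be an n×n invertible SDDM matrix and let S ⊆ [n] be a nonempty subset of indices. Then the principal submatrix L_{S,S} is invertible, and for all i, j ∈ S, ((L_{S,S})⁻¹)_{ij} ≤ (L⁻¹)_{ij}. Consequently, when L has integer entries in [-U, U], the probability distances satisfy D_L(i, j) ≤ D_{L_{S,S}}(i, j) for all i, j ∈ S. -/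
/-!
By Gershgorin's theorem a symmetric diagonally dominant matrix has nonnegative eigenvalues, so an
invertible SDDM matrix `L` is positive definite, and so is every principal submatrix `A = L_{S,S}`.
Positive definite matrices with nonpositive off-diagonal entries are monotone: `M x ≥ 0` forces
`x ≥ 0`. Restricting the `j`-th column of `L⁻¹` to `S` and subtracting the `j`-th column of `A⁻¹`
gives a vector `w` with `A w = -∑_{b ∉ S} L_{·b} (L⁻¹)_{bj} ≥ 0`, hence `w ≥ 0`.
-/

open Finset Matrix

variable {ι : Type*} [Fintype ι]

namespace Matrix

theorem posSemidef_of_isSymm_of_sum_abs_le_diag [DecidableEq ι] {M : Matrix ι ι ℝ}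
    (hM : M.IsSymm) (hdd : ∀ i, ∑ j ∈ univ.erase i, |M i j| ≤ M i i) : M.PosSemidef := by
  have hH : M.IsHermitian := hM
  refine hH.posSemidef_iff_eigenvalues_nonneg.mpr fun i => ?_
  show 0 ≤ hH.eigenvalues i
  have hμ : Module.End.HasEigenvalue (toLin' M) (hH.eigenvalues i) :=
    Module.End.hasEigenvalue_iff_mem_spectrum.mpr
      ((spectrum_toLin' M).symm ▸ hH.eigenvalues_mem_spectrum_real i)
  obtain ⟨k, hk⟩ := eigenvalue_mem_ball hμ
  rw [Metric.mem_closedBall, Real.dist_eq] at hk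
  simp only [Real.norm_eq_abs] at hk
  linarith [neg_abs_le (hH.eigenvalues i - M k k), hdd k]

theorem dotProduct_mulVec_nonpos_of_mul_eq_zero {M : Matrix ι ι ℝ}
    (hoff : ∀ i j, i ≠ j → M i j ≤ 0) {p q : ι → ℝ} (hp : 0 ≤ p) (hq : 0 ≤ q)
    (hqp : ∀ i, q i * p i = 0) : q ⬝ᵥ (M *ᵥ p) ≤ 0 := by
  simp only [dotProduct, mulVec, mul_sum]
  refine sum_nonpos fun a _ => sum_nonpos fun k _ => ?_
  rcases eq_or_ne a k with rfl | hak
  · linear_combination M a a * hqp a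
  · exact mul_nonpos_of_nonneg_of_nonpos (hq a)
      (mul_nonpos_of_nonpos_of_nonneg (hoff a k hak) (hp k))

/-- The negative part `q` of `x` satisfies `0 ≤ q ⬝ M x = q ⬝ M x⁺ - q ⬝ M q ≤ - q ⬝ M q`,
so `q = 0` by positive definiteness. -/
theorem PosDef.nonneg_of_mulVec_nonneg {M : Matrix ι ι ℝ} (hM : M.PosDef)
    (hoff : ∀ i j, i ≠ j → M i j ≤ 0) {x : ι → ℝ} (hx : 0 ≤ M *ᵥ x) : 0 ≤ x := by
  have hqp : ∀ i, x⁻ i * x⁺ i = 0 := fun i => by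
    rcases le_total (x i) 0 with h | h
    · simp [posPart_eq_zero.mpr h]
    · simp [negPart_eq_zero.mpr h]
  have hcross := dotProduct_mulVec_nonpos_of_mul_eq_zero hoff (posPart_nonneg x)
    (negPart_nonneg x) hqp
  have hsplit : x⁻ ⬝ᵥ (M *ᵥ x) = x⁻ ⬝ᵥ (M *ᵥ x⁺) - x⁻ ⬝ᵥ (M *ᵥ x⁻) := by
    rw [← dotProduct_sub, ← mulVec_sub, posPart_sub_negPart]
  have hpos : 0 ≤ x⁻ ⬝ᵥ (M *ᵥ x) := dotProduct_nonneg_of_nonneg (negPart_nonneg x) hx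
  rw [← negPart_eq_zero]
  by_contra hne
  have := hM.dotProduct_mulVec_pos hne
  rw [star_trivial] at this
  linarith

theorem PosDef.mulVec_inv_mulVec [DecidableEq ι] {M : Matrix ι ι ℝ} (hM : M.PosDef)
    (v : ι → ℝ) : M *ᵥ (M⁻¹ *ᵥ v) = v := by
  rw [mulVec_mulVec, mul_nonsing_inv _ hM.det_pos.ne'.isUnit, one_mulVec]

theorem submatrix_val_mulVec_apply [DecidableEq ι] (M : Matrix ι ι ℝ) (S : Finset ι)
    (x : ι → ℝ) (a : {k // k ∈ S}) :
    (M.submatrix (↑) (↑) *ᵥ fun b : {k // k ∈ S} => x b) a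
      = (M *ᵥ x) a - ∑ b ∈ Sᶜ, M a b * x b := by
  rw [eq_sub_iff_add_eq]
  exact (congrArg (· + _) (sum_coe_sort S fun b => M a b * x b)).trans
    (sum_add_sum_compl S _)

theorem PosDef.inv_submatrix_le_inv [DecidableEq ι] {M : Matrix ι ι ℝ} (hM : M.PosDef)
    (hoff : ∀ i j, i ≠ j → M i j ≤ 0) (S : Finset ι) (i j : {k // k ∈ S}) :
    (M.submatrix (↑) (↑))⁻¹ i j ≤ M⁻¹ i j := by
  set A := M.submatrix (Subtype.val : {k // k ∈ S} → ι) Subtype.val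
  have hA : A.PosDef := hM.submatrix Subtype.val_injective
  have hoffA : ∀ a b, a ≠ b → A a b ≤ 0 := fun a b h => hoff a b (Subtype.val_injective.ne h)
  set x := M⁻¹ *ᵥ Pi.single (j : ι) 1
  have hx : 0 ≤ x := hM.nonneg_of_mulVec_nonneg hoff
    ((hM.mulVec_inv_mulVec _).symm ▸ Pi.single_nonneg.mpr zero_le_one)
  set w : {k // k ∈ S} → ℝ := (fun b : {k // k ∈ S} => x b) - A⁻¹ *ᵥ Pi.single j 1
  have hAw : 0 ≤ A *ᵥ w := fun a => by
    have hsingle :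
        (Pi.single (j : ι) 1 : ι → ℝ) a = (Pi.single j 1 : {k // k ∈ S} → ℝ) a := by
      simp only [Pi.single_apply, Subtype.ext_iff]
    have houtside : ∑ b ∈ Sᶜ, M a b * x b ≤ 0 := sum_nonpos fun b hb =>
      mul_nonpos_of_nonpos_of_nonneg (hoff a b (ne_of_mem_of_not_mem a.2 (mem_compl.mp hb)))
        (hx b)
    rw [mulVec_sub, hA.mulVec_inv_mulVec, Pi.sub_apply, submatrix_val_mulVec_apply,
      hM.mulVec_inv_mulVec]
    simp only [Pi.zero_apply]
    linarith
  simpa [w, x] using hA.nonneg_of_mulVec_nonneg hoffA hAw i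

end Matrix

theorem sddm_submatrix_inv_monotone_general {n : ℕ} (U : ℕ)
    (L : Matrix (Fin n) (Fin n) ℝ)
    (hsymm : L.IsSymm)
    (hoff : ∀ i j, i ≠ j → L i j ≤ 0)
    (hdd : ∀ i, ∑ j ∈ Finset.univ.filter (fun j => j ≠ i), |L i j| ≤ L i i)
    (hinv : IsUnit L)
    (S : Finset (Fin n))
    (LS : Matrix {x // x ∈ S} {x // x ∈ S} ℝ)
    (hLS : LS = L.submatrix (fun a : {x // x ∈ S} => (a : Fin n)) (fun a : {x // x ∈ S} => (a : Fin n))) :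
    IsUnit LS ∧
      ∀ i j : {x // x ∈ S},
        LS⁻¹ i j ≤ L⁻¹ (i : Fin n) (j : Fin n) ∧
        ∀ d : ℝ, ((n : ℝ) * U) ^ ((2 : ℝ) - d) ≤ LS⁻¹ i j →
          ((n : ℝ) * U) ^ ((2 : ℝ) - d) ≤ L⁻¹ (i : Fin n) (j : Fin n) := by
  subst hLS
  simp only [filter_ne'] at hdd
  have hPD : L.PosDef :=
    (posSemidef_of_isSymm_of_sum_abs_le_diag hsymm hdd).posDef_iff_isUnit.mpr hinv
  have hmono := hPD.inv_submatrix_le_inv hoff S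
  exact ⟨(hPD.submatrix Subtype.val_injective).isUnit,
    fun i j => ⟨hmono i j, fun d hd => hd.trans (hmono i j)⟩⟩

/-- For an `n × n` invertible SDDM matrix `L` (with integer entries in
`[-U, U]`, `U ≥ 2`, `n ≥ 2`) and a nonempty subset `S ⊆ [n]`, the principal submatrix
`L_{S,S}` is invertible, its inverse is entrywise dominated by `L⁻¹`
(`((L_{S,S})⁻¹)ᵢⱼ ≤ (L⁻¹)ᵢⱼ` for `i, j ∈ S`), and consequently the probability distances
satisfy `D_L(i, j) ≤ D_{L_{S,S}}(i, j)`; by the characterization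
`D_M(i, j) ≤ d ↔ (M⁻¹)ᵢⱼ ≥ (nU)^{2-d}`, the latter reads: for every `d`, if
`((L_{S,S})⁻¹)ᵢⱼ ≥ (nU)^{2-d}` then `(L⁻¹)ᵢⱼ ≥ (nU)^{2-d}`. -/
theorem sddm_submatrix_inv_monotone {n : ℕ} (hn : 2 ≤ n) (U : ℕ) (hU : 2 ≤ U)
    (L : Matrix (Fin n) (Fin n) ℝ)
    (hsymm : L.IsSymm)
    (hoff : ∀ i j, i ≠ j → L i j ≤ 0)
    (hdiag : ∀ i, 0 < L i i)
    (hdd : ∀ i, ∑ j ∈ Finset.univ.filter (fun j => j ≠ i), |L i j| ≤ L i i)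
    (hint : ∀ i j, ∃ z : ℤ, L i j = (z : ℝ))
    (hbd : ∀ i j, |L i j| ≤ (U : ℝ))
    (hinv : IsUnit L)
    (S : Finset (Fin n)) (hS : S.Nonempty)
    (LS : Matrix {x // x ∈ S} {x // x ∈ S} ℝ)
    (hLS : LS = L.submatrix (fun a : {x // x ∈ S} => (a : Fin n)) (fun a : {x // x ∈ S} => (a : Fin n))) :
    IsUnit LS ∧
      ∀ i j : {x // x ∈ S},
        LS⁻¹ i j ≤ L⁻¹ (i : Fin n) (j : Fin n) ∧
        ∀ d : ℝ, ((n : ℝ) * U) ^ ((2 : ℝ) - d) ≤ LS⁻¹ i j →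
          ((n : ℝ) * U) ^ ((2 : ℝ) - d) ≤ L⁻¹ (i : Fin n) (j : Fin n) :=
  sddm_submatrix_inv_monotone_general U L hsymm hoff hdd hinv S LS hLS
end

section
/- Let L be an n×n invertible SDDM matrix with integer entries in [-U, U] (U ≥ 2, n ≥ 2), let b be a nonnegative n-dimensional vector, let P := {i : b_i > 0}, and let T ⊆ [n] \ P. Suppose that for some d > 0, the probability distance satisfies D_L(u, v) ≥ d for all u ∈ P and v ∈ T (equivalently, (L⁻¹)_{uv} ≤ (nU)^{2-d} for all such pairs). Let x be the n-dimensional vector that agrees with (L_{-T,-T})⁻¹ b_{-T} on [n] \ T and is zero on T. Then ‖L⁻¹ b − x‖₂ ≤ (nU)^{5-d} ‖b‖₂. -/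
section sddmAux
open Matrix
variable {ι : Type*} [Fintype ι] [DecidableEq ι]

lemma sddm_sum_compl_subtype (T : Finset ι) (f : ι → ℝ) :
    ∑ i, f i = ∑ t ∈ T, f t + ∑ c : {x : ι // x ∉ T}, f c.1 := by
  rw [← Finset.sum_add_sum_compl T f]
  congr 1
  exact Finset.sum_subtype Tᶜ (fun x => Finset.mem_compl) f

lemma sddm_quad_nonneg (A : Matrix ι ι ℝ)
    (hs : ∀ i j, A i j = A j i)
    (hdd : ∀ i, ∑ j ∈ Finset.univ.filter (fun j => j ≠ i), |A i j| ≤ A i i)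
    (x : ι → ℝ) : 0 ≤ x ⬝ᵥ A.mulVec x := by
  have hE : x ⬝ᵥ A.mulVec x = ∑ i, ∑ j, x i * (A i j * x j) := by
    simp [dotProduct, Matrix.mulVec, Finset.mul_sum]
  have hsplit : ∀ i, ∑ j, x i * (A i j * x j)
      = x i * (A i i * x i) + ∑ j ∈ Finset.univ.filter (fun j => j ≠ i), x i * (A i j * x j) := by
    intro i
    rw [← Finset.sum_filter_add_sum_filter_not Finset.univ (fun j => j = i)]
    congr 1
    rw [Finset.filter_eq', if_pos (Finset.mem_univ i), Finset.sum_singleton]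
  have habs : ∀ i j, -(|A i j| * ((x i ^ 2 + x j ^ 2) / 2)) ≤ x i * (A i j * x j) := by
    intro i j
    have h2 : |x i| * |x j| ≤ (x i ^ 2 + x j ^ 2) / 2 := by
      nlinarith [sq_nonneg (|x i| - |x j|), sq_abs (x i), sq_abs (x j)]
    have h1 : |x i * (A i j * x j)| ≤ |A i j| * ((x i ^ 2 + x j ^ 2) / 2) := by
      rw [abs_mul, abs_mul]
      calc |x i| * (|A i j| * |x j|) = |A i j| * (|x i| * |x j|) := by ring
        _ ≤ |A i j| * ((x i ^ 2 + x j ^ 2) / 2) :=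
          mul_le_mul_of_nonneg_left h2 (abs_nonneg _)
    linarith [neg_abs_le (x i * (A i j * x j))]
  have hQ : ∀ i, A i i * x i ^ 2
      - ∑ j ∈ Finset.univ.filter (fun j => j ≠ i), |A i j| * ((x i ^ 2 + x j ^ 2) / 2)
      ≤ ∑ j, x i * (A i j * x j) := by
    intro i
    rw [hsplit i]
    have h := Finset.sum_le_sum (s := Finset.univ.filter (fun j => j ≠ i))
      (fun j _ => habs i j)
    rw [Finset.sum_neg_distrib] at h
    have e : x i * (A i i * x i) = A i i * x i ^ 2 := by ring
    linarith
  have hswap : (∑ i, ∑ j ∈ Finset.univ.filter (fun j => j ≠ i), |A i j| * x j ^ 2)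
      = ∑ i, ∑ j ∈ Finset.univ.filter (fun j => j ≠ i), |A i j| * x i ^ 2 := by
    calc (∑ i, ∑ j ∈ Finset.univ.filter (fun j => j ≠ i), |A i j| * x j ^ 2)
        = ∑ i, ∑ j, if j ≠ i then |A i j| * x j ^ 2 else 0 := by
          simp_rw [Finset.sum_filter]
      _ = ∑ j, ∑ i, if j ≠ i then |A i j| * x j ^ 2 else 0 := Finset.sum_comm
      _ = ∑ i, ∑ j, if i ≠ j then |A j i| * x i ^ 2 else 0 := rfl
      _ = ∑ i, ∑ j, if j ≠ i then |A i j| * x i ^ 2 else 0 := by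
          apply Finset.sum_congr rfl; intro i _
          apply Finset.sum_congr rfl; intro j _
          rw [hs j i]
          by_cases h : i = j
          · simp [h]
          · rw [if_pos h, if_pos (Ne.symm h)]
      _ = ∑ i, ∑ j ∈ Finset.univ.filter (fun j => j ≠ i), |A i j| * x i ^ 2 := by
          simp_rw [Finset.sum_filter]
  have hhalf : ∀ i, ∑ j ∈ Finset.univ.filter (fun j => j ≠ i), |A i j| * ((x i ^ 2 + x j ^ 2) / 2)
      = ((∑ j ∈ Finset.univ.filter (fun j => j ≠ i), |A i j| * x i ^ 2)
        + ∑ j ∈ Finset.univ.filter (fun j => j ≠ i), |A i j| * x j ^ 2) / 2 := by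
    intro i
    rw [← Finset.sum_add_distrib, Finset.sum_div]
    apply Finset.sum_congr rfl; intro j _; ring
  have hsum : ∑ i, (A i i * x i ^ 2
      - ∑ j ∈ Finset.univ.filter (fun j => j ≠ i), |A i j| * ((x i ^ 2 + x j ^ 2) / 2))
      ≤ x ⬝ᵥ A.mulVec x := by
    rw [hE]; exact Finset.sum_le_sum fun i _ => hQ i
  have hS : ∑ i, (A i i * x i ^ 2
      - ∑ j ∈ Finset.univ.filter (fun j => j ≠ i), |A i j| * ((x i ^ 2 + x j ^ 2) / 2))
      = (∑ i, A i i * x i ^ 2)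
        - ((∑ i, ∑ j ∈ Finset.univ.filter (fun j => j ≠ i), |A i j| * x i ^ 2)
          + ∑ i, ∑ j ∈ Finset.univ.filter (fun j => j ≠ i), |A i j| * x j ^ 2) / 2 := by
    rw [Finset.sum_sub_distrib]
    congr 1
    calc ∑ i, ∑ j ∈ Finset.univ.filter (fun j => j ≠ i), |A i j| * ((x i ^ 2 + x j ^ 2) / 2)
        = ∑ i, ((∑ j ∈ Finset.univ.filter (fun j => j ≠ i), |A i j| * x i ^ 2)
          + ∑ j ∈ Finset.univ.filter (fun j => j ≠ i), |A i j| * x j ^ 2) / 2 :=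
          Finset.sum_congr rfl fun i _ => hhalf i
      _ = _ := by rw [← Finset.sum_div, Finset.sum_add_distrib]
  have hS1 : (∑ i, A i i * x i ^ 2)
      - (∑ i, ∑ j ∈ Finset.univ.filter (fun j => j ≠ i), |A i j| * x i ^ 2)
      = ∑ i, (A i i - ∑ j ∈ Finset.univ.filter (fun j => j ≠ i), |A i j|) * x i ^ 2 := by
    rw [← Finset.sum_sub_distrib]
    apply Finset.sum_congr rfl; intro i _
    rw [sub_mul, Finset.sum_mul]
  have hpos : 0 ≤ ∑ i, (A i i - ∑ j ∈ Finset.univ.filter (fun j => j ≠ i), |A i j|) * x i ^ 2 :=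
    Finset.sum_nonneg fun i _ => mul_nonneg (sub_nonneg.2 (hdd i)) (sq_nonneg _)
  rw [hS, hswap] at hsum
  linarith [hsum, hS1 ▸ hpos]

lemma sddm_pd (A : Matrix ι ι ℝ) (hs : Aᵀ = A)
    (hpsd : ∀ v : ι → ℝ, 0 ≤ v ⬝ᵥ A.mulVec v)
    (hker : ∀ v : ι → ℝ, A.mulVec v = 0 → v = 0) :
    ∀ v : ι → ℝ, v ≠ 0 → 0 < v ⬝ᵥ A.mulVec v := by
  intro v hv
  rcases (hpsd v).lt_or_eq with h | h
  · exact h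
  exfalso
  apply hv
  apply hker
  have hsym2 : ∀ y : ι → ℝ, v ⬝ᵥ A.mulVec y = (A.mulVec v) ⬝ᵥ y := by
    intro y
    rw [Matrix.dotProduct_mulVec]
    congr 1
    rw [← Matrix.mulVec_transpose, hs]
  have hb : ∀ y : ι → ℝ, v ⬝ᵥ A.mulVec y = 0 := by
    intro y
    by_contra hbne
    set a : ℝ := y ⬝ᵥ A.mulVec y with ha'
    set c : ℝ := v ⬝ᵥ A.mulVec y with hc'
    have ha : 0 ≤ a := hpsd y
    set t : ℝ := -c / (a + 1) with ht
    have hquad : 0 ≤ (v + t • y) ⬝ᵥ A.mulVec (v + t • y) := hpsd _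
    have hyv : y ⬝ᵥ A.mulVec v = c := by
      rw [hc', hsym2 y]
      exact dotProduct_comm _ _
    have hexp : (v + t • y) ⬝ᵥ A.mulVec (v + t • y)
        = v ⬝ᵥ A.mulVec v + t * c + t * c + t * t * a := by
      rw [Matrix.mulVec_add, Matrix.mulVec_smul, dotProduct_add,
        add_dotProduct, add_dotProduct, dotProduct_smul,
        smul_dotProduct, smul_dotProduct, dotProduct_smul,
        hyv, ← hc', ← ha']
      simp only [smul_eq_mul]
      ring
    rw [hexp, ← h] at hquad
    have ha1 : (0:ℝ) < a + 1 := by linarith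
    have hcc : (0:ℝ) < c ^ 2 := by positivity
    have hval : 0 + t * c + t * c + t * t * a = -(c ^ 2 * (a + 2)) / (a + 1) ^ 2 := by
      rw [ht]; field_simp; ring
    rw [hval] at hquad
    have : -(c ^ 2 * (a + 2)) / (a + 1) ^ 2 < 0 := by
      apply div_neg_of_neg_of_pos
      · nlinarith
      · positivity
    linarith
  have h2 := hb (A.mulVec v)
  rw [hsym2] at h2
  funext i
  have := (Finset.sum_eq_zero_iff_of_nonneg
    (fun j (_ : j ∈ Finset.univ) => mul_self_nonneg (A.mulVec v j))).mp ?_ i (Finset.mem_univ i)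
  · exact mul_self_eq_zero.mp this
  · simpa [dotProduct] using h2

lemma sddm_key (A : Matrix ι ι ℝ)
    (hoff : ∀ i j, i ≠ j → A i j ≤ 0)
    (hpd : ∀ v : ι → ℝ, v ≠ 0 → 0 < v ⬝ᵥ A.mulVec v)
    (x : ι → ℝ) (hx : ∀ i, 0 ≤ A.mulVec x i) : ∀ i, 0 ≤ x i := by
  set m : ι → ℝ := fun i => max (-x i) 0 with hm
  set p : ι → ℝ := fun i => max (x i) 0 with hp
  have hmp : m = p - x := by
    funext i
    simp only [hm, hp, Pi.sub_apply]
    rcases le_total (x i) 0 with h | h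
    · rw [max_eq_left (neg_nonneg.mpr h), max_eq_right h]; ring
    · rw [max_eq_right (neg_nonpos.mpr h), max_eq_left h]; ring
  have hm0 : ∀ i, 0 ≤ m i := fun i => le_max_right _ _
  have hp0 : ∀ i, 0 ≤ p i := fun i => le_max_right _ _
  have hmpz : ∀ i, m i * p i = 0 := by
    intro i
    rcases le_total (x i) 0 with h | h
    · simp [hp, max_eq_right h]
    · simp [hm, max_eq_right (neg_nonpos.mpr h)]
  have hmm : m ⬝ᵥ A.mulVec m ≤ 0 := by
    have hvec : A.mulVec m = A.mulVec p - A.mulVec x := by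
      rw [hmp, Matrix.mulVec_sub]
    rw [hvec, dotProduct_sub]
    have h1 : m ⬝ᵥ A.mulVec p ≤ 0 := by
      have e : m ⬝ᵥ A.mulVec p = ∑ i, ∑ j, m i * (A i j * p j) := by
        simp [dotProduct, Matrix.mulVec, Finset.mul_sum]
      rw [e]
      apply Finset.sum_nonpos; intro i _
      apply Finset.sum_nonpos; intro j _
      by_cases h : i = j
      · subst h
        rw [show m i * (A i i * p i) = A i i * (m i * p i) from by ring, hmpz i, mul_zero]
      · have h3 := hoff i j h
        have h4 := mul_nonneg (hm0 i) (hp0 j)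
        nlinarith
    have h2 : 0 ≤ m ⬝ᵥ A.mulVec x :=
      Finset.sum_nonneg fun i _ => mul_nonneg (hm0 i) (hx i)
    linarith
  by_contra hcon
  push_neg at hcon
  obtain ⟨i, hi⟩ := hcon
  have hmne : m ≠ 0 := by
    intro h0
    have h1 : m i = 0 := congrFun h0 i
    have h2 : -x i ≤ m i := le_max_left _ _
    rw [h1] at h2
    linarith
  exact absurd (hpd m hmne) (not_lt.mpr hmm)

end sddmAux

open Matrix in

/-- Let `L` be an `n × n` invertible SDDM matrix with integer entries in
`[-U, U]` (`U ≥ 2`, `n ≥ 2`), `b` a nonnegative vector with positive-entry set `P`, and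
`T ⊆ [n] \ P`.  Suppose for some `d > 0` the probability distance satisfies
`D_L(u, v) ≥ d` for all `u ∈ P, v ∈ T` (equivalently `(L⁻¹)ᵤᵥ ≤ (nU)^{2-d}`).  Let `x` be
the vector agreeing with `(L_{-T,-T})⁻¹ b_{-T}` on `[n] \ T` and zero on `T`.  Then
`‖L⁻¹ b − x‖₂ ≤ (nU)^{5-d} ‖b‖₂`. -/

theorem sddm_remove_far_vertices {n : ℕ} (hn : 2 ≤ n) (U : ℕ) (hU : 2 ≤ U)
    (L : Matrix (Fin n) (Fin n) ℝ)
    (hsymm : L.IsSymm)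
    (hoff : ∀ i j, i ≠ j → L i j ≤ 0)
    (hdiag : ∀ i, 0 < L i i)
    (hdd : ∀ i, ∑ j ∈ Finset.univ.filter (fun j => j ≠ i), |L i j| ≤ L i i)
    (hint : ∀ i j, ∃ z : ℤ, L i j = (z : ℝ))
    (hbd : ∀ i j, |L i j| ≤ (U : ℝ))
    (hinv : IsUnit L)
    (b : Fin n → ℝ) (hb : ∀ i, 0 ≤ b i)
    (T : Finset (Fin n)) (hT : ∀ i ∈ T, ¬ 0 < b i)
    (d : ℝ) (hd : 0 < d)
    (hfar : ∀ u v, 0 < b u → v ∈ T → L⁻¹ u v ≤ ((n : ℝ) * U) ^ ((2 : ℝ) - d))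
    -- the restriction of `b` to `[n] \ T`
    (bC : {x : Fin n // x ∉ T} → ℝ) (hbC : bC = fun a : {x : Fin n // x ∉ T} => b a.1)
    -- `L_{-T,-T}`
    (M : Matrix {x : Fin n // x ∉ T} {x : Fin n // x ∉ T} ℝ)
    (hM : M = L.submatrix (fun a : {x : Fin n // x ∉ T} => (a : Fin n))
      (fun a : {x : Fin n // x ∉ T} => (a : Fin n)))
    -- `x` agrees with `(L_{-T,-T})⁻¹ b_{-T}` on `[n] \ T` and vanishes on `T`
    (x : Fin n → ℝ)
    (hx : x = fun i => if h : i ∈ T then 0 else M⁻¹.mulVec bC ⟨i, h⟩) :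
    Real.sqrt (∑ i, (L⁻¹.mulVec b i - x i) ^ 2)
      ≤ ((n : ℝ) * U) ^ ((5 : ℝ) - d) * Real.sqrt (∑ i, b i ^ 2) := by
  have hnR : (2:ℝ) ≤ (n:ℝ) := by exact_mod_cast hn
  have hUR : (2:ℝ) ≤ (U:ℝ) := by exact_mod_cast hU
  have hnU : (0:ℝ) < (n:ℝ) * U := by nlinarith
  set s : ℝ := (n:ℝ) * U with hs
  set K : ℝ := s ^ ((2:ℝ) - d) with hKdef
  have hK0 : 0 < K := Real.rpow_pos_of_pos hnU _
  have hsym' : ∀ i j, L i j = L j i := fun i j => (hsymm.apply i j).symm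
  have hdet : IsUnit L.det := (Matrix.isUnit_iff_isUnit_det L).mp hinv
  set y : Fin n → ℝ := L⁻¹.mulVec b with hy
  have hLy : L.mulVec y = b := by
    rw [hy, Matrix.mulVec_mulVec, Matrix.mul_nonsing_inv _ hdet, Matrix.one_mulVec]
  have hpsd : ∀ v : Fin n → ℝ, 0 ≤ v ⬝ᵥ L.mulVec v := sddm_quad_nonneg L hsym' hdd
  have hker : ∀ v, L.mulVec v = 0 → v = 0 := by
    intro v hv
    have h1 : v = (L⁻¹ * L).mulVec v := by
      rw [Matrix.nonsing_inv_mul _ hdet, Matrix.one_mulVec]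
    rw [h1, ← Matrix.mulVec_mulVec, hv, Matrix.mulVec_zero]
  have hLpd := sddm_pd L hsymm.eq hpsd hker
  have hy0 : ∀ i, 0 ≤ y i := sddm_key L hoff hLpd y (by rw [hLy]; exact hb)
  have hbT : ∀ t ∈ T, b t = 0 := fun t ht => le_antisymm (not_lt.mp (hT t ht)) (hb t)
  have hinvsym : ∀ i j, L⁻¹ i j = L⁻¹ j i := by
    intro i j
    have h1 : L⁻¹ᵀ = L⁻¹ := by rw [Matrix.transpose_nonsing_inv, hsymm.eq]
    exact (congrFun (congrFun h1 j) i)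
  set Sb : ℝ := ∑ u, b u with hSb
  have hSb0 : 0 ≤ Sb := Finset.sum_nonneg fun u _ => hb u
  set β : ℝ := K * Sb with hβ
  have hβ0 : 0 ≤ β := mul_nonneg hK0.le hSb0
  have hyT : ∀ t ∈ T, y t ≤ β := by
    intro t ht
    have e : y t = ∑ u, L⁻¹ t u * b u := rfl
    rw [e, hβ, hSb, Finset.mul_sum]
    apply Finset.sum_le_sum
    intro u _
    rcases (hb u).lt_or_eq with hbu | hbu
    · have h2 : L⁻¹ t u ≤ K := by rw [hinvsym t u]; exact hfar u t hbu ht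
      exact mul_le_mul_of_nonneg_right h2 hbu.le
    · rw [← hbu, mul_zero, mul_zero]
  have hMoff : ∀ (i j : {z : Fin n // z ∉ T}), i ≠ j → M i j ≤ 0 := by
    intro i j hij
    rw [hM]
    exact hoff i.1 j.1 fun h => hij (Subtype.ext h)
  have hMapp : ∀ (c c' : {z : Fin n // z ∉ T}), M c c' = L c.1 c'.1 := by
    intro c c'; rw [hM]; simp [Matrix.submatrix_apply]
  have hext : ∀ v : {z : Fin n // z ∉ T} → ℝ,
      v ⬝ᵥ M.mulVec v
        = (fun i => if h : i ∈ T then 0 else v ⟨i, h⟩) ⬝ᵥ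
          L.mulVec (fun i => if h : i ∈ T then 0 else v ⟨i, h⟩) := by
    intro v
    set w : Fin n → ℝ := fun i => if h : i ∈ T then 0 else v ⟨i, h⟩ with hw
    have hwT : ∀ t ∈ T, w t = 0 := by intro t ht; simp [hw, ht]
    have hwc : ∀ c : {z : Fin n // z ∉ T}, w c.1 = v c := by
      intro c; simp [hw, c.2]
    have hinner : ∀ i : Fin n, L.mulVec w i = ∑ c' : {z : Fin n // z ∉ T}, L i c'.1 * v c' := by
      intro i
      have e0 : L.mulVec w i = ∑ j, L i j * w j := rfl
      rw [e0, sddm_sum_compl_subtype T (fun j => L i j * w j)]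
      have hz : ∑ t ∈ T, L i t * w t = 0 :=
        Finset.sum_eq_zero fun t ht => by rw [hwT t ht, mul_zero]
      rw [hz, zero_add]
      exact Finset.sum_congr rfl fun c _ => by rw [hwc c]
    calc v ⬝ᵥ M.mulVec v = ∑ c, v c * M.mulVec v c := rfl
      _ = ∑ c : {z : Fin n // z ∉ T}, w c.1 * L.mulVec w c.1 := by
          apply Finset.sum_congr rfl; intro c _
          rw [hwc c, hinner c.1]
          congr 1
          show (∑ c' : {z : Fin n // z ∉ T}, M c c' * v c')
            = ∑ c' : {z : Fin n // z ∉ T}, L c.1 c'.1 * v c'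
          exact Finset.sum_congr rfl fun c' _ => by rw [hMapp]
      _ = ∑ i, w i * L.mulVec w i := by
          rw [sddm_sum_compl_subtype T (fun i => w i * L.mulVec w i)]
          have hz : ∑ t ∈ T, w t * L.mulVec w t = 0 :=
            Finset.sum_eq_zero fun t ht => by rw [hwT t ht, zero_mul]
          rw [hz, zero_add]
      _ = w ⬝ᵥ L.mulVec w := rfl
  have hMpd : ∀ v : {z : Fin n // z ∉ T} → ℝ, v ≠ 0 → 0 < v ⬝ᵥ M.mulVec v := by
    intro v hv
    rw [hext v]
    apply hLpd
    intro h0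
    apply hv
    funext c
    have h1 : (if h : c.1 ∈ T then 0 else v ⟨c.1, h⟩) = (0:ℝ) := congrFun h0 c.1
    rw [dif_neg c.2] at h1
    exact h1
  have hMker : ∀ v, M.mulVec v = 0 → v = 0 := by
    intro v hv
    by_contra hne
    have h1 := hMpd v hne
    rw [hv, dotProduct_zero] at h1
    exact lt_irrefl 0 h1
  have hMdet : IsUnit M.det := by
    refine isUnit_iff_ne_zero.mpr fun h0 => ?_
    obtain ⟨v, hvne, hv0⟩ := Matrix.exists_mulVec_eq_zero_iff.mpr h0
    exact hvne (hMker v hv0)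
  have hMxC : M.mulVec (M⁻¹.mulVec bC) = bC := by
    rw [Matrix.mulVec_mulVec, Matrix.mul_nonsing_inv _ hMdet, Matrix.one_mulVec]
  set vb : {z : Fin n // z ∉ T} → ℝ := fun c => y c.1 - x c.1 with hvb
  have hxc : ∀ c : {z : Fin n // z ∉ T}, x c.1 = M⁻¹.mulVec bC c := by
    intro c
    rw [hx]
    exact dif_neg c.2
  have hxT : ∀ t ∈ T, x t = 0 := by
    intro t ht
    rw [hx]
    exact dif_pos ht
  have hMvb : ∀ c : {z : Fin n // z ∉ T}, M.mulVec vb c = ∑ t ∈ T, (-L c.1 t) * y t := by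
    intro c
    have h1 : M.mulVec vb c = M.mulVec (fun c' => y c'.1) c - M.mulVec (fun c' => x c'.1) c := by
      have e : vb = (fun c' : {z : Fin n // z ∉ T} => y c'.1) - (fun c' => x c'.1) := rfl
      rw [e, Matrix.mulVec_sub]
      rfl
    have h2 : M.mulVec (fun c' => y c'.1) c = b c.1 - ∑ t ∈ T, L c.1 t * y t := by
      have e1 : ∑ j, L c.1 j * y j = b c.1 := congrFun hLy c.1
      rw [sddm_sum_compl_subtype T (fun j => L c.1 j * y j)] at e1
      have e2 : M.mulVec (fun c' => y c'.1) c
          = ∑ c' : {z : Fin n // z ∉ T}, L c.1 c'.1 * y c'.1 := by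
        show (∑ c' : {z : Fin n // z ∉ T}, M c c' * y c'.1)
          = ∑ c' : {z : Fin n // z ∉ T}, L c.1 c'.1 * y c'.1
        exact Finset.sum_congr rfl fun c' _ => by rw [hMapp]
      rw [e2]
      linarith [e1]
    have h3 : M.mulVec (fun c' => x c'.1) c = b c.1 := by
      have e : (fun c' : {z : Fin n // z ∉ T} => x c'.1) = M⁻¹.mulVec bC :=
        funext fun c' => hxc c'
      rw [e, hMxC, hbC]
    rw [h1, h2, h3]
    have h4 : ∑ t ∈ T, (-L c.1 t) * y t = -∑ t ∈ T, L c.1 t * y t := by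
      rw [← Finset.sum_neg_distrib]
      exact Finset.sum_congr rfl fun t _ => by ring
    rw [h4]
    ring
  have hvb0 : ∀ c, 0 ≤ vb c := by
    apply sddm_key M hMoff hMpd
    intro c
    rw [hMvb c]
    apply Finset.sum_nonneg
    intro t ht
    have hct : c.1 ≠ t := fun h => c.2 (h ▸ ht)
    exact mul_nonneg (neg_nonneg.mpr (hoff c.1 t hct)) (hy0 t)
  have hrow0 : ∀ i, 0 ≤ ∑ j, L i j := by
    intro i
    have h1 : ∑ j, L i j = L i i + ∑ j ∈ Finset.univ.filter (fun j => j ≠ i), L i j := by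
      rw [← Finset.sum_filter_add_sum_filter_not Finset.univ (fun j => j = i)]
      congr 1
      rw [Finset.filter_eq', if_pos (Finset.mem_univ i), Finset.sum_singleton]
    have h2 : -∑ j ∈ Finset.univ.filter (fun j => j ≠ i), |L i j|
        ≤ ∑ j ∈ Finset.univ.filter (fun j => j ≠ i), L i j := by
      rw [← Finset.sum_neg_distrib]
      exact Finset.sum_le_sum fun j _ => neg_abs_le _
    linarith [h1, h2, hdd i]
  have hwkey : ∀ c, 0 ≤ M.mulVec (fun c' => β - vb c') c := by
    intro c
    have e1 : M.mulVec (fun c' => β - vb c') c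
        = β * (∑ c' : {z : Fin n // z ∉ T}, M c c') - M.mulVec vb c := by
      show (∑ c' : {z : Fin n // z ∉ T}, M c c' * (β - vb c'))
          = β * (∑ c' : {z : Fin n // z ∉ T}, M c c')
            - ∑ c' : {z : Fin n // z ∉ T}, M c c' * vb c'
      rw [Finset.mul_sum, ← Finset.sum_sub_distrib]
      exact Finset.sum_congr rfl fun c' _ => by ring
    have e3 : ∑ c' : {z : Fin n // z ∉ T}, M c c' = ∑ c' : {z : Fin n // z ∉ T}, L c.1 c'.1 :=
      Finset.sum_congr rfl fun c' _ => hMapp c c'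
    have e2 : ∑ c' : {z : Fin n // z ∉ T}, M c c' = (∑ j, L c.1 j) - ∑ t ∈ T, L c.1 t := by
      have hsp := sddm_sum_compl_subtype T (fun j => L c.1 j)
      rw [e3]
      linarith [hsp]
    have e4 : M.mulVec vb c ≤ β * ∑ t ∈ T, (-L c.1 t) := by
      rw [hMvb c, Finset.mul_sum]
      apply Finset.sum_le_sum
      intro t ht
      have hct : c.1 ≠ t := fun h => c.2 (h ▸ ht)
      have hL0 : 0 ≤ -L c.1 t := neg_nonneg.mpr (hoff c.1 t hct)
      calc (-L c.1 t) * y t ≤ (-L c.1 t) * β := mul_le_mul_of_nonneg_left (hyT t ht) hL0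
        _ = β * (-L c.1 t) := mul_comm _ _
    have e5 : β * ∑ t ∈ T, (-L c.1 t) ≤ β * (∑ c' : {z : Fin n // z ∉ T}, M c c') := by
      apply mul_le_mul_of_nonneg_left _ hβ0
      rw [e2]
      have h6 : ∑ t ∈ T, (-L c.1 t) = -∑ t ∈ T, L c.1 t := by
        rw [← Finset.sum_neg_distrib]
      rw [h6]
      linarith [hrow0 c.1]
    rw [e1]
    linarith [e4, e5]
  have hvbβ : ∀ c, vb c ≤ β := by
    have hw := sddm_key M hMoff hMpd (fun c => β - vb c) hwkey
    intro c
    have h1 := hw c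
    linarith
  have hterm : ∀ i, (y i - x i) ^ 2 ≤ β ^ 2 := by
    intro i
    by_cases hiT : i ∈ T
    · rw [hxT i hiT, sub_zero]
      exact pow_le_pow_left₀ (hy0 i) (hyT i hiT) 2
    · have hc : y i - x i = vb ⟨i, hiT⟩ := rfl
      rw [hc]
      exact pow_le_pow_left₀ (hvb0 _) (hvbβ _) 2
  have hsums : ∑ i, (y i - x i) ^ 2 ≤ (n : ℝ) * β ^ 2 := by
    calc ∑ i, (y i - x i) ^ 2 ≤ ∑ _i : Fin n, β ^ 2 := Finset.sum_le_sum fun i _ => hterm i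
      _ = (n : ℝ) * β ^ 2 := by
        rw [Finset.sum_const, Finset.card_univ, Fintype.card_fin, nsmul_eq_mul]
  have hL1 : Real.sqrt (∑ i, (y i - x i) ^ 2) ≤ Real.sqrt (n : ℝ) * β := by
    have h1 : Real.sqrt (∑ i, (y i - x i) ^ 2) ≤ Real.sqrt ((n : ℝ) * β ^ 2) :=
      Real.sqrt_le_sqrt hsums
    rw [Real.sqrt_mul (by positivity : (0:ℝ) ≤ (n:ℝ)) (β ^ 2), Real.sqrt_sq hβ0] at h1
    exact h1
  set B : ℝ := Real.sqrt (∑ i, b i ^ 2) with hB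
  have hB0 : 0 ≤ B := Real.sqrt_nonneg _
  have hbu : ∀ u, b u ≤ B := by
    intro u
    calc b u = Real.sqrt (b u ^ 2) := (Real.sqrt_sq (hb u)).symm
      _ ≤ B := Real.sqrt_le_sqrt
          (Finset.single_le_sum (fun i _ => sq_nonneg (b i)) (Finset.mem_univ u))
  have hSbB : Sb ≤ (n : ℝ) * B := by
    rw [hSb]
    calc ∑ u, b u ≤ ∑ _u : Fin n, B := Finset.sum_le_sum fun u _ => hbu u
      _ = (n : ℝ) * B := by
        rw [Finset.sum_const, Finset.card_univ, Fintype.card_fin, nsmul_eq_mul]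
  have hsqn : Real.sqrt (n:ℝ) ≤ (n:ℝ) := by
    have h1 : ((n:ℝ)) ≤ (n:ℝ) ^ 2 := by nlinarith
    calc Real.sqrt (n:ℝ) ≤ Real.sqrt ((n:ℝ) ^ 2) := Real.sqrt_le_sqrt h1
      _ = (n:ℝ) := Real.sqrt_sq (by positivity)
  have hrpow : s ^ ((5:ℝ) - d) = s ^ (3:ℕ) * K := by
    rw [hKdef, ← Real.rpow_natCast s 3, ← Real.rpow_add hnU]
    congr 1
    push_cast
    ring
  calc Real.sqrt (∑ i, (y i - x i) ^ 2) ≤ Real.sqrt (n:ℝ) * β := hL1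
    _ = Real.sqrt (n:ℝ) * (K * Sb) := by rw [hβ]
    _ ≤ Real.sqrt (n:ℝ) * (K * ((n:ℝ) * B)) := by
        apply mul_le_mul_of_nonneg_left _ (Real.sqrt_nonneg _)
        exact mul_le_mul_of_nonneg_left hSbB hK0.le
    _ = (Real.sqrt (n:ℝ) * (n:ℝ) * K) * B := by ring
    _ ≤ (s ^ (3:ℕ) * K) * B := by
        apply mul_le_mul_of_nonneg_right _ hB0
        apply mul_le_mul_of_nonneg_right _ hK0.le
        have h2 : s ^ (3:ℕ) = (n:ℝ) ^ 3 * (U:ℝ) ^ 3 := by rw [hs]; ring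
        rw [h2]
        have hn0 : (0:ℝ) ≤ (n:ℝ) := by positivity
        have e1 : Real.sqrt (n:ℝ) * (n:ℝ) ≤ (n:ℝ) * (n:ℝ) :=
          mul_le_mul_of_nonneg_right hsqn hn0
        have hU1 : (1:ℝ) ≤ (U:ℝ) ^ 3 := one_le_pow₀ (by linarith)
        have hn3 : (n:ℝ) * (n:ℝ) ≤ (n:ℝ) ^ 3 := by
          nlinarith [mul_le_mul_of_nonneg_left hnR (mul_nonneg hn0 hn0), mul_nonneg hn0 hn0]
        have hn4 : (n:ℝ) ^ 3 ≤ (n:ℝ) ^ 3 * (U:ℝ) ^ 3 :=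
          le_mul_of_one_le_right (by positivity) hU1
        linarith
    _ = s ^ ((5:ℝ) - d) * B := by rw [hrpow]
end

section
/- Let L be an n×n invertible SDDM matrix with integer entries in [-U, U] (U ≥ 2, n ≥ 2), and let b be a nonnegative n-dimensional vector. Then for any two indices i, j ∈ [n] with L_{ij} ≠ 0, one has (nU)^{-1} · (L⁻¹ b)_j ≤ (L⁻¹ b)_i ≤ nU · (L⁻¹ b)_j. -/
lemma sddm_inv_nonneg {n : ℕ} (L : Matrix (Fin n) (Fin n) ℝ)
    (hsymm : L.IsSymm)
    (hoff : ∀ i j, i ≠ j → L i j ≤ 0)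
    (hdd : ∀ i, ∑ j ∈ Finset.univ.filter (fun j => j ≠ i), |L i j| ≤ L i i)
    (hinv : IsUnit L)
    (x : Fin n → ℝ) (hb : ∀ i, 0 ≤ L.mulVec x i) :
    ∀ k, 0 ≤ x k := by
  by_contra h
  push_neg at h
  obtain ⟨k0, hk0⟩ := h
  obtain ⟨m, -, hm⟩ := Finset.exists_min_image Finset.univ x ⟨k0, Finset.mem_univ k0⟩
  have hmmin : ∀ l, x m ≤ x l := fun l => hm l (Finset.mem_univ l)
  have hmneg : x m < 0 := lt_of_le_of_lt (hmmin k0) hk0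
  have hrow : ∀ k, x k = x m → (∀ l, L k l ≠ 0 → x l = x m) ∧ (∑ l, L k l = 0) := by
    intro k hk
    have hbk : 0 ≤ ∑ l, L k l * x l := by
      simpa [Matrix.mulVec, dotProduct] using hb k
    have hle : ∀ l ∈ Finset.univ, L k l * x l ≤ L k l * x m := by
      intro l _
      rcases eq_or_ne l k with rfl | hlk
      · rw [hk]
      · exact mul_le_mul_of_nonpos_left (hmmin l) (hoff k l (Ne.symm hlk))
    have hsum0 : (0:ℝ) ≤ ∑ l, L k l := by
      have h1 : ∑ l ∈ Finset.univ.filter (fun l => l ≠ k), L k l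
          = -∑ l ∈ Finset.univ.filter (fun l => l ≠ k), |L k l| := by
        rw [← Finset.sum_neg_distrib]
        refine Finset.sum_congr rfl fun l hl => ?_
        have : L k l ≤ 0 := hoff k l (Ne.symm (Finset.mem_filter.mp hl).2)
        rw [abs_of_nonpos this, neg_neg]
      have h2 : ∑ l, L k l = L k k + ∑ l ∈ Finset.univ.filter (fun l => l ≠ k), L k l := by
        rw [← Finset.sum_filter_add_sum_filter_not Finset.univ (fun l => l = k)]
        simp [Finset.filter_eq', Finset.sum_ite_eq]
      rw [h2, h1]
      linarith [hdd k]
    have hub : ∑ l, L k l * x m ≤ 0 := by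
      rw [← Finset.sum_mul]
      exact mul_nonpos_of_nonneg_of_nonpos hsum0 hmneg.le
    have hsumeq : ∑ l, L k l * x l = ∑ l, L k l * x m := by
      have := Finset.sum_le_sum hle
      linarith
    have heq : ∀ l ∈ Finset.univ, L k l * x l = L k l * x m :=
      (Finset.sum_eq_sum_iff_of_le hle).mp hsumeq
    have hzero : (∑ l, L k l) = 0 := by
      have h3 : (∑ l, L k l) * x m = 0 := by
        rw [Finset.sum_mul]
        exact le_antisymm hub (hsumeq ▸ hbk)
      exact (mul_eq_zero.mp h3).resolve_right hmneg.ne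
    refine ⟨fun l hl => ?_, hzero⟩
    exact mul_left_cancel₀ hl (heq l (Finset.mem_univ l))
  set v : Fin n → ℝ := fun l => if x l = x m then (1:ℝ) else 0 with hv
  have hLv : L.mulVec v = 0 := by
    funext k
    have hmv : (L.mulVec v) k = ∑ l, if x l = x m then L k l else 0 := by
      simp [Matrix.mulVec, dotProduct, hv, mul_ite]
    rw [hmv, Pi.zero_apply]
    rcases eq_or_ne (x k) (x m) with hk | hk
    · have hr := hrow k hk
      have hcongr : ∀ l, (if x l = x m then L k l else 0) = L k l := by
        intro l
        split_ifs with h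
        · rfl
        · symm; by_contra hc; exact h (hr.1 l hc)
      rw [Finset.sum_congr rfl (fun l _ => hcongr l)]
      exact hr.2
    · refine Finset.sum_eq_zero fun l _ => ?_
      split_ifs with h
      · have hr := hrow l h
        rw [← hsymm.apply k l]
        by_contra hc
        exact hk (hr.1 k hc)
      · rfl
  have hv0 : v = 0 := by
    have h1 : L⁻¹.mulVec (L.mulVec v) = v := by
      rw [Matrix.mulVec_mulVec, Matrix.nonsing_inv_mul L ((Matrix.isUnit_iff_isUnit_det L).mp hinv),
        Matrix.one_mulVec]
    rw [← h1, hLv, Matrix.mulVec_zero]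
  have : v m = 0 := congrFun hv0 m
  simp [hv] at this

lemma sddm_neighbor_bound {n : ℕ} (U : ℕ)
    (L : Matrix (Fin n) (Fin n) ℝ)
    (hoff : ∀ i j, i ≠ j → L i j ≤ 0)
    (hint : ∀ i j, ∃ z : ℤ, L i j = (z : ℝ))
    (hbd : ∀ i j, |L i j| ≤ (U : ℝ))
    (x : Fin n → ℝ) (hb : ∀ i, 0 ≤ L.mulVec x i) (hx : ∀ k, 0 ≤ x k)
    (i j : Fin n) (hij : i ≠ j) (hadj : L i j ≠ 0) (hn1 : 1 ≤ n) :
    x j ≤ (n : ℝ) * U * x i := by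
  have hbi : 0 ≤ ∑ l, L i l * x l := by
    simpa [Matrix.mulVec, dotProduct] using hb i
  have hsplit : ∑ l, L i l * x l
      = L i i * x i + ∑ l ∈ Finset.univ.filter (fun l => l ≠ i), L i l * x l := by
    rw [← Finset.sum_filter_add_sum_filter_not Finset.univ (fun l => l = i)]
    simp [Finset.filter_eq', Finset.sum_ite_eq]
  have hsingle : (-(L i j)) * x j ≤ ∑ l ∈ Finset.univ.filter (fun l => l ≠ i), (-(L i l)) * x l := by
    refine Finset.single_le_sum (f := fun l => (-(L i l)) * x l) (fun l hl => ?_) ?_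
    · exact mul_nonneg (neg_nonneg.mpr (hoff i l (Ne.symm (Finset.mem_filter.mp hl).2))) (hx l)
    · simp [Ne.symm hij]
  have habs1 : (1:ℝ) ≤ -(L i j) := by
    obtain ⟨z, hz⟩ := hint i j
    have hz0 : z ≠ 0 := by rintro rfl; simp at hz; exact hadj hz
    have : (1:ℝ) ≤ |L i j| := by
      rw [hz, ← Int.cast_abs]
      exact_mod_cast Int.one_le_abs hz0
    have hneg : L i j ≤ 0 := hoff i j hij
    rw [abs_of_nonpos hneg] at this
    linarith
  have hxj : x j ≤ L i i * x i := by
    have hsum : ∑ l ∈ Finset.univ.filter (fun l => l ≠ i), (-(L i l)) * x l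
        = -∑ l ∈ Finset.univ.filter (fun l => l ≠ i), L i l * x l := by
      rw [← Finset.sum_neg_distrib]; simp
    have h1 : x j ≤ (-(L i j)) * x j :=
      le_mul_of_one_le_left (hx j) habs1
    rw [hsum] at hsingle
    linarith
  have hLii : L i i ≤ (U:ℝ) := (le_abs_self _).trans (hbd i i)
  have h2 : L i i * x i ≤ (U:ℝ) * x i := mul_le_mul_of_nonneg_right hLii (hx i)
  have h3 : (U:ℝ) * x i ≤ (n:ℝ) * U * x i := by
    have h1n : (1:ℝ) ≤ (n:ℝ) := by exact_mod_cast hn1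
    have := mul_le_mul_of_nonneg_right
      (mul_le_mul_of_nonneg_right h1n (Nat.cast_nonneg (α := ℝ) U)) (hx i)
    linarith
  linarith

/-- Let `L` be an `n × n` invertible SDDM matrix with integer entries in
`[-U, U]` (`U ≥ 2`, `n ≥ 2`) and `b` a nonnegative vector.  For any indices `i, j` with
`L i j ≠ 0`: `(nU)⁻¹ (L⁻¹ b)ⱼ ≤ (L⁻¹ b)ᵢ ≤ nU (L⁻¹ b)ⱼ`. -/
theorem sddm_solution_of_neighbors {n : ℕ} (hn : 2 ≤ n) (U : ℕ) (hU : 2 ≤ U)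
    (L : Matrix (Fin n) (Fin n) ℝ)
    (hsymm : L.IsSymm)
    (hoff : ∀ i j, i ≠ j → L i j ≤ 0)
    (hdiag : ∀ i, 0 < L i i)
    (hdd : ∀ i, ∑ j ∈ Finset.univ.filter (fun j => j ≠ i), |L i j| ≤ L i i)
    (hint : ∀ i j, ∃ z : ℤ, L i j = (z : ℝ))
    (hbd : ∀ i j, |L i j| ≤ (U : ℝ))
    (hinv : IsUnit L)
    (b : Fin n → ℝ) (hb : ∀ i, 0 ≤ b i)
    (i j : Fin n) (hadj : L i j ≠ 0) :
    ((n : ℝ) * U)⁻¹ * L⁻¹.mulVec b j ≤ L⁻¹.mulVec b i ∧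
      L⁻¹.mulVec b i ≤ (n : ℝ) * U * L⁻¹.mulVec b j := by
  set x := L⁻¹.mulVec b with hxdef
  have hLx : L.mulVec x = b := by
    rw [hxdef, Matrix.mulVec_mulVec,
      Matrix.mul_nonsing_inv L ((Matrix.isUnit_iff_isUnit_det L).mp hinv), Matrix.one_mulVec]
  have hb' : ∀ k, 0 ≤ L.mulVec x k := by rw [hLx]; exact hb
  have hx : ∀ k, 0 ≤ x k := sddm_inv_nonneg L hsymm hoff hdd hinv x hb'
  have hn1 : 1 ≤ n := le_trans one_le_two hn
  have h2n : (2:ℝ) ≤ (n:ℝ) := by exact_mod_cast hn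
  have h2U : (2:ℝ) ≤ (U:ℝ) := by exact_mod_cast hU
  have hnU : (0:ℝ) < (n:ℝ) * U := by nlinarith
  have h1nU : (1:ℝ) ≤ (n:ℝ) * U := by nlinarith
  rcases eq_or_ne i j with rfl | hij
  · refine ⟨?_, le_mul_of_one_le_left (hx i) h1nU⟩
    have hinv1 : ((n:ℝ) * U)⁻¹ ≤ 1 := by
      rw [inv_le_one_iff₀]; right; exact h1nU
    calc ((n:ℝ) * U)⁻¹ * x i ≤ 1 * x i := mul_le_mul_of_nonneg_right hinv1 (hx i)
      _ = x i := one_mul _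
  · have hji : L j i ≠ 0 := by rw [hsymm.apply i j]; exact hadj
    have hb1 := sddm_neighbor_bound U L hoff hint hbd x hb' hx i j hij hadj hn1
    have hb2 := sddm_neighbor_bound U L hoff hint hbd x hb' hx j i hij.symm hji hn1
    exact ⟨by rw [inv_mul_le_iff₀ hnU]; exact hb1, hb2⟩
end

section
/- Let L be an n×n invertible SDDM matrix with integer entries in [-U, U] (U ≥ 2, n ≥ 2), and let b be a nonnegative n-dimensional vector. Then for any two indices i, j ∈ [n] and any d > 0 such that the probability distance satisfies D_L(i, j) ≤ d (equivalently, (L⁻¹)_{ij} ≥ (nU)^{2-d}), one has (nU)^{-d} · (L⁻¹ b)_j ≤ (L⁻¹ b)_i ≤ (nU)^{d} · (L⁻¹ b)_j. -/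
/-!
Both `L⁻¹ ≥ 0` and the inequality `L⁻¹ a c * L⁻¹ c k ≤ L⁻¹ a k * L⁻¹ c c` come from the minimum
principle for SDDM matrices, applied to the columns of `L⁻¹` and to
`L⁻¹ (L⁻¹ c c • e_k - L⁻¹ c k • e_c)`, which vanishes at `c`. Integrality bounds the entries of
`L⁻¹` by `n`: for `x = L⁻¹ e_l` the flux of `L x` out of an upper level set of `x` is at most `1`,
while an integral row sum or edge weight leaving that set is at least `1`; so every value of `x`
above `1` lies within `1` of a smaller value. Weighting by `b ≥ 0` gives
`L⁻¹ a c * (L⁻¹ b) c ≤ n * (L⁻¹ b) a`, and `(nU)^(2-d) ≥ (nU)^(-d) * n` with the symmetry of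
`L⁻¹` yields both bounds.
-/

open Finset Matrix

theorem one_le_abs_of_exists_intCast {r : ℝ} (hr : ∃ z : ℤ, r = z) (h : r ≠ 0) : 1 ≤ |r| := by
  obtain ⟨z, rfl⟩ := hr
  rw [← Int.cast_abs]
  exact_mod_cast Int.one_le_abs (by exact_mod_cast h)

theorem le_card_of_forall_lt_le_add_one {ι : Type*} [Fintype ι] {f : ι → ℝ}
    (h : ∀ k, 1 < f k → ∃ p, f p < f k ∧ f k ≤ f p + 1) (k : ι) : f k ≤ Fintype.card ι := by
  suffices hcount : ∀ N k, #{m | f m < f k} = N → f k ≤ N + 1 by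
    have hlt : #{m | f m < f k} < Fintype.card ι := card_lt_univ_of_notMem (x := k) (by simp)
    have := hcount _ k rfl
    have : (#{m | f m < f k} : ℝ) + 1 ≤ Fintype.card ι := by exact_mod_cast hlt
    linarith
  intro N
  induction N using Nat.strong_induction_on with
  | _ N ih =>
    intro k hN
    rcases le_or_gt (f k) 1 with hk | hk
    · linarith [(N.cast_nonneg : (0 : ℝ) ≤ N)]
    obtain ⟨p, hpk, hkp⟩ := h k hk
    have hsub : (univ.filter fun m => f m < f p) ⊂ univ.filter fun m => f m < f k :=
      ssubset_iff_of_subset (fun m hm => by simp only [mem_filter_univ] at hm ⊢; linarith) |>.mpr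
        ⟨p, by simpa using hpk, by simp⟩
    have hcard := hN ▸ card_lt_card hsub
    have := ih _ hcard p rfl
    have : (#{m | f m < f p} : ℝ) + 1 ≤ N := by exact_mod_cast hcard
    linarith

namespace Matrix

variable {ι : Type*} [Fintype ι] [DecidableEq ι]

/-- The SDDM conditions without invertibility, diagonal dominance being phrased as nonnegative
row sums. -/
structure IsSDDM₀ (L : Matrix ι ι ℝ) : Prop where
  isSymm : L.IsSymm
  apply_nonpos : ∀ i j, i ≠ j → L i j ≤ 0
  sum_row_nonneg : ∀ i, 0 ≤ ∑ j, L i j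

theorem IsSDDM₀.of_abs_le {L : Matrix ι ι ℝ} (hsymm : L.IsSymm)
    (hoff : ∀ i j, i ≠ j → L i j ≤ 0)
    (hdd : ∀ i, ∑ j ∈ univ.filter (fun j => j ≠ i), |L i j| ≤ L i i) : L.IsSDDM₀ where
  isSymm := hsymm
  apply_nonpos := hoff
  sum_row_nonneg i := by
    have habs : ∑ j ∈ univ.erase i, |L i j| = -∑ j ∈ univ.erase i, L i j := by
      rw [← sum_neg_distrib]
      exact sum_congr rfl fun j hj => abs_of_nonpos (hoff i j (ne_of_mem_erase hj).symm)
    have := hdd i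
    rw [filter_ne', habs] at this
    rw [← add_sum_erase univ _ (mem_univ i)]
    linarith

theorem IsSymm.sum_mulVec_eq_add_boundary {L : Matrix ι ι ℝ} (hL : L.IsSymm) (x : ι → ℝ)
    (S : Finset ι) :
    ∑ m ∈ S, (L *ᵥ x) m =
      ∑ m ∈ S, (∑ p, L m p) * x m + ∑ m ∈ S, ∑ p ∈ Sᶜ, L m p * (x p - x m) := by
  have hrow (m : ι) : (L *ᵥ x) m = (∑ p, L m p) * x m + ∑ p, L m p * (x p - x m) := by
    simp only [mulVec, dotProduct, sum_mul, ← sum_add_distrib]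
    exact sum_congr rfl fun p _ => by ring
  have hinterior : ∑ m ∈ S, ∑ p ∈ S, L m p * (x p - x m) = 0 := by
    have hswap := sum_comm (s := S) (t := S) (f := fun m p => L m p * (x p - x m))
    have hneg : ∑ p ∈ S, ∑ m ∈ S, L m p * (x p - x m)
        = -∑ p ∈ S, ∑ m ∈ S, L p m * (x m - x p) := by
      simp only [← sum_neg_distrib]
      exact sum_congr rfl fun p _ => sum_congr rfl fun m _ => by rw [hL.apply p m]; ring
    linarith
  have hsplit (m : ι) : ∑ p, L m p * (x p - x m)
      = ∑ p ∈ S, L m p * (x p - x m) + ∑ p ∈ Sᶜ, L m p * (x p - x m) :=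
    (sum_add_sum_compl S _).symm
  simp only [hrow, hsplit, sum_add_distrib, hinterior, zero_add]

theorem IsSymm.exists_sum_row_ne_zero_or_ne_zero {L : Matrix ι ι ℝ}
    (hL : L.IsSymm) (hinv : IsUnit L) {S : Finset ι} (hS : S.Nonempty) :
    ∃ m ∈ S, ∑ p, L m p ≠ 0 ∨ ∃ p ∉ S, L m p ≠ 0 := by
  by_contra! hclosed
  let v : ι → ℝ := fun p => if p ∈ S then 1 else 0
  have hv : L *ᵥ v = L *ᵥ 0 := by
    ext q
    simp only [mulVec, dotProduct, v, mul_ite, mul_one, mul_zero, sum_ite_mem, univ_inter,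
      Pi.zero_apply, sum_const_zero]
    by_cases hq : q ∈ S
    · rw [← (hclosed q hq).1, ← sum_add_sum_compl S, sum_eq_zero fun p hp =>
        (hclosed q hq).2 p (mem_compl.mp hp), add_zero]
    · exact sum_eq_zero fun p hp => by rw [hL.apply p q, (hclosed p hp).2 q hq]
  obtain ⟨m, hm⟩ := hS
  simpa [v, hm] using congrFun (mulVec_injective_iff_isUnit.mpr hinv hv) m

theorem mulVec_nonsing_inv_mulVec {L : Matrix ι ι ℝ} (hinv : IsUnit L) (v : ι → ℝ) :
    L *ᵥ (L⁻¹ *ᵥ v) = v := by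
  rw [mulVec_mulVec, mul_nonsing_inv L ((isUnit_iff_isUnit_det L).mp hinv), one_mulVec]

namespace IsSDDM₀

variable {L : Matrix ι ι ℝ}

theorem nonneg_of_mulVec_nonneg_of_neg (hL : L.IsSDDM₀) (hinv : IsUnit L) {x : ι → ℝ}
    (hx : ∀ k, x k < 0 → 0 ≤ (L *ᵥ x) k) : 0 ≤ x := by
  intro k
  by_contra! hk
  obtain ⟨m, -, hm⟩ := exists_min_image univ x ⟨k, mem_univ k⟩
  have hμ : x m < 0 := (hm k (mem_univ k)).trans_lt hk
  set S := univ.filter (fun p => x p = x m)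
  have hmem {p : ι} : p ∈ S ↔ x p = x m := by simp [S]
  have hexcess : ∀ p ∈ S, (∑ q, L p q) * x p ≤ 0 := fun p hp =>
    mul_nonpos_of_nonneg_of_nonpos (hL.sum_row_nonneg p) (hmem.mp hp ▸ hμ.le)
  have hboundary : ∀ p ∈ S, ∀ q ∈ Sᶜ, L p q * (x q - x p) ≤ 0 := by
    intro p hp q hq
    have hpq : p ≠ q := fun h => (mem_compl.mp hq) (h ▸ hp)
    have hxq : x p < x q := hmem.mp hp ▸ lt_of_le_of_ne (hm q (mem_univ q))
      fun h => (mem_compl.mp hq) (hmem.mpr h.symm)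
    exact mul_nonpos_of_nonpos_of_nonneg (hL.apply_nonpos p q hpq) (by linarith)
  have hflux : 0 ≤ ∑ p ∈ S, (L *ᵥ x) p :=
    sum_nonneg fun p hp => hx p (hmem.mp hp ▸ hμ)
  rw [hL.isSymm.sum_mulVec_eq_add_boundary] at hflux
  have hboundary_sum : ∀ p ∈ S, ∑ q ∈ Sᶜ, L p q * (x q - x p) ≤ 0 :=
    fun p hp => sum_nonpos (hboundary p hp)
  have hexcess_zero := (sum_eq_zero_iff_of_nonpos hexcess).mp
    (le_antisymm (sum_nonpos hexcess) (by linarith [sum_nonpos hboundary_sum]))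
  have hboundary_zero := (sum_eq_zero_iff_of_nonpos hboundary_sum).mp
    (le_antisymm (sum_nonpos hboundary_sum) (by linarith [sum_nonpos hexcess]))
  obtain ⟨p, hp, hrow | ⟨q, hq, hpq⟩⟩ :=
    hL.isSymm.exists_sum_row_ne_zero_or_ne_zero hinv ⟨m, hmem.mpr rfl⟩
  · have := hexcess_zero p hp
    rw [hmem.mp hp] at this
    exact hrow ((mul_eq_zero.mp this).resolve_right hμ.ne)
  · have := (sum_eq_zero_iff_of_nonpos (hboundary p hp)).mp (hboundary_zero p hp) q
      (mem_compl.mpr hq)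
    rw [hmem.mp hp] at this
    exact hpq ((mul_eq_zero.mp this).resolve_right
      (sub_ne_zero.mpr fun h => hq (hmem.mpr h)))

theorem inv_apply_nonneg (hL : L.IsSDDM₀) (hinv : IsUnit L) (i j : ι) : 0 ≤ L⁻¹ i j := by
  have hcol := hL.nonneg_of_mulVec_nonneg_of_neg hinv (x := L⁻¹ *ᵥ Pi.single j 1) fun k _ => by
    rw [mulVec_nonsing_inv_mulVec hinv]
    exact (Pi.single_nonneg.mpr zero_le_one : (0 : ι → ℝ) ≤ Pi.single j 1) k
  simpa [mulVec_single_one] using hcol i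

theorem inv_mul_inv_le (hL : L.IsSDDM₀) (hinv : IsUnit L) (p q r : ι) :
    L⁻¹ p r * L⁻¹ r q ≤ L⁻¹ p q * L⁻¹ r r := by
  set v : ι → ℝ := L⁻¹ r r • Pi.single q 1 - L⁻¹ r q • Pi.single r 1
  have hq : (0 : ι → ℝ) ≤ Pi.single q 1 := Pi.single_nonneg.mpr zero_le_one
  have hy (k : ι) : (L⁻¹ *ᵥ v) k = L⁻¹ r r * L⁻¹ k q - L⁻¹ r q * L⁻¹ k r := by
    simp [v, mulVec_sub, mulVec_smul]
  have := hL.nonneg_of_mulVec_nonneg_of_neg hinv (x := L⁻¹ *ᵥ v) fun k hk => by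
    have hkr : k ≠ r := by rintro rfl; rw [hy] at hk; linarith
    rw [mulVec_nonsing_inv_mulVec hinv]
    simp only [v, Pi.sub_apply, Pi.smul_apply, Pi.single_eq_of_ne hkr, smul_zero, sub_zero]
    exact smul_nonneg (hL.inv_apply_nonneg hinv r r) (hq k)
  have := this p
  rw [Pi.zero_apply, hy] at this
  linarith

theorem inv_mul_inv_mulVec_le (hL : L.IsSDDM₀) (hinv : IsUnit L) {b : ι → ℝ} (hb : 0 ≤ b)
    (a c : ι) : L⁻¹ a c * (L⁻¹ *ᵥ b) c ≤ L⁻¹ c c * (L⁻¹ *ᵥ b) a := by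
  simp only [mulVec, dotProduct, mul_sum, ← mul_assoc]
  exact sum_le_sum fun k _ => mul_le_mul_of_nonneg_right
    ((hL.inv_mul_inv_le hinv a k c).trans_eq (mul_comm _ _)) (hb k)

theorem exists_lt_le_add_one (hL : L.IsSDDM₀) (hinv : IsUnit L)
    (hint : ∀ i j, ∃ z : ℤ, L i j = z) {x : ι → ℝ} (hLx : 0 ≤ L *ᵥ x)
    (hLx_sum : ∑ m, (L *ᵥ x) m ≤ 1) {k : ι} (hk : 1 < x k) :
    ∃ p, x p < x k ∧ x k ≤ x p + 1 := by
  set S := univ.filter (fun m => x k ≤ x m)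
  have hmem {m : ι} : m ∈ S ↔ x k ≤ x m := by simp [S]
  have hexcess : ∀ m ∈ S, 0 ≤ (∑ p, L m p) * x m := fun m hm =>
    mul_nonneg (hL.sum_row_nonneg m) (by linarith [hmem.mp hm])
  have hboundary : ∀ m ∈ S, ∀ p ∈ Sᶜ, 0 ≤ L m p * (x p - x m) := by
    intro m hm p hp
    have hpk : x p < x k := not_le.mp fun h => mem_compl.mp hp (hmem.mpr h)
    exact mul_nonneg_of_nonpos_of_nonpos
      (hL.apply_nonpos m p fun h => mem_compl.mp hp (h ▸ hm)) (by linarith [hmem.mp hm])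
  have hflux : ∑ m ∈ S, (∑ p, L m p) * x m + ∑ m ∈ S, ∑ p ∈ Sᶜ, L m p * (x p - x m) ≤ 1 := by
    rw [← hL.isSymm.sum_mulVec_eq_add_boundary]
    exact (sum_le_sum_of_subset_of_nonneg (subset_univ S) fun m _ _ => hLx m).trans hLx_sum
  have hexcess_nonneg := sum_nonneg hexcess
  have hboundary_nonneg := sum_nonneg fun m hm => sum_nonneg (hboundary m hm)
  obtain ⟨m, hm, hrow | ⟨p, hp, hmp⟩⟩ :=
    hL.isSymm.exists_sum_row_ne_zero_or_ne_zero hinv ⟨k, hmem.mpr le_rfl⟩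
  · have hrow_ge : 1 ≤ ∑ p, L m p := by
      refine (abs_of_nonneg (hL.sum_row_nonneg m)).symm.trans_ge
        (one_le_abs_of_exists_intCast ?_ hrow)
      choose f hf using hint m
      exact ⟨∑ p, f p, by push_cast; exact sum_congr rfl fun p _ => hf p⟩
    have := single_le_sum hexcess hm
    nlinarith [hmem.mp hm]
  · refine ⟨p, not_le.mp fun h => hp (hmem.mpr h), ?_⟩
    have hedge_ge : 1 ≤ -L m p :=
      (abs_of_nonpos (hL.apply_nonpos m p fun h => hp (h ▸ hm))).symm.trans_ge
        (one_le_abs_of_exists_intCast (hint m p) hmp)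
    have := (single_le_sum (hboundary m hm) (mem_compl.mpr hp)).trans
      (single_le_sum (fun m hm => sum_nonneg (hboundary m hm)) hm)
    nlinarith [hmem.mp hm]

theorem inv_apply_le_card (hL : L.IsSDDM₀) (hinv : IsUnit L)
    (hint : ∀ i j, ∃ z : ℤ, L i j = z) (i j : ι) : L⁻¹ i j ≤ Fintype.card ι := by
  have hLx : L *ᵥ (L⁻¹ *ᵥ Pi.single j 1) = Pi.single j 1 := mulVec_nonsing_inv_mulVec hinv _
  have := le_card_of_forall_lt_le_add_one
    (fun k hk => hL.exists_lt_le_add_one hinv hint (hLx ▸ Pi.single_nonneg.mpr zero_le_one)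
      (by rw [hLx]; simp) hk) i
  rwa [mulVec_single_one, col_apply] at this

theorem mul_inv_mulVec_le (hL : L.IsSDDM₀) (hinv : IsUnit L)
    (hint : ∀ i j, ∃ z : ℤ, L i j = z) {b : ι → ℝ} (hb : 0 ≤ b) {t : ℝ} {a c : ι}
    (hac : t * Fintype.card ι ≤ L⁻¹ a c) : t * (L⁻¹ *ᵥ b) c ≤ (L⁻¹ *ᵥ b) a := by
  have hcard : (0 : ℝ) < Fintype.card ι := by exact_mod_cast Fintype.card_pos_iff.mpr ⟨a⟩
  have hLb (i : ι) : 0 ≤ (L⁻¹ *ᵥ b) i :=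
    sum_nonneg fun k _ => mul_nonneg (hL.inv_apply_nonneg hinv i k) (hb k)
  refine le_of_mul_le_mul_left ?_ hcard
  calc Fintype.card ι * (t * (L⁻¹ *ᵥ b) c) = t * Fintype.card ι * (L⁻¹ *ᵥ b) c := by ring
    _ ≤ L⁻¹ a c * (L⁻¹ *ᵥ b) c := mul_le_mul_of_nonneg_right hac (hLb c)
    _ ≤ L⁻¹ c c * (L⁻¹ *ᵥ b) a := hL.inv_mul_inv_mulVec_le hinv hb a c
    _ ≤ Fintype.card ι * (L⁻¹ *ᵥ b) a := mul_le_mul_of_nonneg_right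
      (hL.inv_apply_le_card hinv hint c c) (hLb a)

end IsSDDM₀

end Matrix

theorem sddm_solution_of_near_vertices_general {n : ℕ} (U : ℕ) (hU : 2 ≤ U)
    (L : Matrix (Fin n) (Fin n) ℝ)
    (hsymm : L.IsSymm)
    (hoff : ∀ i j, i ≠ j → L i j ≤ 0)
    (hdd : ∀ i, ∑ j ∈ Finset.univ.filter (fun j => j ≠ i), |L i j| ≤ L i i)
    (hint : ∀ i j, ∃ z : ℤ, L i j = (z : ℝ))
    (hinv : IsUnit L)
    (b : Fin n → ℝ) (hb : ∀ i, 0 ≤ b i)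
    (i j : Fin n) (d : ℝ)
    (hnear : ((n : ℝ) * U) ^ ((2 : ℝ) - d) ≤ L⁻¹ i j) :
    ((n : ℝ) * U) ^ (-d) * L⁻¹.mulVec b j ≤ L⁻¹.mulVec b i ∧
      L⁻¹.mulVec b i ≤ ((n : ℝ) * U) ^ d * L⁻¹.mulVec b j := by
  have hL : L.IsSDDM₀ := .of_abs_le hsymm hoff hdd
  set W : ℝ := n * U
  have hn : (1 : ℝ) ≤ n := by exact_mod_cast i.pos
  have hU1 : (1 : ℝ) ≤ U := by exact_mod_cast (by omega : 1 ≤ U)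
  have hW : 0 < W := by positivity
  have hcard {a c : Fin n} (h : W ^ (2 - d) ≤ L⁻¹ a c) :
      W ^ (-d) * Fintype.card (Fin n) ≤ L⁻¹ a c := by
    refine le_trans ?_ h
    calc W ^ (-d) * Fintype.card (Fin n) ≤ W ^ (-d) * W ^ (2 : ℕ) := by
          rw [Fintype.card_fin]
          gcongr
          show (n : ℝ) ≤ (n * U) ^ 2
          nlinarith [mul_le_mul hn hU1 zero_le_one (by linarith)]
      _ = W ^ (2 - d) := by rw [← Real.rpow_natCast, ← Real.rpow_add hW]; ring_nf
  refine ⟨hL.mul_inv_mulVec_le hinv hint hb (hcard hnear), ?_⟩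
  have hji := hL.mul_inv_mulVec_le hinv hint hb
    (hcard (a := j) (c := i) (by rwa [hsymm.inv.apply]))
  calc (L⁻¹ *ᵥ b) i = W ^ d * (W ^ (-d) * (L⁻¹ *ᵥ b) i) := by
        rw [Real.rpow_neg hW.le, mul_inv_cancel_left₀ (Real.rpow_pos_of_pos hW d).ne']
    _ ≤ W ^ d * (L⁻¹ *ᵥ b) j := mul_le_mul_of_nonneg_left hji (by positivity)

/-- Let `L` be an `n × n` invertible SDDM matrix with integer entries in
`[-U, U]` (`U ≥ 2`, `n ≥ 2`) and `b` a nonnegative vector.  For any indices `i, j` and any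
`d > 0` such that the probability distance satisfies `D_L(i, j) ≤ d` (equivalently
`(L⁻¹)ᵢⱼ ≥ (nU)^{2-d}`), one has
`(nU)^{-d} (L⁻¹ b)ⱼ ≤ (L⁻¹ b)ᵢ ≤ (nU)^{d} (L⁻¹ b)ⱼ`. -/
theorem sddm_solution_of_near_vertices {n : ℕ} (hn : 2 ≤ n) (U : ℕ) (hU : 2 ≤ U)
    (L : Matrix (Fin n) (Fin n) ℝ)
    (hsymm : L.IsSymm)
    (hoff : ∀ i j, i ≠ j → L i j ≤ 0)
    (hdiag : ∀ i, 0 < L i i)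
    (hdd : ∀ i, ∑ j ∈ Finset.univ.filter (fun j => j ≠ i), |L i j| ≤ L i i)
    (hint : ∀ i j, ∃ z : ℤ, L i j = (z : ℝ))
    (hbd : ∀ i j, |L i j| ≤ (U : ℝ))
    (hinv : IsUnit L)
    (b : Fin n → ℝ) (hb : ∀ i, 0 ≤ b i)
    (i j : Fin n) (d : ℝ) (hd : 0 < d)
    (hnear : ((n : ℝ) * U) ^ ((2 : ℝ) - d) ≤ L⁻¹ i j) :
    ((n : ℝ) * U) ^ (-d) * L⁻¹.mulVec b j ≤ L⁻¹.mulVec b i ∧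
      L⁻¹.mulVec b i ≤ ((n : ℝ) * U) ^ d * L⁻¹.mulVec b j :=
  sddm_solution_of_near_vertices_general U hU L hsymm hoff hdd hint hinv b hb i j d hnear
end

section
/- Let L be an n×n invertible SDDM matrix, fix w ∈ [n] and a threshold c > 0, and let T := {k ∈ [n] : (L⁻¹ e^{(w)})_k ≥ c} be the level set of the solution to L x = e^{(w)}. Let G be the graph on [n] with an edge between i ≠ j whenever L_{ij} ≠ 0. Then for every y ∈ T, the vertices y and w lie in the same connected component of the subgraph of G induced on T; that is, there exists a path y = k₀, k₁, …, k_p = w in G with (L⁻¹ e^{(w)})_{k_g} ≥ c for every g ∈ {0, 1, …, p}. -/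
/-!
Let `x = L⁻¹ e⁽ʷ⁾` and let `S` be the set of vertices reachable from `y` through the level set
`{x ≥ c}`. If `w ∉ S`, then `L x = 0` on `S`, and every neighbour of `S` outside `S` has
`x < c`. Take the maximum `m ≥ c > 0` of `x` on `S`. At a vertex where it is attained,
`0 = (L x)_i ≥ m ∑ⱼ L i j ≥ 0`, and since the off-diagonal entries are `≤ 0`, both inequalities
are equalities. So every neighbour of `i` also has `x = m` and row `i` sums to zero. Then the
maximisers form a set `A` that is closed under taking neighbours and whose rows sum to zero, so
by symmetry the indicator of `A` lies in the kernel of `L`, which contradicts invertibility.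
-/

open Finset Matrix Relation

theorem Relation.ReflTransGen.exists_seq {α : Type*} {r : α → α → Prop} {a b : α}
    (h : ReflTransGen r a b) :
    ∃ (p : ℕ) (k : ℕ → α), k 0 = a ∧ k p = b ∧ ∀ g < p, r (k g) (k (g + 1)) := by
  induction h using Relation.ReflTransGen.head_induction_on with
  | refl => exact ⟨0, fun _ => b, rfl, rfl, by simp⟩
  | @head a _ hac _ ih =>
    obtain ⟨p, k, hk0, hkp, hk⟩ := ih
    refine ⟨p + 1, fun g => Nat.casesOn g a k, rfl, hkp, ?_⟩
    rintro (_ | g) hg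
    · simpa [hk0] using hac
    · exact hk g (by omega)

namespace Matrix

variable {ι : Type*} [Fintype ι] [DecidableEq ι] {L : Matrix ι ι ℝ}

theorem sum_row_nonneg_of_diagDominant {i : ι} (hoff : ∀ j, j ≠ i → L i j ≤ 0)
    (hdd : ∑ j ∈ univ.filter (· ≠ i), |L i j| ≤ L i i) : 0 ≤ ∑ j, L i j := by
  have habs : ∑ j ∈ univ.erase i, |L i j| = -∑ j ∈ univ.erase i, L i j := by
    rw [← sum_neg_distrib]
    exact sum_congr rfl fun j hj => abs_of_nonpos (hoff j (ne_of_mem_erase hj))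
  rw [filter_ne', habs] at hdd
  rw [← add_sum_erase univ _ (mem_univ i)]
  linarith

theorem eq_of_mulVec_nonpos_of_le {i : ι} {x : ι → ℝ} (hoff : ∀ j, j ≠ i → L i j ≤ 0)
    (hrow : 0 ≤ ∑ j, L i j) (hpos : 0 < x i) (hle : ∀ j, L i j ≠ 0 → x j ≤ x i)
    (hLx : (L *ᵥ x) i ≤ 0) : (∀ j, L i j ≠ 0 → x j = x i) ∧ ∑ j, L i j = 0 := by
  have hterm : ∀ j, 0 ≤ L i j * (x j - x i) := by
    intro j
    by_cases hL : L i j = 0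
    · simp [hL]
    by_cases hji : j = i
    · simp [hji]
    exact mul_nonneg_of_nonpos_of_nonpos (hoff j hji) (sub_nonpos.mpr (hle j hL))
  have hsplit : (L *ᵥ x) i = x i * ∑ j, L i j + ∑ j, L i j * (x j - x i) := by
    simp only [mulVec, dotProduct, mul_sub, sum_sub_distrib, mul_sum]
    ring_nf
  have hdiff : 0 ≤ ∑ j, L i j * (x j - x i) := sum_nonneg fun j _ => hterm j
  have hscaled : 0 ≤ x i * ∑ j, L i j := mul_nonneg hpos.le hrow
  refine ⟨fun j hL => ?_, ?_⟩
  · have hzero := (sum_eq_zero_iff_of_nonneg fun j _ => hterm j).mp (by linarith) j (mem_univ j)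
    exact sub_eq_zero.mp ((mul_eq_zero.mp hzero).resolve_left hL)
  · exact (mul_eq_zero.mp (by linarith : x i * ∑ j, L i j = 0)).resolve_left hpos.ne'

theorem mulVec_indicator_eq_zero (hsymm : L.IsSymm) {A : Finset ι}
    (hclosed : ∀ i ∈ A, ∀ j, L i j ≠ 0 → j ∈ A) (hrow : ∀ i ∈ A, ∑ j, L i j = 0) :
    L *ᵥ (fun j => if j ∈ A then 1 else 0) = 0 := by
  funext i
  have hsum : (L *ᵥ (fun j => if j ∈ A then 1 else 0)) i = ∑ j ∈ A, L i j := by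
    simp only [mulVec, dotProduct, mul_ite, mul_one, mul_zero, sum_ite_mem, univ_inter]
  rw [hsum, Pi.zero_apply]
  by_cases hi : i ∈ A
  · rw [← hrow i hi]
    exact sum_subset (subset_univ A) fun j _ hj => by_contra fun hL => hj (hclosed i hi j hL)
  · refine sum_eq_zero fun j hj => by_contra fun hL => hi (hclosed j hj i ?_)
    rwa [hsymm.apply]

theorem not_isUnit_of_isMaxOn (hsymm : L.IsSymm) (hoff : ∀ i j, i ≠ j → L i j ≤ 0)
    (hrow : ∀ i, 0 ≤ ∑ j, L i j) {S : Finset ι} {x : ι → ℝ} {i₀ : ι} (hi₀ : i₀ ∈ S)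
    (hmax : ∀ i ∈ S, x i ≤ x i₀) (hpos : 0 < x i₀) (hsub : ∀ i ∈ S, (L *ᵥ x) i ≤ 0)
    (hbdry : ∀ i ∈ S, ∀ j ∉ S, L i j ≠ 0 → x j < x i₀) : ¬IsUnit L := by
  set A := S.filter (fun i => x i = x i₀)
  have hflat : ∀ i ∈ A, (∀ j, L i j ≠ 0 → x j = x i) ∧ ∑ j, L i j = 0 := by
    intro i hi
    obtain ⟨hiS, hxi⟩ := mem_filter.mp hi
    refine eq_of_mulVec_nonpos_of_le (fun j hj => hoff i j hj.symm) (hrow i) (hxi ▸ hpos)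
      (fun j hL => ?_) (hsub i hiS)
    rw [hxi]
    by_cases hjS : j ∈ S
    · exact hmax j hjS
    · exact (hbdry i hiS j hjS hL).le
  have hclosed : ∀ i ∈ A, ∀ j, L i j ≠ 0 → j ∈ A := by
    intro i hi j hL
    obtain ⟨hiS, hxi⟩ := mem_filter.mp hi
    have hxj : x j = x i₀ := ((hflat i hi).1 j hL).trans hxi
    have hjS : j ∈ S := by_contra fun hjS => (hbdry i hiS j hjS hL).ne hxj
    exact mem_filter.mpr ⟨hjS, hxj⟩
  have hker := mulVec_indicator_eq_zero hsymm hclosed fun i hi => (hflat i hi).2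
  have hne : (fun j => if j ∈ A then (1 : ℝ) else 0) ≠ 0 := fun h => by
    simpa [A, hi₀] using congrFun h i₀
  rw [isUnit_iff_isUnit_det, isUnit_iff_ne_zero, ne_eq, ← exists_mulVec_eq_zero_iff]
  exact not_not.mpr ⟨_, hne, hker⟩

end Matrix

theorem sddm_level_set_connected_general {n : ℕ}
    (L : Matrix (Fin n) (Fin n) ℝ)
    (hsymm : L.IsSymm)
    (hoff : ∀ i j, i ≠ j → L i j ≤ 0)
    (hdd : ∀ i, ∑ j ∈ Finset.univ.filter (fun j => j ≠ i), |L i j| ≤ L i i)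
    (hinv : IsUnit L)
    (w : Fin n) (c : ℝ) (hc : 0 < c)
    (y : Fin n) (hy : c ≤ L⁻¹.mulVec (Pi.single w 1) y) :
    ∃ (p : ℕ) (k : ℕ → Fin n), k 0 = y ∧ k p = w ∧
      (∀ g < p, k g ≠ k (g + 1) ∧ L (k g) (k (g + 1)) ≠ 0) ∧
      (∀ g ≤ p, c ≤ L⁻¹.mulVec (Pi.single w 1) (k g)) := by
  classical
  set x := L⁻¹ *ᵥ Pi.single w 1
  have hLx : L *ᵥ x = Pi.single w 1 := by
    rw [mulVec_mulVec, mul_nonsing_inv _ ((isUnit_iff_isUnit_det L).mp hinv), one_mulVec]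
  let R : Fin n → Fin n → Prop := fun i j => (i ≠ j ∧ L i j ≠ 0) ∧ c ≤ x j
  suffices hreach : ReflTransGen R y w by
    obtain ⟨p, k, hk0, hkp, hk⟩ := hreach.exists_seq
    refine ⟨p, k, hk0, hkp, fun g hg => (hk g hg).1, ?_⟩
    rintro (_ | g) hg
    · rwa [hk0]
    · exact (hk g hg).2
  by_contra hw
  set S := univ.filter (ReflTransGen R y)
  obtain ⟨i₀, hi₀, hmax⟩ := S.exists_max_image x ⟨y, mem_filter.mpr ⟨mem_univ y, .refl⟩⟩
  have hi₀c : c ≤ x i₀ := by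
    rcases (mem_filter.mp hi₀).2.cases_tail with h | ⟨_, _, hstep⟩
    · rwa [h]
    · exact hstep.2
  refine not_isUnit_of_isMaxOn hsymm hoff (fun i => sum_row_nonneg_of_diagDominant
    (fun j hj => hoff i j hj.symm) (hdd i)) hi₀ hmax (hc.trans_le hi₀c) (fun i hi => ?_)
    (fun i hi j hj hL => ?_) hinv
  · have hiw : i ≠ w := by rintro rfl; exact hw (mem_filter.mp hi).2
    rw [hLx, Pi.single_eq_of_ne hiw]
  · by_contra! hxj
    have hij : i ≠ j := by rintro rfl; exact hj hi
    exact hj (mem_filter.mpr ⟨mem_univ j, (mem_filter.mp hi).2.tail ⟨⟨hij, hL⟩, hi₀c.trans hxj⟩⟩)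

/-- Let `L` be an `n × n` invertible SDDM matrix, fix `w` and a threshold
`c > 0`, and let `T := {k : (L⁻¹ e⁽ʷ⁾)_k ≥ c}`.  In the graph on `[n]` with an edge between
`i ≠ j` whenever `L i j ≠ 0`, every `y ∈ T` is joined to `w` by a path
`y = k₀, k₁, …, k_p = w` all of whose vertices lie in `T`. -/
theorem sddm_level_set_connected {n : ℕ}
    (L : Matrix (Fin n) (Fin n) ℝ)
    (hsymm : L.IsSymm)
    (hoff : ∀ i j, i ≠ j → L i j ≤ 0)
    (hdiag : ∀ i, 0 < L i i)
    (hdd : ∀ i, ∑ j ∈ Finset.univ.filter (fun j => j ≠ i), |L i j| ≤ L i i)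
    (hinv : IsUnit L)
    (w : Fin n) (c : ℝ) (hc : 0 < c)
    (y : Fin n) (hy : c ≤ L⁻¹.mulVec (Pi.single w 1) y) :
    ∃ (p : ℕ) (k : ℕ → Fin n), k 0 = y ∧ k p = w ∧
      (∀ g < p, k g ≠ k (g + 1) ∧ L (k g) (k (g + 1)) ≠ 0) ∧
      (∀ g ≤ p, c ≤ L⁻¹.mulVec (Pi.single w 1) (k g)) :=
  sddm_level_set_connected_general L hsymm hoff hdd hinv w c hc y hy
end

section
/- Let n > 10 and U > 32, let L be an n×n invertible SDDM matrix with integer entries in [-U, U], let ℓ := ⌈√(log₂ n)⌉ + 3, let d_i := 4^ℓ / 2^{i-1} for i ∈ [ℓ], and let M be any real number with M > nU. Then for every u ∈ [n] there exists an index i ∈ [ℓ] such that |{k ∈ [n] : (L⁻¹ e^{(u)})_k ≥ M^{-2 d_i}}| ≤ 8^ℓ · |{k ∈ [n] : (L⁻¹ e^{(u)})_k ≥ M^{-d_i/4}}|. -/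
/-- Let `n > 10`, `U > 32`, and let `L` be an `n × n` invertible SDDM
matrix with integer entries in `[-U, U]`.  Set `ℓ := ⌈√(log₂ n)⌉ + 3` and
`dᵢ := 4^ℓ / 2^{i-1}` for `i ∈ [ℓ]`, and let `M > nU`.  Then for every `u` there exists
`i ∈ [ℓ]` with `|{k : (L⁻¹ e⁽ᵘ⁾)_k ≥ M^{-2 dᵢ}}| ≤ 8^ℓ |{k : (L⁻¹ e⁽ᵘ⁾)_k ≥ M^{-dᵢ/4}}|`. -/
theorem sddm_good_threshold_exists {n : ℕ} (hn : 10 < n) (U : ℕ) (hU : 32 < U)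
    (L : Matrix (Fin n) (Fin n) ℝ)
    (hsymm : L.IsSymm)
    (hoff : ∀ i j, i ≠ j → L i j ≤ 0)
    (hdiag : ∀ i, 0 < L i i)
    (hdd : ∀ i, ∑ j ∈ Finset.univ.filter (fun j => j ≠ i), |L i j| ≤ L i i)
    (hint : ∀ i j, ∃ z : ℤ, L i j = (z : ℝ))
    (hbd : ∀ i j, |L i j| ≤ (U : ℝ))
    (hinv : IsUnit L)
    (ℓ : ℕ) (hℓ : ℓ = ⌈Real.sqrt (Real.logb 2 n)⌉₊ + 3)
    (d : ℕ → ℝ) (hd : ∀ i, d i = (4 : ℝ) ^ ℓ / 2 ^ (i - 1))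
    (M : ℝ) (hM : (n : ℝ) * U < M)
    (u : Fin n) :
    ∃ i ∈ Finset.Icc 1 ℓ,
      ({k : Fin n | M ^ (-(2 * d i)) ≤ L⁻¹.mulVec (Pi.single u 1) k}.ncard : ℕ)
        ≤ 8 ^ ℓ * {k : Fin n | M ^ (-(d i / 4)) ≤ L⁻¹.mulVec (Pi.single u 1) k}.ncard := by
  by_contra hcon
  push_neg at hcon
  set x := L⁻¹.mulVec (Pi.single u 1) with hx
  set f : ℕ → ℕ := fun i => {k : Fin n | M ^ (-(2 * d i)) ≤ x k}.ncard with hf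
  -- exponent identity
  have hdeq : ∀ i, 1 ≤ i → d i / 4 = 2 * d (i + 3) := by
    intro i h1
    obtain ⟨j, rfl⟩ := Nat.exists_eq_add_of_le h1
    rw [hd, hd]
    have e1 : 1 + j - 1 = j := by omega
    have e2 : 1 + j + 3 - 1 = j + 3 := by omega
    rw [e1, e2]
    have h2 : (2 : ℝ) ^ j ≠ 0 := pow_ne_zero _ two_ne_zero
    rw [pow_add]
    field_simp
    ring
  have hstep : ∀ i, 1 ≤ i → i ≤ ℓ → 8 ^ ℓ * f (i + 3) < f i := by
    intro i h1 h2
    have h := hcon i (Finset.mem_Icc.mpr ⟨h1, h2⟩)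
    have hset : {k : Fin n | M ^ (-(d i / 4)) ≤ x k}
        = {k : Fin n | M ^ (-(2 * d (i + 3))) ≤ x k} := by
      rw [hdeq i h1]
    simpa [hf, ← hset] using h
  have hchain : ∀ m, 1 + 3 * m ≤ ℓ → (8 ^ ℓ) ^ m * f (1 + 3 * m) ≤ f 1 := by
    intro m
    induction m with
    | zero => simp
    | succ m ih =>
      intro hm
      have hm' : 1 + 3 * m ≤ ℓ := by omega
      have h1 := hstep (1 + 3 * m) (by omega) hm'
      have e : 1 + 3 * (m + 1) = 1 + 3 * m + 3 := by ring
      calc (8 ^ ℓ) ^ (m + 1) * f (1 + 3 * (m + 1))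
          = (8 ^ ℓ) ^ m * (8 ^ ℓ * f (1 + 3 * m + 3)) := by rw [e, pow_succ]; ring
        _ ≤ (8 ^ ℓ) ^ m * f (1 + 3 * m) := Nat.mul_le_mul_left _ (le_of_lt h1)
        _ ≤ f 1 := ih hm'
  set s := ⌈Real.sqrt (Real.logb 2 n)⌉₊ with hs
  have hn1 : (1 : ℝ) < n := by exact_mod_cast lt_trans (by norm_num) hn
  have hlogpos : 0 < Real.logb 2 n := Real.logb_pos (by norm_num) hn1
  have hs1 : 1 ≤ s := Nat.one_le_ceil_iff.mpr (Real.sqrt_pos.mpr hlogpos)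
  have hℓ4 : 4 ≤ ℓ := by omega
  set m := (ℓ - 1) / 3 with hm
  have hmle : 1 + 3 * m ≤ ℓ := by omega
  have hfpos : 1 ≤ f (1 + 3 * m) := by
    have := hstep (1 + 3 * m) (by omega) hmle
    omega
  have hf1n : f 1 ≤ n := by
    have h1 : {k : Fin n | M ^ (-(2 * d 1)) ≤ x k}.ncard ≤ (Set.univ : Set (Fin n)).ncard :=
      Set.ncard_le_ncard (Set.subset_univ _) Set.finite_univ
    simpa [Set.ncard_univ] using h1
  have hkey : (8 ^ ℓ) ^ m ≤ n := by
    calc (8 ^ ℓ) ^ m = (8 ^ ℓ) ^ m * 1 := by ring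
      _ ≤ (8 ^ ℓ) ^ m * f (1 + 3 * m) := Nat.mul_le_mul_left _ hfpos
      _ ≤ f 1 := hchain m hmle
      _ ≤ n := hf1n
  -- now show n < (8^ℓ)^m
  have hns : n ≤ 2 ^ (s * s) := by
    have hsqrt : Real.sqrt (Real.logb 2 n) ≤ (s : ℝ) := Nat.le_ceil _
    have hlog : Real.logb 2 n ≤ (s : ℝ) * s := by
      have := Real.sq_sqrt (le_of_lt hlogpos)
      nlinarith [Real.sqrt_nonneg (Real.logb 2 n)]
    have hnpos : (0 : ℝ) < n := by linarith
    have h1 : (n : ℝ) = (2 : ℝ) ^ (Real.logb 2 n) := by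
      rw [Real.rpow_logb (by norm_num) (by norm_num) hnpos]
    have h2 : (2 : ℝ) ^ (Real.logb 2 n) ≤ (2 : ℝ) ^ ((s : ℝ) * s) :=
      Real.rpow_le_rpow_of_exponent_le (by norm_num) hlog
    have h3 : (2 : ℝ) ^ ((s : ℝ) * s) = ((2 ^ (s * s) : ℕ) : ℝ) := by
      rw [show ((s : ℝ) * s) = ((s * s : ℕ) : ℝ) by push_cast; ring, Real.rpow_natCast]
      push_cast
      ring
    have : (n : ℝ) ≤ ((2 ^ (s * s) : ℕ) : ℝ) := by rw [← h3]; linarith [h1 ▸ h2]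
    exact_mod_cast this
  have hexp : s * s < 3 * (ℓ * m) := by
    have h3m : s ≤ 3 * m := by omega
    have : s * s + 3 * s ≤ 3 * (ℓ * m) := by
      have : (s + 3) * s ≤ (s + 3) * (3 * m) := Nat.mul_le_mul_left _ h3m
      calc s * s + 3 * s = (s + 3) * s := by ring
        _ ≤ (s + 3) * (3 * m) := this
        _ = ℓ * (3 * m) := by rw [hℓ]
        _ = 3 * (ℓ * m) := by ring
    omega
  have hcontra : n < (8 ^ ℓ) ^ m := by
    have h8 : (8 : ℕ) = 2 ^ 3 := by norm_num
    calc n ≤ 2 ^ (s * s) := hns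
      _ < 2 ^ (3 * (ℓ * m)) := Nat.pow_lt_pow_right (by norm_num) hexp
      _ = (8 ^ ℓ) ^ m := by rw [h8, ← pow_mul, ← pow_mul]
  omega
end

section
/- Let n > 10 and U > 32, let L be an n×n invertible SDDM matrix with integer entries in [-U, U], and set ℓ := ⌈√(log₂ n)⌉ + 3, r_in := 2^{2ℓ+1}, r_out := 2^{ℓ−2}, and α := 6ℓ² · 16^ℓ · ⌈log₂(2n)⌉. Then there exists an (r_in, r_out, α)-cover for L: a finite collection of pairs {(V₁, W₁), …, (V_k, W_k)} of subsets of [n] such that (1) V_i ⊆ W_i ⊆ [n] for all i ∈ [k]; (2) every u ∈ [n] lies in V_i for at least one i ∈ [k]; (3) every u ∈ [n] lies in W_i for at most α indices i ∈ [k]; (4) for every i ∈ [k] and every pair u, v ∈ W_i, the probability distance satisfies D_L(u, v) ≤ r_in; and (5) for every i ∈ [k], every u ∈ V_i, and every v ∈ [n] \ W_i, D_L(u, v) > r_out. -/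
/-!
A minimum principle for the invertible SDDM matrix `L` (a negative minimum of `z` with `L z ≥ 0`
would produce a nonempty vertex set with neither outgoing edges nor surplus, whose indicator lies in
the kernel) gives `L⁻¹ ≥ 0` and `L⁻¹ a w · L⁻¹ w b ≤ L⁻¹ a b · L⁻¹ w w`; integrality adds
`L⁻¹ ≤ n` and `L⁻¹ u u ≥ 1/U`. So the balls of the probability distance are symmetric, obey the
triangle inequality, and contain their centre from radius `3` on.

In such a space every vertex `u` has a scale `ρ = r_out · 8^k`, `k < ⌊ℓ/3⌋`, with
`|B(u, 8ρ)| ≤ 2^{3ℓ} |B(u, ρ)|`, since otherwise the balls would outgrow `n < 2^{3ℓ⌊ℓ/3⌋}`.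
Grouping vertices by `k` and by `⌊log₂ |B(u, ρ)|⌋`, a maximal `2ρ`-separated net of each group gives
the pairs `(B(x, 2ρ), B(x, 2ρ + r_out))`. The `ρ`-balls of those net points of one group whose outer
ball contains a fixed vertex are disjoint and lie in a single `8ρ`-ball, so there are at most
`2^{3ℓ+1}` of them.
-/

open Finset Matrix

/-- The laws of the balls `B u r = {v | d u v ≤ r}` of a symmetric distance obeying the triangle
inequality with `d u u ≤ r₀`. -/
structure IsBallSystem {ι : Type*} (B : ι → ℝ → Finset ι) (r₀ : ℝ) : Prop where
  mono : ∀ u {r s : ℝ}, r ≤ s → B u r ⊆ B u s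
  symm : ∀ {u v r}, v ∈ B u r → u ∈ B v r
  trans : ∀ {u v w r s}, v ∈ B u r → w ∈ B v s → w ∈ B u (r + s)
  mem_self : ∀ u {r}, r₀ ≤ r → u ∈ B u r

theorem Nat.exists_lt_le_mul_of_lt_pow {f : ℕ → ℕ} {K N q : ℕ} (h0 : 0 < f 0)
    (hN : ∀ i, f i ≤ N) (hq : N < K ^ q) : ∃ i < q, f (i + 1) ≤ K * f i := by
  by_contra! hgrow
  have hpow : ∀ i ≤ q, K ^ i ≤ f i := by
    intro i hi
    induction i with
    | zero => simpa [Nat.one_le_iff_ne_zero] using h0.ne'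
    | succ i ih =>
      rw [pow_succ, mul_comm]
      exact (Nat.mul_le_mul_left K (ih (by omega))).trans (hgrow i (by omega)).le
  exact absurd ((hpow q le_rfl).trans (hN q)) (not_le.2 hq)

namespace IsBallSystem

variable {ι : Type*} [DecidableEq ι] {B : ι → ℝ → Finset ι} {r₀ : ℝ}

theorem exists_separated_net (hB : IsBallSystem B r₀) (C : Finset ι) {r : ℝ} (hr : r₀ ≤ r) :
    ∃ S ⊆ C, (∀ x ∈ S, ∀ y ∈ S, x ≠ y → y ∉ B x r) ∧ ∀ c ∈ C, ∃ s ∈ S, c ∈ B s r := by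
  set F := C.powerset.filter fun S => ∀ x ∈ S, ∀ y ∈ S, x ≠ y → y ∉ B x r
  obtain ⟨S, hSF, hmax⟩ := exists_max_image F card ⟨∅, by simp [F]⟩
  simp only [F, mem_filter, mem_powerset] at hSF hmax
  refine ⟨S, hSF.1, hSF.2, fun c hc => ?_⟩
  by_cases hcS : c ∈ S
  · exact ⟨c, hcS, hB.mem_self c hr⟩
  by_contra! hfar
  have hsep : ∀ x ∈ insert c S, ∀ y ∈ insert c S, x ≠ y → y ∉ B x r := by
    simp only [mem_insert]
    rintro x (rfl | hx) y (rfl | hy) hxy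
    · exact absurd rfl hxy
    · exact fun h => hfar y hy (hB.symm h)
    · exact hfar x hx
    · exact hSF.2 x hx y hy hxy
  have := hmax _ ⟨insert_subset hc hSF.1, hsep⟩
  rw [card_insert_of_notMem hcS] at this
  omega

theorem card_filter_mem_le (hB : IsBallSystem B r₀) {S : Finset ι} {ρ R : ℝ} {K b : ℕ}
    (hR : 0 ≤ R) (hRρ : R ≤ ρ) (hρ : r₀ ≤ ρ) (hsep : ∀ x ∈ S, ∀ y ∈ S, x ≠ y → y ∉ B x (2 * ρ))
    (hgrowth : ∀ x ∈ S, #(B x (8 * ρ)) ≤ K * #(B x ρ))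
    (hsize : ∀ x ∈ S, Nat.log 2 #(B x ρ) = b) (v : ι) :
    #{x ∈ S | v ∈ B x (2 * ρ + R)} ≤ 2 * K := by
  set T := {x ∈ S | v ∈ B x (2 * ρ + R)}
  obtain hT | ⟨x₀, hx₀⟩ := T.eq_empty_or_nonempty
  · simp [hT]
  have hTS : ∀ x ∈ T, x ∈ S := fun x hx => (mem_filter.1 hx).1
  have hdisj : (T : Set ι).PairwiseDisjoint fun x => B x ρ := by
    intro x hx y hy hxy
    refine disjoint_left.2 fun z hzx hzy => hsep x (hTS x hx) y (hTS y hy) hxy ?_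
    simpa [two_mul] using hB.trans hzx (hB.symm hzy)
  have hsub : T.biUnion (fun x => B x ρ) ⊆ B x₀ (8 * ρ) := by
    intro z hz
    obtain ⟨x, hx, hzx⟩ := mem_biUnion.1 hz
    have hvx₀ := (mem_filter.1 hx₀).2
    have hxv := hB.symm (mem_filter.1 hx).2
    exact hB.mono x₀ (by linarith) (hB.trans (hB.trans hvx₀ hxv) hzx)
  have hlow : ∀ x ∈ T, 2 ^ b ≤ #(B x ρ) := fun x hx => by
    rw [← hsize x (hTS x hx)]
    exact Nat.pow_log_le_self 2 (card_ne_zero_of_mem (hB.mem_self x hρ))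
  have hx₀ρ : #(B x₀ ρ) < 2 * 2 ^ b := by
    rw [← hsize x₀ (hTS x₀ hx₀), ← pow_succ']
    exact Nat.lt_pow_succ_log_self one_lt_two _
  have hcount : #T * 2 ^ b ≤ 2 * K * 2 ^ b :=
    calc #T * 2 ^ b = ∑ _x ∈ T, 2 ^ b := by rw [sum_const, smul_eq_mul]
      _ ≤ ∑ x ∈ T, #(B x ρ) := sum_le_sum hlow
      _ = #(T.biUnion fun x => B x ρ) := (card_biUnion hdisj).symm
      _ ≤ #(B x₀ (8 * ρ)) := card_le_card hsub
      _ ≤ K * #(B x₀ ρ) := hgrowth x₀ (hTS x₀ hx₀)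
      _ ≤ 2 * K * 2 ^ b := by nlinarith
  exact Nat.le_of_mul_le_mul_right hcount (by positivity)

theorem exists_cover_of_scale [Fintype ι] (hB : IsBallSystem B r₀) {R : ℝ} (hR₀ : r₀ ≤ R)
    (hR : 0 ≤ R) {K : ℕ} (sc : ι → ℕ)
    (hsc : ∀ u, #(B u (8 * (R * 8 ^ sc u))) ≤ K * #(B u (R * 8 ^ sc u))) :
    ∃ V W : ι → Finset ι, (∀ i, V i ⊆ W i) ∧ (∀ u, ∃ i, u ∈ V i) ∧
      (∀ u, #{i | u ∈ W i} ≤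
        2 * K * #(univ.image fun u => (sc u, Nat.log 2 #(B u (R * 8 ^ sc u))))) ∧
      (∀ i, ∀ u ∈ W i, ∀ v ∈ W i, v ∈ B u (8 * (R * 8 ^ sc i))) ∧
      (∀ i, ∀ u ∈ V i, ∀ v, v ∉ W i → v ∉ B u R) := by
  have hρ : ∀ k : ℕ, R ≤ R * 8 ^ k := fun k => le_mul_of_one_le_right hR (one_le_pow₀ (by norm_num))
  set cls : ι → ℕ × ℕ := fun u => (sc u, Nat.log 2 #(B u (R * 8 ^ sc u)))
  choose S hS_sub hS_sep hS_cov using fun c : ℕ × ℕ =>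
    hB.exists_separated_net {u | cls u = c} (r := 2 * (R * 8 ^ c.1)) (by nlinarith [hρ c.1])
  have hS_cls : ∀ c, ∀ x ∈ S c, cls x = c := fun c x hx => (mem_filter.1 (hS_sub c hx)).2
  refine ⟨fun u => {v ∈ B u (2 * (R * 8 ^ sc u)) | u ∈ S (cls u)},
    fun u => {v ∈ B u (2 * (R * 8 ^ sc u) + R) | u ∈ S (cls u)}, ?_, ?_, ?_, ?_, ?_⟩
  · exact fun i => filter_subset_filter _ (hB.mono i (by linarith))
  · intro u
    obtain ⟨x, hx, hux⟩ := hS_cov (cls u) u (by simp)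
    have hxu : cls x = cls u := hS_cls _ x hx
    refine ⟨x, mem_filter.2 ⟨?_, hxu ▸ hx⟩⟩
    rwa [show sc x = sc u from congrArg Prod.fst hxu]
  · refine fun v => card_le_mul_card_image_of_maps_to (fun u _ => mem_image_of_mem cls (mem_univ u))
      _ fun c _ => (card_le_card fun u hu => ?_).trans (card_filter_mem_le (b := c.2) hB hR
        (hρ c.1) (hR₀.trans (hρ c.1)) (hS_sep c) (fun x hx => ?_) (fun x hx => ?_) v)
    · simp only [mem_filter, mem_univ, true_and] at hu ⊢
      obtain ⟨⟨hvu, huS⟩, rfl⟩ := hu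
      exact ⟨huS, hvu⟩
    · rw [← hS_cls c x hx]; exact hsc x
    · rw [← hS_cls c x hx]
  · rintro i u hu v hv
    refine hB.mono u ?_ (hB.trans (hB.symm (mem_filter.1 hu).1) (mem_filter.1 hv).1)
    nlinarith [hρ (sc i)]
  · rintro i u hu v hvW hv
    obtain ⟨hu, hi⟩ := mem_filter.1 hu
    exact hvW (mem_filter.2 ⟨hB.trans hu hv, hi⟩)

theorem exists_cover [Fintype ι] (hB : IsBallSystem B r₀) {R : ℝ} (hR₀ : r₀ ≤ R) (hR : 0 ≤ R)
    {K q : ℕ} (hq : Fintype.card ι < K ^ q) :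
    ∃ V W : ι → Finset ι, (∀ i, V i ⊆ W i) ∧ (∀ u, ∃ i, u ∈ V i) ∧
      (∀ u, #{i | u ∈ W i} ≤ 2 * K * (q * (Nat.log 2 (Fintype.card ι) + 1))) ∧
      (∀ i, ∀ u ∈ W i, ∀ v ∈ W i, v ∈ B u (R * 8 ^ q)) ∧
      (∀ i, ∀ u ∈ V i, ∀ v, v ∉ W i → v ∉ B u R) := by
  have hscale : ∀ u, ∃ k < q, #(B u (8 * (R * 8 ^ k))) ≤ K * #(B u (R * 8 ^ k)) := fun u => by
    simpa [pow_succ, mul_comm, mul_left_comm] using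
      Nat.exists_lt_le_mul_of_lt_pow (f := fun k => #(B u (R * 8 ^ k)))
        (card_pos.2 ⟨u, hB.mem_self u (by simpa using hR₀)⟩) (fun _ => card_le_univ _) hq
  choose sc hsc_lt hsc using hscale
  obtain ⟨V, W, hVW, hcover, hmult, hdiam, hsep⟩ := hB.exists_cover_of_scale hR₀ hR sc hsc
  have hclasses : #(univ.image fun u => (sc u, Nat.log 2 #(B u (R * 8 ^ sc u)))) ≤
      q * (Nat.log 2 (Fintype.card ι) + 1) := by
    rw [← card_range q, ← card_range (Nat.log 2 (Fintype.card ι) + 1), ← card_product]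
    refine card_le_card (image_subset_iff.2 fun u _ => ?_)
    simp only [mem_product, mem_range]
    exact ⟨hsc_lt u, Nat.lt_succ_of_le (Nat.log_mono_right (card_le_univ _))⟩
  refine ⟨V, W, hVW, hcover, fun u => (hmult u).trans (Nat.mul_le_mul_left _ hclasses),
    fun i u hu v hv => hB.mono u ?_ (hdiam i u hu v hv), hsep⟩
  rw [← mul_assoc, mul_comm 8, mul_assoc, ← pow_succ']
  exact mul_le_mul_of_nonneg_left (pow_le_pow_right₀ (by norm_num) (hsc_lt i)) hR

end IsBallSystem

section

variable {ι : Type*} [Fintype ι]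

/-- With `P = L⁻¹` and `β = n U`, `probBall P β u r` is the ball `{v | D_L(u, v) ≤ r}` of the
probability distance. -/
noncomputable def probBall (P : Matrix ι ι ℝ) (β : ℝ) (u : ι) (r : ℝ) : Finset ι :=
  {v | β ^ (2 - r) ≤ P u v}

@[simp]
theorem mem_probBall {P : Matrix ι ι ℝ} {β : ℝ} {u v : ι} {r : ℝ} :
    v ∈ probBall P β u r ↔ β ^ (2 - r) ≤ P u v := by
  simp [probBall]

/-- The `+ 2` in the probability distance is what makes `P u v * P v w ≤ β ^ 2 * P u w` a
triangle inequality. -/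
theorem isBallSystem_probBall {P : Matrix ι ι ℝ} {β : ℝ} (hβ : 1 ≤ β) (hP : P.IsSymm)
    (hmul : ∀ u v w, P u v * P v w ≤ β ^ 2 * P u w) (hdiag : ∀ u, β⁻¹ ≤ P u u) :
    IsBallSystem (probBall P β) 3 where
  mono u r s hrs v hv := by
    rw [mem_probBall] at hv ⊢
    exact (Real.rpow_le_rpow_of_exponent_le hβ (by linarith)).trans hv
  symm {u v r} hv := by
    rw [mem_probBall] at hv ⊢
    rwa [hP.apply u v]
  trans {u v w r s} hv hw := by
    rw [mem_probBall] at hv hw ⊢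
    have hβ0 : 0 < β := by linarith
    have hsplit : β ^ (2 - r) * β ^ (2 - s) = β ^ 2 * β ^ (2 - (r + s)) := by
      rw [← Real.rpow_natCast, ← Real.rpow_add hβ0, ← Real.rpow_add hβ0]
      congr 1
      push_cast
      ring
    have := mul_le_mul hv hw (Real.rpow_nonneg hβ0.le _) ((Real.rpow_nonneg hβ0.le _).trans hv)
    nlinarith [hmul u v w, pow_pos hβ0 2]
  mem_self u r hr := by
    rw [mem_probBall]
    refine le_trans ?_ (hdiag u)
    rw [← Real.rpow_neg_one]
    exact Real.rpow_le_rpow_of_exponent_le hβ (by linarith)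

namespace SDDM

variable {M : Matrix ι ι ℝ}

theorem mulVec_apply_eq_rowSum_mul_sub (M : Matrix ι ι ℝ) (x : ι → ℝ) (i : ι) :
    (M *ᵥ x) i = (∑ j, M i j) * x i - ∑ j, M i j * (x i - x j) := by
  simp only [mulVec, dotProduct, mul_sub, sum_sub_distrib, sum_mul]
  ring

variable [DecidableEq ι]

theorem sum_mulVec_eq_rowSum_mul_sub_cut (hM : M.IsSymm) (x : ι → ℝ) (A : Finset ι) :
    ∑ i ∈ A, (M *ᵥ x) i =
      ∑ i ∈ A, (∑ j, M i j) * x i - ∑ i ∈ A, ∑ j ∈ Aᶜ, M i j * (x i - x j) := by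
  have hinner : ∑ i ∈ A, ∑ j ∈ A, M i j * (x i - x j) = 0 := by
    have hswap := sum_comm (s := A) (t := A) (f := fun i j => M i j * (x i - x j))
    have hneg : ∑ j ∈ A, ∑ i ∈ A, M i j * (x i - x j) =
        -∑ j ∈ A, ∑ i ∈ A, M j i * (x j - x i) := by
      simp only [← sum_neg_distrib]
      refine sum_congr rfl fun j _ => sum_congr rfl fun i _ => ?_
      rw [hM.apply i j]
      ring
    linarith
  simp only [mulVec_apply_eq_rowSum_mul_sub, sum_sub_distrib, ← sum_add_sum_compl A]
  rw [sum_add_distrib, hinner, zero_add]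

theorem exists_cut_ne_zero_or_rowSum_ne_zero (hM : M.IsSymm) (hunit : IsUnit M)
    {T : Finset ι} (hT : T.Nonempty) :
    ∃ i ∈ T, (∃ j ∉ T, M i j ≠ 0) ∨ ∑ j, M i j ≠ 0 := by
  by_contra! hclosed
  set y : ι → ℝ := fun i => if i ∈ T then 1 else 0
  have hy : M *ᵥ y = 0 := by
    funext i
    have hsum : (M *ᵥ y) i = ∑ j ∈ T, M i j := by
      simp [y, mulVec, dotProduct]
    rw [hsum, Pi.zero_apply]
    by_cases hi : i ∈ T
    · rw [← (hclosed i hi).2]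
      exact sum_subset (subset_univ T) fun j _ hj => (hclosed i hi).1 j hj
    · exact sum_eq_zero fun j hj => by rw [hM.apply j i]; exact (hclosed j hj).1 i hi
  obtain ⟨t, ht⟩ := hT
  have hy0 : y ≠ 0 := fun h => by simpa [y, ht] using congrFun h t
  exact hy0 (mulVec_injective_iff_isUnit.2 hunit (by rw [hy, mulVec_zero]))

theorem nonneg_of_mulVec_nonneg (hM : M.IsSymm) (hunit : IsUnit M)
    (hoff : ∀ i j, i ≠ j → M i j ≤ 0) (hrow : ∀ i, 0 ≤ ∑ j, M i j)
    {S : Finset ι} {z : ι → ℝ} (hS : ∀ i ∈ S, 0 ≤ z i) (hz : ∀ i ∉ S, 0 ≤ (M *ᵥ z) i)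
    (i : ι) : 0 ≤ z i := by
  by_contra! hneg
  obtain ⟨k, -, hk⟩ := exists_min_image univ z ⟨i, mem_univ i⟩
  have hmin : z k < 0 := (hk i (mem_univ i)).trans_lt hneg
  obtain ⟨j, hjT, hj⟩ := exists_cut_ne_zero_or_rowSum_ne_zero hM hunit
    (T := {l | z l = z k}) ⟨k, by simp⟩
  have hzj : z j = z k := (mem_filter.1 hjT).2
  have hjS : j ∉ S := fun h => (hS j h).not_gt (hzj ▸ hmin)
  have hterm : ∀ l, 0 ≤ M j l * (z j - z l) := fun l => by
    rcases eq_or_ne l j with rfl | hl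
    · simp
    · exact mul_nonneg_of_nonpos_of_nonpos (hoff j l hl.symm) (by linarith [hk l (mem_univ l)])
  have hsurplus : (∑ l, M j l) * z j ≤ 0 := mul_nonpos_of_nonneg_of_nonpos (hrow j) (by linarith)
  have hMz := hz j hjS
  rw [mulVec_apply_eq_rowSum_mul_sub] at hMz
  rcases hj with ⟨l, hlT, hl⟩ | hs
  · have hzl : z k < z l := lt_of_le_of_ne (hk l (mem_univ l)) fun h => hlT (by simp [h])
    have hpos : 0 < M j l * (z j - z l) :=
      mul_pos_of_neg_of_neg (lt_of_le_of_ne (hoff j l fun h => hlT (h ▸ hjT)) hl) (by linarith)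
    linarith [single_le_sum (fun l _ => hterm l) (mem_univ l)]
  · have : (∑ l, M j l) * z j < 0 :=
      mul_neg_of_pos_of_neg (lt_of_le_of_ne (hrow j) hs.symm) (by linarith)
    linarith [sum_nonneg fun l (_ : l ∈ univ) => hterm l]

theorem rowSum_nonneg_of_diagDominant (hoff : ∀ i j, i ≠ j → M i j ≤ 0)
    (hdd : ∀ i, ∑ j ∈ univ.filter (fun j => j ≠ i), |M i j| ≤ M i i) (i : ι) :
    0 ≤ ∑ j, M i j := by
  have habs : ∑ j ∈ univ.erase i, |M i j| = -∑ j ∈ univ.erase i, M i j := by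
    rw [← sum_neg_distrib]
    exact sum_congr rfl fun j hj => abs_of_nonpos (hoff i j (ne_of_mem_erase hj).symm)
  have := hdd i
  rw [filter_ne', habs] at this
  linarith [add_sum_erase univ (M i) (mem_univ i)]

theorem mulVec_inv_col (hunit : IsUnit M) (b i : ι) :
    (M *ᵥ fun k => M⁻¹ k b) i = if i = b then 1 else 0 := by
  change (M * M⁻¹) i b = _
  rw [mul_nonsing_inv M ((isUnit_iff_isUnit_det M).1 hunit), one_apply]

theorem inv_apply_nonneg (hM : M.IsSymm) (hunit : IsUnit M) (hoff : ∀ i j, i ≠ j → M i j ≤ 0)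
    (hrow : ∀ i, 0 ≤ ∑ j, M i j) (a b : ι) : 0 ≤ M⁻¹ a b :=
  nonneg_of_mulVec_nonneg hM hunit hoff hrow (S := ∅) (by simp)
    (fun i _ => by rw [mulVec_inv_col hunit]; split_ifs <;> norm_num) a

theorem inv_apply_mul_inv_apply_le (hM : M.IsSymm) (hunit : IsUnit M)
    (hoff : ∀ i j, i ≠ j → M i j ≤ 0) (hrow : ∀ i, 0 ≤ ∑ j, M i j) (a w b : ι) :
    M⁻¹ a w * M⁻¹ w b ≤ M⁻¹ a b * M⁻¹ w w := by
  set z : ι → ℝ := M⁻¹ w w • (fun i => M⁻¹ i b) - M⁻¹ w b • (fun i => M⁻¹ i w)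
  have hMz : ∀ i, (M *ᵥ z) i = M⁻¹ w w * (if i = b then 1 else 0) -
      M⁻¹ w b * (if i = w then 1 else 0) := fun i => by
    simp only [z, mulVec_sub, mulVec_smul, Pi.sub_apply, Pi.smul_apply, smul_eq_mul,
      mulVec_inv_col hunit]
  have hz := nonneg_of_mulVec_nonneg hM hunit hoff hrow (S := {w}) (z := z)
    (by simp [z, mul_comm]) (fun i hi => by
      rw [hMz, if_neg (show i ≠ w by simpa using hi), mul_zero, sub_zero]
      exact mul_nonneg (inv_apply_nonneg hM hunit hoff hrow w w) (by split_ifs <;> norm_num)) a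
  simp only [z, Pi.sub_apply, Pi.smul_apply, smul_eq_mul] at hz
  linarith

theorem one_le_mul_inv_apply_self (hM : M.IsSymm) (hunit : IsUnit M)
    (hoff : ∀ i j, i ≠ j → M i j ≤ 0) (hrow : ∀ i, 0 ≤ ∑ j, M i j) (b : ι) :
    1 ≤ M b b * M⁻¹ b b := by
  have hrowb : ∑ j, M b j * M⁻¹ j b = 1 := by
    simpa [mulVec, dotProduct] using mulVec_inv_col hunit b b
  have hoffb : ∑ j ∈ univ.erase b, M b j * M⁻¹ j b ≤ 0 :=
    sum_nonpos fun j hj => mul_nonpos_of_nonpos_of_nonneg (hoff b j (ne_of_mem_erase hj).symm)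
      (inv_apply_nonneg hM hunit hoff hrow j b)
  linarith [add_sum_erase univ (fun j => M b j * M⁻¹ j b) (mem_univ b)]

theorem one_le_of_intCast_pos {x : ℝ} (hx : ∃ z : ℤ, x = z) (hpos : 0 < x) : 1 ≤ x := by
  obtain ⟨z, rfl⟩ := hx
  exact Int.cast_one_le_of_pos (Int.cast_pos.1 hpos)

theorem sum_rowSum_mul_inv_sub_cut_le_one (hM : M.IsSymm) (hunit : IsUnit M) (A : Finset ι)
    (b : ι) : ∑ k ∈ A, (∑ j, M k j) * M⁻¹ k b -
      ∑ k ∈ A, ∑ l ∈ Aᶜ, M k l * (M⁻¹ k b - M⁻¹ l b) ≤ 1 := by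
  rw [← sum_mulVec_eq_rowSum_mul_sub_cut hM (fun k => M⁻¹ k b), ← sum_ite_eq_of_mem' univ b
    (fun _ => (1 : ℝ)) (mem_univ b)]
  simp only [mulVec_inv_col hunit]
  exact sum_le_sum_of_subset_of_nonneg (subset_univ A) fun _ _ _ => by split_ifs <;> norm_num

/-- The unit flow out of the superlevel set `{k | x i ≤ x k}` of the column `x = M⁻¹ · b` must
cross an edge of integer weight `≥ 1`, so that edge spans a gap of at most `1`. -/
theorem exists_inv_apply_lt_le_add_one (hM : M.IsSymm) (hunit : IsUnit M)
    (hoff : ∀ i j, i ≠ j → M i j ≤ 0) (hrow : ∀ i, 0 ≤ ∑ j, M i j)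
    (hint : ∀ i j, ∃ z : ℤ, M i j = z) {i b : ι} (hi : 1 < M⁻¹ i b) :
    ∃ j, M⁻¹ j b < M⁻¹ i b ∧ M⁻¹ i b ≤ M⁻¹ j b + 1 := by
  set x : ι → ℝ := fun k => M⁻¹ k b
  set A : Finset ι := {k | x i ≤ x k}
  have hA : ∀ k, k ∈ A ↔ x i ≤ x k := by simp [A]
  have hflow := sum_rowSum_mul_inv_sub_cut_le_one hM hunit A b
  have hsurplus : ∀ k ∈ A, 0 ≤ (∑ j, M k j) * x k := fun k _ =>
    mul_nonneg (hrow k) (inv_apply_nonneg hM hunit hoff hrow k b)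
  have hcut : ∀ k ∈ A, ∀ l ∈ Aᶜ, M k l * (x k - x l) ≤ 0 := fun k hk l hl => by
    have hlk : x l < x k := ((not_le.1 ((hA l).not.1 (mem_compl.1 hl))).trans_le ((hA k).1 hk))
    exact mul_nonpos_of_nonpos_of_nonneg (hoff k l fun h => mem_compl.1 hl (h ▸ hk)) (by linarith)
  have hcut_sum : ∀ k ∈ A, ∑ l ∈ Aᶜ, M k l * (x k - x l) ≤ 0 := fun k hk => sum_nonpos (hcut k hk)
  obtain ⟨k, hk, ⟨l, hl, hkl⟩ | hs⟩ :=
    exists_cut_ne_zero_or_rowSum_ne_zero hM hunit ⟨i, (hA i).2 le_rfl⟩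
  · have hweight : 1 ≤ -M k l := one_le_of_intCast_pos
      (by obtain ⟨z, hz⟩ := hint k l; exact ⟨-z, by rw [hz]; push_cast; ring⟩)
      (neg_pos.2 (lt_of_le_of_ne (hoff k l fun h => hl (h ▸ hk)) hkl))
    have hkl_le : -(M k l * (x k - x l)) ≤ 1 := by
      have h1 := single_le_sum (f := fun l => -(M k l * (x k - x l)))
        (fun l hl => neg_nonneg.2 (hcut k hk l hl)) (mem_compl.2 hl)
      have h2 := single_le_sum (f := fun k => -∑ l ∈ Aᶜ, M k l * (x k - x l))
        (fun k hk => neg_nonneg.2 (hcut_sum k hk)) hk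
      simp only [sum_neg_distrib] at h1 h2
      linarith [sum_nonneg hsurplus]
    refine ⟨l, not_le.1 ((hA l).not.1 hl), ?_⟩
    nlinarith [(hA k).1 hk]
  · have hs1 : 1 ≤ ∑ j, M k j := one_le_of_intCast_pos
      (by choose z hz using hint; exact ⟨∑ j, z k j, by simp [hz]⟩)
      (lt_of_le_of_ne (hrow k) (Ne.symm hs))
    nlinarith [single_le_sum hsurplus hk, sum_nonpos hcut_sum, (hA k).1 hk]

theorem inv_apply_le_card (hM : M.IsSymm) (hunit : IsUnit M)
    (hoff : ∀ i j, i ≠ j → M i j ≤ 0) (hrow : ∀ i, 0 ≤ ∑ j, M i j)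
    (hint : ∀ i j, ∃ z : ℤ, M i j = z) (a b : ι) : M⁻¹ a b ≤ Fintype.card ι := by
  set x : ι → ℝ := fun k => M⁻¹ k b
  suffices h : ∀ m i, #{j | x j < x i} = m → x i ≤ m + 1 by
    have hlt : #{j | x j < x a} < Fintype.card ι := card_lt_univ_of_notMem (x := a) (by simp)
    have := h _ a rfl
    change x a ≤ _
    have : ((#{j | x j < x a} : ℕ) : ℝ) + 1 ≤ Fintype.card ι := by exact_mod_cast hlt
    linarith
  intro m
  induction m using Nat.strong_induction_on with
  | _ m ih =>
    intro i hm
    by_cases h1 : x i ≤ 1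
    · linarith [(m.cast_nonneg : (0 : ℝ) ≤ m)]
    obtain ⟨j, hji, hij⟩ := exists_inv_apply_lt_le_add_one hM hunit hoff hrow hint (not_le.1 h1)
    have hsub : (univ.filter fun k => x k < x j) ⊂ univ.filter fun k => x k < x i := by
      refine ssubset_iff_of_subset (fun k hk => ?_) |>.2 ⟨j, by simpa using hji, by simp⟩
      simp only [mem_filter, mem_univ, true_and] at hk ⊢
      exact hk.trans hji
    have hcard := hm ▸ card_lt_card hsub
    have := ih _ hcard j rfl
    have : ((#{k | x k < x j} : ℕ) : ℝ) + 1 ≤ m := by exact_mod_cast hcard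
    linarith

theorem isBallSystem_probBall_inv [Nonempty ι] (hM : M.IsSymm) (hunit : IsUnit M)
    (hoff : ∀ i j, i ≠ j → M i j ≤ 0) (hrow : ∀ i, 0 ≤ ∑ j, M i j)
    (hint : ∀ i j, ∃ z : ℤ, M i j = z) {U : ℝ} (hU : 1 ≤ U) (hdiag : ∀ i, M i i ≤ U) :
    IsBallSystem (probBall M⁻¹ (Fintype.card ι * U)) 3 := by
  have hcard : (1 : ℝ) ≤ Fintype.card ι := by exact_mod_cast Fintype.card_pos
  have hβ : 1 ≤ (Fintype.card ι : ℝ) * U := one_le_mul_of_one_le_of_one_le hcard hU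
  have hnonneg := inv_apply_nonneg hM hunit hoff hrow
  refine isBallSystem_probBall hβ hM.inv (fun u v w => ?_) (fun u => ?_)
  · have hvv : M⁻¹ v v ≤ ((Fintype.card ι : ℝ) * U) ^ 2 := by
      nlinarith [inv_apply_le_card hM hunit hoff hrow hint v v]
    calc M⁻¹ u v * M⁻¹ v w ≤ M⁻¹ u w * M⁻¹ v v :=
          inv_apply_mul_inv_apply_le hM hunit hoff hrow u v w
      _ ≤ _ := by nlinarith [hnonneg u w]
  · rw [inv_le_iff_one_le_mul₀' (by linarith), mul_assoc]
    calc 1 ≤ M u u * M⁻¹ u u := one_le_mul_inv_apply_self hM hunit hoff hrow u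
      _ ≤ U * M⁻¹ u u := mul_le_mul_of_nonneg_right (hdiag u) (hnonneg u u)
      _ ≤ _ := le_mul_of_one_le_left (mul_nonneg (by linarith) (hnonneg u u)) hcard

end SDDM

end

theorem le_two_pow_ceil_sqrt_logb_sq (n : ℕ) : n ≤ 2 ^ (⌈√(Real.logb 2 n)⌉₊ ^ 2) := by
  rcases Nat.eq_zero_or_pos n with rfl | hn
  · exact Nat.zero_le _
  set a := ⌈√(Real.logb 2 n)⌉₊
  have hlog : Real.logb 2 n ≤ (a : ℝ) ^ 2 := by
    rw [← Real.sq_sqrt (Real.logb_nonneg one_lt_two (by exact_mod_cast hn))]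
    exact pow_le_pow_left₀ (Real.sqrt_nonneg _) (Nat.le_ceil _) 2
  have : (n : ℝ) ≤ 2 ^ (a ^ 2) := by
    rw [← Real.rpow_logb two_pos (by norm_num) (by exact_mod_cast hn : (0 : ℝ) < n),
      ← Real.rpow_natCast]
    exact Real.rpow_le_rpow_of_exponent_le one_le_two (by exact_mod_cast hlog)
  exact_mod_cast this

theorem one_le_ceil_sqrt_logb {n : ℕ} (hn : 2 ≤ n) : 1 ≤ ⌈√(Real.logb 2 n)⌉₊ :=
  Nat.ceil_pos.2 (Real.sqrt_pos.2 (Real.logb_pos one_lt_two (by exact_mod_cast hn)))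

theorem log_add_one_le_ceil_logb_two_mul {n : ℕ} (hn : n ≠ 0) :
    Nat.log 2 n + 1 ≤ ⌈Real.logb 2 (2 * (n : ℝ))⌉₊ := by
  rw [Real.logb_mul two_ne_zero (by exact_mod_cast hn), Real.logb_self_eq_one one_lt_two]
  refine Nat.cast_le.1 (le_trans ?_ (Nat.le_ceil _))
  have := Real.natLog_le_logb n 2
  push_cast at this ⊢
  linarith

theorem lt_two_pow_pow_div_three_of_le_two_pow_sq {n a ℓ : ℕ} (hn : n ≤ 2 ^ (a ^ 2))
    (hℓ : ℓ = a + 3) : n < (2 ^ (3 * ℓ)) ^ (ℓ / 3) := by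
  have hexp : a ^ 2 < 3 * ℓ * (ℓ / 3) :=
    calc a ^ 2 < ℓ * (a + 1) := by rw [hℓ]; nlinarith
      _ ≤ ℓ * (3 * (ℓ / 3)) := Nat.mul_le_mul_left _ (by omega)
      _ = 3 * ℓ * (ℓ / 3) := by ring
  rw [← pow_mul]
  exact hn.trans_lt (Nat.pow_lt_pow_right one_lt_two hexp)

theorem two_pow_sub_two_mul_eight_pow_div_three_le (ℓ : ℕ) :
    (2 : ℝ) ^ (ℓ - 2) * 8 ^ (ℓ / 3) ≤ 2 ^ (2 * ℓ + 1) := by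
  rw [show (8 : ℝ) = 2 ^ 3 by norm_num, ← pow_mul, ← pow_add]
  exact pow_le_pow_right₀ one_le_two (by omega)

theorem two_mul_two_pow_mul_div_three_le (ℓ : ℕ) :
    2 * 2 ^ (3 * ℓ) * (ℓ / 3) ≤ 6 * ℓ ^ 2 * 16 ^ ℓ := by
  rcases Nat.eq_zero_or_pos ℓ with rfl | hℓ
  · simp
  have h16 : 2 * 2 ^ (3 * ℓ) ≤ 16 ^ ℓ := by
    rw [show 16 = 2 ^ 4 by norm_num, ← pow_mul, ← pow_succ']
    exact Nat.pow_le_pow_right two_pos (by omega)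
  have hℓ3 : ℓ / 3 ≤ 6 * ℓ ^ 2 := (Nat.div_le_self ℓ 3).trans (by nlinarith)
  calc 2 * 2 ^ (3 * ℓ) * (ℓ / 3) ≤ 16 ^ ℓ * (6 * ℓ ^ 2) := Nat.mul_le_mul h16 hℓ3
    _ = 6 * ℓ ^ 2 * 16 ^ ℓ := by ring

theorem low_diameter_cover_exists_general {n : ℕ} (hn : 10 < n) (U : ℕ) (hU : 32 < U)
    (L : Matrix (Fin n) (Fin n) ℝ)
    (hsymm : L.IsSymm)
    (hoff : ∀ i j, i ≠ j → L i j ≤ 0)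
    (hdd : ∀ i, ∑ j ∈ Finset.univ.filter (fun j => j ≠ i), |L i j| ≤ L i i)
    (hint : ∀ i j, ∃ z : ℤ, L i j = (z : ℝ))
    (hbd : ∀ i j, |L i j| ≤ (U : ℝ))
    (hinv : IsUnit L)
    (ℓ : ℕ) (hℓ : ℓ = ⌈Real.sqrt (Real.logb 2 n)⌉₊ + 3)
    (rin rout : ℝ) (hrin : rin = 2 ^ (2 * ℓ + 1)) (hrout : rout = 2 ^ (ℓ - 2))
    (α : ℕ) (hα : α = 6 * ℓ ^ 2 * 16 ^ ℓ * ⌈Real.logb 2 (2 * (n : ℝ))⌉₊) :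
    ∃ (k : ℕ) (V W : Fin k → Finset (Fin n)),
      (∀ i, V i ⊆ W i) ∧
      (∀ u : Fin n, ∃ i, u ∈ V i) ∧
      (∀ u : Fin n, (Finset.univ.filter (fun i => u ∈ W i)).card ≤ α) ∧
      (∀ i, ∀ u ∈ W i, ∀ v ∈ W i,
        ((n : ℝ) * U) ^ ((2 : ℝ) - rin) ≤ L⁻¹ u v) ∧
      (∀ i, ∀ u ∈ V i, ∀ v : Fin n, v ∉ W i →
        L⁻¹ u v < ((n : ℝ) * U) ^ ((2 : ℝ) - rout)) := by
  have : NeZero n := ⟨by omega⟩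
  have hB := SDDM.isBallSystem_probBall_inv hsymm hinv hoff
    (SDDM.rowSum_nonneg_of_diagDominant hoff hdd) hint (U := U)
    (by exact_mod_cast (by omega : 1 ≤ U)) (fun i => (le_abs_self _).trans (hbd i i))
  rw [Fintype.card_fin] at hB
  have hℓ4 : 4 ≤ ℓ := hℓ ▸ Nat.add_le_add_right (one_le_ceil_sqrt_logb (by omega)) 3
  have hR : (3 : ℝ) ≤ rout :=
    calc (3 : ℝ) ≤ 2 ^ 2 := by norm_num
      _ ≤ rout := hrout ▸ pow_le_pow_right₀ one_le_two (by omega)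
  obtain ⟨V, W, hVW, hcover, hmult, hdiam, hsep⟩ := hB.exists_cover hR (by linarith)
    (by rw [Fintype.card_fin]
        exact lt_two_pow_pow_div_three_of_le_two_pow_sq (le_two_pow_ceil_sqrt_logb_sq n) hℓ)
  have hmult_le : 2 * 2 ^ (3 * ℓ) * (ℓ / 3 * (Nat.log 2 (Fintype.card (Fin n)) + 1)) ≤ α := by
    rw [Fintype.card_fin, hα, ← mul_assoc]
    exact Nat.mul_le_mul (two_mul_two_pow_mul_div_three_le ℓ)
      (log_add_one_le_ceil_logb_two_mul (by omega))
  have hdiam_le : rout * 8 ^ (ℓ / 3) ≤ rin :=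
    hrout ▸ hrin ▸ two_pow_sub_two_mul_eight_pow_div_three_le ℓ
  refine ⟨n, V, W, hVW, hcover, fun u => (hmult u).trans hmult_le,
    fun i u hu v hv => mem_probBall.1 (hB.mono u hdiam_le (hdiam i u hu v hv)),
    fun i u hu v hv => not_le.1 fun h => hsep i u hu v hv (mem_probBall.2 h)⟩

/-- existence of a low-diameter cover.  Let `n > 10`, `U > 32`, and let
`L` be an `n × n` invertible SDDM matrix with integer entries in `[-U, U]`.  With
`ℓ := ⌈√(log₂ n)⌉ + 3`, `r_in := 2^{2ℓ+1}`, `r_out := 2^{ℓ-2}`, and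
`α := 6ℓ² · 16^ℓ · ⌈log₂(2n)⌉`, there exists an `(r_in, r_out, α)`-cover for `L`: a finite
collection `{(Vᵢ, Wᵢ)}_{i ∈ [k]}` of pairs of subsets of `[n]` such that
(1) `Vᵢ ⊆ Wᵢ`; (2) every vertex lies in some inner ball `Vᵢ`; (3) every vertex lies in at
most `α` outer balls `Wᵢ`; (4) any `u, v` in one `Wᵢ` satisfy `D_L(u, v) ≤ r_in`, i.e.
`(L⁻¹)ᵤᵥ ≥ (nU)^{2 - r_in}`; and (5) any `u ∈ Vᵢ` and `v ∉ Wᵢ` satisfy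
`D_L(u, v) > r_out`, i.e. `(L⁻¹)ᵤᵥ < (nU)^{2 - r_out}`. -/
theorem low_diameter_cover_exists {n : ℕ} (hn : 10 < n) (U : ℕ) (hU : 32 < U)
    (L : Matrix (Fin n) (Fin n) ℝ)
    (hsymm : L.IsSymm)
    (hoff : ∀ i j, i ≠ j → L i j ≤ 0)
    (hdiag : ∀ i, 0 < L i i)
    (hdd : ∀ i, ∑ j ∈ Finset.univ.filter (fun j => j ≠ i), |L i j| ≤ L i i)
    (hint : ∀ i j, ∃ z : ℤ, L i j = (z : ℝ))
    (hbd : ∀ i j, |L i j| ≤ (U : ℝ))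
    (hinv : IsUnit L)
    (ℓ : ℕ) (hℓ : ℓ = ⌈Real.sqrt (Real.logb 2 n)⌉₊ + 3)
    (rin rout : ℝ) (hrin : rin = 2 ^ (2 * ℓ + 1)) (hrout : rout = 2 ^ (ℓ - 2))
    (α : ℕ) (hα : α = 6 * ℓ ^ 2 * 16 ^ ℓ * ⌈Real.logb 2 (2 * (n : ℝ))⌉₊) :
    ∃ (k : ℕ) (V W : Fin k → Finset (Fin n)),
      (∀ i, V i ⊆ W i) ∧
      (∀ u : Fin n, ∃ i, u ∈ V i) ∧
      (∀ u : Fin n, (Finset.univ.filter (fun i => u ∈ W i)).card ≤ α) ∧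
      (∀ i, ∀ u ∈ W i, ∀ v ∈ W i,
        ((n : ℝ) * U) ^ ((2 : ℝ) - rin) ≤ L⁻¹ u v) ∧
      (∀ i, ∀ u ∈ V i, ∀ v : Fin n, v ∉ W i →
        L⁻¹ u v < ((n : ℝ) * U) ^ ((2 : ℝ) - rout)) :=
  low_diameter_cover_exists_general hn U hU L hsymm hoff hdd hint hbd hinv ℓ hℓ rin rout hrin hrout
    α hα
end
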